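/- arXiv:1310.6013 — 9 statements merged into one kernel-verified Lean document; each statement's English description precedes it below -/
import Mathlib

section
/- Let G and H be graphs with V(G)=V(H) and E(G)∩E(H)=∅. Let |V(G)|=n, let r be the minimum degree of G, and let s be the maximum degree of H. If 2r − 8s² − s − 1 > n, then G contains a Hamilton cycle such that whenever (a,b) and (c,d) are both edges of the cycle, the pairs (b,c) and (d,a) are not both edges of H. -/
/-!
Encode a candidate cycle as a bijection `g : Fin n ≃ V` read cyclically, with edges
`s(g k, g (k + 1))`. Reversing the positions `1, …, i` (a 2-opt move) replaces the edges
`{g 0, g 1}`, `{g i, g (i + 1)}` by `{g 0, g i}`, `{g 1, g (i + 1)}` and keeps all the others. By the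
minimum degree condition at least `2δ - n - 1` pivots `i` make both new edges edges of `G`.

An arrangement with the fewest non-edges of `G` has none: rotate one to position `0` and any pivot
removes it. Among arrangements inside `G`, take one with the fewest edges lying in an alternating
pair and rotate such an edge to position `0`. For each vertex `v`, at most `2s²` vertices `u` make
`{v, u}` alternate with some cycle edge, so at most `4s² + s` pivots produce a new edge lying in an
alternating pair (the `s` accounts for the two new edges alternating with each other); any other
pivot lowers the count.
-/

open Finset

namespace Fin

lemma val_add_one_of_add_one_ne_zero : ∀ {n : ℕ} [NeZero n] {k : Fin n}, k + 1 ≠ 0 →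
    (k + 1).val = k.val + 1
  | m + 1, _, k, h => by
    rw [Fin.val_add_one, if_neg]
    rintro rfl
    exact h (Fin.last_add_one m)

lemma one_ne_zero_and_one_le_of_ne_zero {n : ℕ} [NeZero n] {i : Fin n} (hi : i ≠ 0) :
    (1 : Fin n) ≠ 0 ∧ 1 ≤ i := by
  have hi' := Fin.val_ne_zero_iff.mpr hi
  have hn : 1 < n := by have := i.isLt; omega
  have h1 : (1 : Fin n).val = 1 := by rw [Fin.val_one', Nat.mod_eq_of_lt hn]
  rw [← Fin.val_ne_zero_iff, Fin.le_def, h1]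
  omega

end Fin

variable {n : ℕ} [NeZero n]

section SegmentReversal

def segmentReversal (i m : Fin n) : Fin n := if m ≠ 0 ∧ m ≤ i then i + 1 - m else m

variable {i m : Fin n}

lemma segmentReversal_of_mem (h : m ≠ 0 ∧ m ≤ i) : segmentReversal i m = i + 1 - m := if_pos h

lemma segmentReversal_of_not_mem (h : ¬(m ≠ 0 ∧ m ≤ i)) : segmentReversal i m = m := if_neg h

lemma add_one_sub_ne_zero_and_le (hi : i + 1 ≠ 0) (h : m ≠ 0 ∧ m ≤ i) :
    i + 1 - m ≠ 0 ∧ i + 1 - m ≤ i := by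
  obtain ⟨hm0, hmi⟩ := h
  have hi1 := Fin.val_add_one_of_add_one_ne_zero hi
  rw [← Fin.val_ne_zero_iff] at hm0 ⊢
  rw [Fin.le_def] at hmi ⊢
  rw [Fin.sub_val_of_le (by rw [Fin.le_def]; omega), hi1]
  omega

lemma segmentReversal_involutive (hi : i + 1 ≠ 0) : Function.Involutive (segmentReversal i) := by
  intro m
  by_cases hm : m ≠ 0 ∧ m ≤ i
  · rw [segmentReversal_of_mem hm, segmentReversal_of_mem (add_one_sub_ne_zero_and_le hi hm),
      sub_sub_cancel]
  · rw [segmentReversal_of_not_mem hm, segmentReversal_of_not_mem hm]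

end SegmentReversal

section Arrangement

variable {V : Type*}

def twoOpt (g : Fin n ≃ V) {i : Fin n} (hi : i + 1 ≠ 0) : Fin n ≃ V :=
  (segmentReversal_involutive hi).toPerm.trans g

lemma twoOpt_apply (g : Fin n ≃ V) {i : Fin n} (hi : i + 1 ≠ 0) (k : Fin n) :
    twoOpt g hi k = g (segmentReversal i k) := rfl

lemma mk_ne_mk_zero_one (hn : 3 ≤ n) (g : Fin n ≃ V) {j : Fin n} (hj : j ≠ 0) :
    s(g j, g (j + 1)) ≠ s(g 0, g 1) := by
  have h2 : (1 : Fin n) + 1 ≠ 0 := by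
    have h1 : (1 : Fin n).val = 1 := by rw [Fin.val_one', Nat.mod_eq_of_lt (by omega)]
    rw [Ne, Fin.ext_iff, Fin.val_add, h1, Fin.val_zero, Nat.mod_eq_of_lt (by omega)]
    omega
  simp only [ne_eq, Sym2.eq_iff, g.injective.eq_iff, not_or, not_and]
  exact ⟨fun h => absurd h hj, fun h => by rw [h]; exact h2⟩

variable [DecidableEq V]

def arrangementEdges (g : Fin n ≃ V) : Finset (Sym2 V) := univ.image fun k => s(g k, g (k + 1))

lemma mk_mem_arrangementEdges (g : Fin n ≃ V) (k : Fin n) :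
    s(g k, g (k + 1)) ∈ arrangementEdges g :=
  mem_image_of_mem _ (mem_univ k)

lemma mem_pair_of_mk_mem_arrangementEdges {g : Fin n ≃ V} {c d : V}
    (h : s(c, d) ∈ arrangementEdges g) : d ∈ ({g (g.symm c + 1), g (g.symm c - 1)} : Finset V) := by
  obtain ⟨k, -, hk⟩ := mem_image.mp h
  rcases Sym2.eq_iff.mp hk with ⟨rfl, rfl⟩ | ⟨rfl, rfl⟩ <;> simp

lemma exists_rotation_eq_mk_zero_one {g : Fin n ≃ V} {e : Sym2 V} (he : e ∈ arrangementEdges g) :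
    ∃ g' : Fin n ≃ V, arrangementEdges g' = arrangementEdges g ∧ e = s(g' 0, g' 1) := by
  obtain ⟨k, -, rfl⟩ := mem_image.mp he
  refine ⟨(Equiv.addRight k).trans g, ?_, by simp [add_comm]⟩
  ext x
  simp only [arrangementEdges, mem_image, mem_univ, true_and, Equiv.trans_apply,
    Equiv.coe_addRight]
  constructor
  · rintro ⟨j, rfl⟩
    exact ⟨j + k, by rw [add_right_comm]⟩
  · rintro ⟨j, rfl⟩
    exact ⟨j - k, by rw [sub_add_cancel, sub_add_eq_add_sub, sub_add_cancel]⟩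

lemma mk_twoOpt_mem (g : Fin n ≃ V) {i : Fin n} (hi0 : i ≠ 0) (hi : i + 1 ≠ 0) (k : Fin n) :
    s(twoOpt g hi k, twoOpt g hi (k + 1)) ∈ insert s(g 0, g i)
      (insert s(g 1, g (i + 1)) ((univ.erase 0).image fun j => s(g j, g (j + 1)))) := by
  simp only [twoOpt_apply, mem_insert, mem_image, mem_erase, mem_univ, and_true]
  have hi1 := Fin.val_add_one_of_add_one_ne_zero hi
  rcases eq_or_ne k 0 with rfl | hk0
  · left
    rw [segmentReversal_of_not_mem (by simp), zero_add,
      segmentReversal_of_mem (Fin.one_ne_zero_and_one_le_of_ne_zero hi0), add_sub_cancel_right]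
  rcases eq_or_ne k i with rfl | hki
  · right; left
    rw [segmentReversal_of_mem ⟨hk0, le_rfl⟩, add_sub_cancel_left, segmentReversal_of_not_mem]
    rw [Fin.le_def, hi1]
    omega
  right; right
  rcases le_or_gt k i with hkle | hlt
  · have hk : k.val < i.val := Fin.lt_def.mp (lt_of_le_of_ne hkle hki)
    have hk1 : (k + 1).val = k.val + 1 := Fin.val_add_one_of_lt' (by omega)
    refine ⟨i - k, sub_ne_zero.mpr hki.symm, ?_⟩
    rw [segmentReversal_of_mem ⟨hk0, hkle⟩, segmentReversal_of_mem, Sym2.eq_swap]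
    · congr 2 <;> abel
    · rw [← Fin.val_ne_zero_iff, Fin.le_def, hk1]
      omega
  · refine ⟨k, hk0, ?_⟩
    rw [segmentReversal_of_not_mem (by simp [hlt]), segmentReversal_of_not_mem]
    rintro ⟨hk1, hk1i⟩
    rw [Fin.le_def, Fin.val_add_one_of_add_one_ne_zero hk1] at hk1i
    rw [Fin.lt_def] at hlt
    omega

lemma arrangementEdges_twoOpt_subset (hn : 3 ≤ n) (g : Fin n ≃ V) {i : Fin n} (hi0 : i ≠ 0)
    (hi : i + 1 ≠ 0) :
    arrangementEdges (twoOpt g hi) ⊆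
      insert s(g 0, g i) (insert s(g 1, g (i + 1)) ((arrangementEdges g).erase s(g 0, g 1))) := by
  intro e he
  obtain ⟨k, -, rfl⟩ := mem_image.mp he
  have := mk_twoOpt_mem g hi0 hi k
  simp only [mem_insert, mem_image, mem_erase, mem_univ, and_true] at this ⊢
  obtain h | h | ⟨j, hj, hk⟩ := this
  · exact Or.inl h
  · exact Or.inr (Or.inl h)
  · rw [← hk]
    exact Or.inr (Or.inr ⟨mk_ne_mk_zero_one hn g hj, mk_mem_arrangementEdges g j⟩)

end Arrangement

lemma card_filter_apply_mem {α V : Type*} [Fintype α] [DecidableEq V] (e : α ≃ V)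
    (X : Finset V) : #{a | e a ∈ X} = #X :=
  card_equiv e (by simp)

section Pivots

variable {V : Type*} {G : SimpleGraph V} [DecidableRel G.Adj]

variable (G) in
def pivots (g : Fin n ≃ V) : Finset (Fin n) :=
  {i | i ≠ 1 ∧ i + 1 ≠ 0 ∧ G.Adj (g 0) (g i) ∧ G.Adj (g 1) (g (i + 1))}

lemma mem_pivots {g : Fin n ≃ V} {i : Fin n} :
    i ∈ pivots G g ↔ i ≠ 1 ∧ i + 1 ≠ 0 ∧ G.Adj (g 0) (g i) ∧ G.Adj (g 1) (g (i + 1)) := by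
  simp [pivots]

variable [Fintype V]

lemma card_filter_adj_apply {α : Type*} [Fintype α] (e : α ≃ V) (v : V) :
    #{a | G.Adj v (e a)} = G.degree v :=
  card_equiv e (by simp)

lemma card_pivots (g : Fin n ≃ V) : 2 * G.minDegree ≤ #(pivots G g) + n + 1 := by
  set A : Finset (Fin n) := {i | G.Adj (g 0) (g i)}
  set B : Finset (Fin n) := {i | G.Adj (g 1) (g (i + 1))}
  have hA : G.minDegree ≤ #A :=
    (card_filter_adj_apply (G := G) g _).symm ▸ G.minDegree_le_degree _
  have hB : G.minDegree ≤ #B :=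
    (card_filter_adj_apply (G := G) ((Equiv.addRight 1).trans g) _).symm ▸
      G.minDegree_le_degree _
  have hAB : #(A ∪ B) + 1 ≤ n := by
    have : A ∪ B ⊆ univ.erase 0 := by
      intro i
      simp only [A, B, mem_union, mem_filter, mem_univ, true_and, mem_erase, and_true]
      rintro (h | h) rfl
      · exact h.ne rfl
      · exact h.ne (by rw [zero_add])
    have := card_le_card this
    rw [card_erase_of_mem (mem_univ _), card_univ, Fintype.card_fin] at this
    have := NeZero.pos n
    omega
  have hP : #(A ∩ B) ≤ #(pivots G g) + 2 := by
    have : A ∩ B ⊆ pivots G g ∪ {1, -1} := by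
      intro i
      simp only [A, B, pivots, mem_inter, mem_union, mem_filter, mem_univ, true_and, mem_insert,
        mem_singleton]
      rintro ⟨h0, h1⟩
      by_cases hi1 : i = 1
      · exact Or.inr (Or.inl hi1)
      by_cases hi : i + 1 = 0
      · exact Or.inr (Or.inr (eq_neg_of_add_eq_zero_left hi))
      exact Or.inl ⟨hi1, hi, h0, h1⟩
    calc #(A ∩ B) ≤ #(pivots G g ∪ {1, -1}) := card_le_card this
      _ ≤ #(pivots G g) + #({1, -1} : Finset (Fin n)) := card_union_le _ _
      _ ≤ #(pivots G g) + 2 := by gcongr; exact card_le_two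
  have := card_union_add_card_inter A B
  omega

variable [DecidableEq V]

lemma exists_mem_pivots_not_mem (g : Fin n ≃ V) (X Y : Finset V)
    (h : n + #X + #Y + 2 ≤ 2 * G.minDegree) : ∃ i ∈ pivots G g, g i ∉ X ∧ g (i + 1) ∉ Y := by
  by_contra! hP
  have hsub : pivots G g ⊆ univ.filter (g · ∈ X) ∪ univ.filter (fun i => g (i + 1) ∈ Y) := by
    intro i hi
    simpa using or_iff_not_imp_left.mpr (hP i hi)
  have hY : #(univ.filter (fun i => g (i + 1) ∈ Y)) = #Y :=
    card_equiv ((Equiv.addRight 1).trans g) fun i => by simp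
  have := (card_le_card hsub).trans (card_union_le _ _)
  rw [card_filter_apply_mem, hY] at this
  have := card_pivots (G := G) g
  omega

lemma exists_arrangementEdges_subset (hn : 3 ≤ n) (hV : Fintype.card V = n)
    (hδ : n + 2 ≤ 2 * G.minDegree) : ∃ g : Fin n ≃ V, arrangementEdges g ⊆ G.edgeFinset := by
  obtain ⟨g, -, hmin⟩ :=
    (measure fun g : Fin n ≃ V => #(arrangementEdges g \ G.edgeFinset)).wf.has_min
      Set.univ ⟨(Fintype.equivFinOfCardEq hV).symm, trivial⟩
  refine ⟨g, fun e he => ?_⟩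
  by_contra heG
  obtain ⟨g, hE, rfl⟩ := exists_rotation_eq_mk_zero_one he
  obtain ⟨i, hi, -, -⟩ := exists_mem_pivots_not_mem (G := G) g ∅ ∅ (by simpa using hδ)
  obtain ⟨-, hi, h0i, h1i⟩ := mem_pivots.mp hi
  have hi0 : i ≠ 0 := by rintro rfl; exact h0i.ne rfl
  refine hmin (twoOpt g hi) trivial (card_lt_card ?_)
  rw [← hE]
  refine _root_.ssubset_of_subset_of_ssubset
    (b := (arrangementEdges g \ G.edgeFinset).erase s(g 0, g 1)) (fun x hx => ?_)
    (erase_ssubset (mem_sdiff.mpr ⟨hE ▸ he, heG⟩))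
  rw [mem_sdiff] at hx
  have := arrangementEdges_twoOpt_subset hn g hi0 hi hx.1
  simp only [mem_insert, mem_erase] at this ⊢
  rcases this with rfl | rfl | ⟨hx0, hxE⟩
  · exact absurd (G.mem_edgeFinset.mpr h0i) hx.2
  · exact absurd (G.mem_edgeFinset.mpr h1i) hx.2
  · exact ⟨hx0, mem_sdiff.mpr ⟨hxE, hx.2⟩⟩

end Pivots

namespace SimpleGraph

variable {V : Type*} (H : SimpleGraph V)

def IsAlternatingPair (e f : Sym2 V) : Prop :=
  ∃ a b c d, e = s(a, b) ∧ f = s(c, d) ∧ H.Adj b c ∧ H.Adj d a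

variable {H}

instance [Fintype V] [DecidableEq V] [DecidableRel H.Adj] (e f : Sym2 V) :
    Decidable (H.IsAlternatingPair e f) := by
  unfold IsAlternatingPair; infer_instance

lemma IsAlternatingPair.symm {e f : Sym2 V} : H.IsAlternatingPair e f → H.IsAlternatingPair f e
  | ⟨a, b, c, d, he, hf, hbc, hda⟩ => ⟨c, d, a, b, hf, he, hda, hbc⟩

lemma IsAlternatingPair.adj_or_adj {a b c d : V} (h : H.IsAlternatingPair s(a, b) s(c, d)) :
    H.Adj a c ∧ H.Adj b d ∨ H.Adj a d ∧ H.Adj b c := by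
  obtain ⟨a', b', c', d', he, hf, hbc, hda⟩ := h
  rcases Sym2.eq_iff.mp he with ⟨rfl, rfl⟩ | ⟨rfl, rfl⟩ <;>
    rcases Sym2.eq_iff.mp hf with ⟨rfl, rfl⟩ | ⟨rfl, rfl⟩
  · exact Or.inr ⟨hda.symm, hbc⟩
  · exact Or.inl ⟨hda.symm, hbc⟩
  · exact Or.inl ⟨hbc, hda.symm⟩
  · exact Or.inr ⟨hbc, hda.symm⟩

lemma not_isAlternatingPair_self {a b : V} (hab : ¬H.Adj a b) :
    ¬H.IsAlternatingPair s(a, b) s(a, b) :=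
  fun h => h.adj_or_adj.elim (fun h => H.irrefl h.1) fun h => hab h.1

end SimpleGraph

section AlternatingPairs

variable {V : Type*} [Fintype V] [DecidableEq V] {G H : SimpleGraph V} [DecidableRel G.Adj]
  [DecidableRel H.Adj]

variable (H) in
def alternatingPartners (E : Finset (Sym2 V)) (v : V) : Finset V :=
  {u | ∃ e ∈ E, H.IsAlternatingPair s(v, u) e}

variable (H) in
def alternatingEdges (E : Finset (Sym2 V)) : Finset (Sym2 V) :=
  {e ∈ E | ∃ f ∈ E, H.IsAlternatingPair e f}

lemma card_alternatingPartners_le (g : Fin n ≃ V) (v : V) :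
    #(alternatingPartners H (arrangementEdges g) v) ≤ 2 * H.maxDegree ^ 2 := by
  set N : V → Finset V := fun c => {g (g.symm c + 1), g (g.symm c - 1)}
  have hsub : alternatingPartners H (arrangementEdges g) v ⊆
      (H.neighborFinset v).biUnion fun c => (N c).biUnion fun d => H.neighborFinset d := by
    intro u hu
    simp only [alternatingPartners, mem_filter, mem_univ, true_and] at hu
    obtain ⟨e, he, halt⟩ := hu
    induction e using Sym2.ind with | h c d => ?_
    simp only [mem_biUnion, SimpleGraph.mem_neighborFinset]
    rcases halt.adj_or_adj with ⟨hvc, hud⟩ | ⟨hvd, huc⟩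
    · exact ⟨c, hvc, d, mem_pair_of_mk_mem_arrangementEdges he, hud.symm⟩
    · exact ⟨d, hvd, c, mem_pair_of_mk_mem_arrangementEdges (Sym2.eq_swap ▸ he), huc.symm⟩
  calc #(alternatingPartners H (arrangementEdges g) v)
      ≤ #(H.neighborFinset v) * (2 * H.maxDegree) := by
        refine (card_le_card hsub).trans (card_biUnion_le_card_mul _ _ _ fun c _ => ?_)
        refine (card_biUnion_le_card_mul _ _ _ fun d _ => H.degree_le_maxDegree d).trans ?_
        exact Nat.mul_le_mul_right _ card_le_two
    _ ≤ H.maxDegree * (2 * H.maxDegree) := Nat.mul_le_mul_right _ (H.degree_le_maxDegree v)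
    _ = 2 * H.maxDegree ^ 2 := by ring

lemma card_alternatingEdges_lt {E E' : Finset (Sym2 V)} {e₀ f₀ f₁ : Sym2 V}
    (hE' : E' ⊆ insert f₀ (insert f₁ (E.erase e₀))) (he₀ : e₀ ∈ alternatingEdges H E)
    (hf : ∀ y ∈ E', ¬H.IsAlternatingPair f₀ y ∧ ¬H.IsAlternatingPair f₁ y) :
    #(alternatingEdges H E') < #(alternatingEdges H E) := by
  have hold : ∀ x ∈ E', ∀ y ∈ E', H.IsAlternatingPair x y → x ∈ E.erase e₀ := by
    intro x hx y hy hxy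
    rcases mem_insert.mp (hE' hx) with rfl | hx'
    · exact absurd hxy (hf y hy).1
    rcases mem_insert.mp hx' with rfl | hx'
    · exact absurd hxy (hf y hy).2
    exact hx'
  refine card_lt_card (_root_.ssubset_of_subset_of_ssubset
    (b := (alternatingEdges H E).erase e₀) (fun x hx => ?_) (erase_ssubset he₀))
  obtain ⟨hx, y, hy, hxy⟩ := mem_filter.mp hx
  obtain ⟨hne, hxE⟩ := mem_erase.mp (hold x hx y hy hxy)
  exact mem_erase.mpr
    ⟨hne, mem_filter.mpr ⟨hxE, y, (mem_erase.mp (hold y hy x hx hxy.symm)).2, hxy⟩⟩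

lemma exists_twoOpt_card_alternatingEdges_lt (hn : 3 ≤ n) (hGH : Disjoint G H)
    (hδ : n + 4 * H.maxDegree ^ 2 + H.maxDegree + 2 ≤ 2 * G.minDegree) {g : Fin n ≃ V}
    (hG : arrangementEdges g ⊆ G.edgeFinset) {e f : Sym2 V} (he : e ∈ arrangementEdges g)
    (hf : f ∈ arrangementEdges g) (hef : H.IsAlternatingPair e f) :
    ∃ g' : Fin n ≃ V, arrangementEdges g' ⊆ G.edgeFinset ∧
      #(alternatingEdges H (arrangementEdges g')) < #(alternatingEdges H (arrangementEdges g)) := by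
  have hGH' {a b : V} (hab : G.Adj a b) : ¬H.Adj a b := SimpleGraph.disjoint_left.mp hGH a b hab
  obtain ⟨g, hE, rfl⟩ := exists_rotation_eq_mk_zero_one he
  rw [← hE] at hG hf he ⊢
  set X := alternatingPartners H (arrangementEdges g) (g 0)
  set Y := alternatingPartners H (arrangementEdges g) (g 1) ∪ H.neighborFinset (g 0)
  have hXY : n + #X + #Y + 2 ≤ 2 * G.minDegree := by
    have hX : #X ≤ 2 * H.maxDegree ^ 2 := card_alternatingPartners_le g (g 0)
    have hY : #Y ≤ 2 * H.maxDegree ^ 2 + H.maxDegree :=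
      (card_union_le _ _).trans (add_le_add (card_alternatingPartners_le g (g 1))
        (H.degree_le_maxDegree (g 0)))
    omega
  obtain ⟨i, hi, hiX, hiY⟩ := exists_mem_pivots_not_mem g X Y hXY
  obtain ⟨-, hi, h0i, h1i⟩ := mem_pivots.mp hi
  have hi0 : i ≠ 0 := by rintro rfl; exact h0i.ne rfl
  have hsub := arrangementEdges_twoOpt_subset hn g hi0 hi
  have h0i1 : ¬H.IsAlternatingPair s(g 0, g i) s(g 1, g (i + 1)) := fun h =>
    h.adj_or_adj.elim (fun h => hGH' (G.mem_edgeFinset.mp (hG he)) h.1)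
      fun h => hiY (mem_union_right _ (H.mem_neighborFinset _ _ |>.mpr h.1))
  refine ⟨twoOpt g hi, fun x hx => ?_, card_alternatingEdges_lt hsub (mem_filter.mpr
    ⟨he, f, hf, hef⟩) fun y hy => ?_⟩
  · rcases mem_insert.mp (hsub hx) with rfl | hx'
    · exact G.mem_edgeFinset.mpr h0i
    rcases mem_insert.mp hx' with rfl | hx'
    · exact G.mem_edgeFinset.mpr h1i
    exact hG (mem_erase.mp hx').2
  rcases mem_insert.mp (hsub hy) with rfl | hy
  · exact ⟨SimpleGraph.not_isAlternatingPair_self (hGH' h0i), fun h => h0i1 h.symm⟩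
  rcases mem_insert.mp hy with rfl | hy
  · exact ⟨h0i1, SimpleGraph.not_isAlternatingPair_self (hGH' h1i)⟩
  have hy := (mem_erase.mp hy).2
  exact ⟨fun h => hiX (by simpa [X, alternatingPartners] using ⟨y, hy, h⟩),
    fun h => hiY (mem_union_left _ (by simpa [alternatingPartners] using ⟨y, hy, h⟩))⟩

lemma exists_arrangement_not_isAlternatingPair (hn : 3 ≤ n) (hV : Fintype.card V = n)
    (hGH : Disjoint G H) (hδ : n + 4 * H.maxDegree ^ 2 + H.maxDegree + 2 ≤ 2 * G.minDegree) :
    ∃ g : Fin n ≃ V, arrangementEdges g ⊆ G.edgeFinset ∧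
      ∀ e ∈ arrangementEdges g, ∀ f ∈ arrangementEdges g, ¬H.IsAlternatingPair e f := by
  obtain ⟨g₀, hg₀⟩ := exists_arrangementEdges_subset (G := G) hn hV (by omega)
  obtain ⟨g, hg, hmin⟩ :=
    (measure fun g : Fin n ≃ V => #(alternatingEdges H (arrangementEdges g))).wf.has_min
      {g | arrangementEdges g ⊆ G.edgeFinset} ⟨g₀, hg₀⟩
  refine ⟨g, hg, fun e he f hf hef => ?_⟩
  obtain ⟨g', hg', hlt⟩ := exists_twoOpt_card_alternatingEdges_lt hn hGH hδ hg he hf hef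
  exact hmin g' hg' hlt

end AlternatingPairs

lemma exists_isHamiltonianCycle_of_arrangement {V : Type*} [Fintype V] [DecidableEq V]
    {G : SimpleGraph V} (hn : 3 ≤ n) (g : Fin n ≃ V) (hg : ∀ k, G.Adj (g k) (g (k + 1))) :
    ∃ (v : V) (p : G.Walk v v), p.IsHamiltonianCycle ∧ ∀ e ∈ p.edges, e ∈ arrangementEdges g := by
  obtain ⟨m, rfl⟩ : ∃ m, n = m + 3 := ⟨n - 3, by omega⟩
  have hsucc {a b : Fin (m + 3)} (hab : (SimpleGraph.cycleGraph (m + 3)).Adj a b) :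
      a = b + 1 ∨ b = a + 1 :=
    (SimpleGraph.cycleGraph_adj.mp hab).imp sub_eq_iff_eq_add'.mp sub_eq_iff_eq_add'.mp
  let φ : SimpleGraph.cycleGraph (m + 3) →g G :=
    ⟨g, fun hab => (hsucc hab).elim (fun h => h ▸ (hg _).symm) fun h => h ▸ hg _⟩
  have hcycle : (SimpleGraph.cycleGraph.cycle m).IsHamiltonianCycle :=
    SimpleGraph.Walk.isHamiltonianCycle_iff_isCycle_and_length_eq.mpr
      ⟨SimpleGraph.cycleGraph.isCycle_cycle, by simp⟩
  refine ⟨_, _, hcycle.map (f := φ) g.bijective, fun e he => ?_⟩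
  rw [SimpleGraph.Walk.edges_map, List.mem_map] at he
  obtain ⟨e', he', rfl⟩ := he
  induction e' using Sym2.ind with | h a b => ?_
  rcases hsucc (SimpleGraph.Walk.adj_of_mem_edges _ he') with rfl | rfl
  · rw [Sym2.map_mk, Sym2.eq_swap]
    exact mk_mem_arrangementEdges g b
  · exact mk_mem_arrangementEdges g a

/-- **Theorem (Demetrovics–Katona–Sali).**
Let `G` and `H` be graphs on the same vertex set of size `n`, with disjoint edge
sets.  Let `r` be the minimum degree of `G` and `s` the maximum degree of `H`.
If `2r − 8s² − s − 1 > n` then `G` has a Hamilton cycle such that whenever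
`(a,b)` and `(c,d)` are edges of the cycle (directed along the cycle), the pairs
`(b,c)` and `(d,a)` are not both edges of `H`. -/
theorem dks_hamilton_cycle_avoiding_alternating_four_cycles
    {V : Type*} [Fintype V] [DecidableEq V]
    (G H : SimpleGraph V) [DecidableRel G.Adj] [DecidableRel H.Adj]
    (n : ℕ) (hn : Fintype.card V = n)
    (hdisj : Disjoint G.edgeSet H.edgeSet)
    (hcond : (n : ℤ) < 2 * (G.minDegree : ℤ) - 8 * (H.maxDegree : ℤ) ^ 2
        - (H.maxDegree : ℤ) - 1) :
    ∃ (v : V) (p : G.Walk v v), p.IsHamiltonianCycle ∧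
      ∀ d₁ ∈ p.darts, ∀ d₂ ∈ p.darts,
        ¬ (H.Adj d₁.toProd.2 d₂.toProd.1 ∧ H.Adj d₂.toProd.2 d₁.toProd.1) := by
  have hδ : n + 4 * H.maxDegree ^ 2 + H.maxDegree + 2 ≤ 2 * G.minDegree := by
    zify
    linarith [sq_nonneg (H.maxDegree : ℤ)]
  have hn3 : 3 ≤ n := by
    rcases isEmpty_or_nonempty V with hV | hV
    · rw [G.minDegree_of_subsingleton] at hδ
      omega
    · have := G.minDegree_lt_card
      omega
  have : NeZero n := ⟨by omega⟩
  obtain ⟨g, hgG, hgH⟩ :=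
    exists_arrangement_not_isAlternatingPair hn3 hn (SimpleGraph.disjoint_edgeSet.mp hdisj) hδ
  obtain ⟨v, p, hp, hpg⟩ := exists_isHamiltonianCycle_of_arrangement hn3 g fun k =>
    G.mem_edgeFinset.mp (hgG (mk_mem_arrangementEdges g k))
  have hdart {d : G.Dart} (hd : d ∈ p.darts) : d.edge ∈ arrangementEdges g :=
    hpg _ (p.edges_eq_map_darts ▸ List.mem_map_of_mem hd)
  exact ⟨v, p, hp, fun d₁ hd₁ d₂ hd₂ h =>
    hgH _ (hdart hd₁) _ (hdart hd₂) ⟨_, _, _, _, rfl, rfl, h⟩⟩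
end

section
/- Let G be an r-regular bipartite graph and H an s-regular bipartite graph on the same bipartition (A,B) with |A|=|B|=n and E(G)∩E(H)=∅. If r > n/2 + s², then there exists a perfect matching in G which is acceptable for H. -/
/-- A bipartite graph on parts `A` and `B`, each a copy of `Fin n`, is modelled by the
relation `E : Fin n → Fin n → Prop` recording which pairs `(a, b)` with `a ∈ A`, `b ∈ B`
are joined by an edge.  `BipRegular n s E` says that this bipartite graph is `s`-regular:
every vertex of `A` and every vertex of `B` is incident with exactly `s` edges. -/
def BipRegular (n s : ℕ) (E : Fin n → Fin n → Prop) : Prop :=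
  (∀ a : Fin n, {b : Fin n | E a b}.ncard = s) ∧
  (∀ b : Fin n, {a : Fin n | E a b}.ncard = s)

/-- A perfect matching in the bipartite graph `G` (given by the bijection `σ : A ≃ B`,
i.e. the matching consists of the edges `(a, σ a)`) is *acceptable* for the bipartite
graph `H` if no two of its edges form a 4-cycle together with two edges of `H`:
there are no `a ≠ a'` with `(a, σ a')` and `(a', σ a)` both edges of `H`. -/
def AcceptableMatching (n : ℕ) (G H : Fin n → Fin n → Prop) (σ : Fin n ≃ Fin n) : Prop :=
  (∀ a : Fin n, G a (σ a)) ∧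
  ∀ a a' : Fin n, a ≠ a' → ¬ (H a (σ a') ∧ H a' (σ a))

open Finset

/-- **Theorem.**  Let `G` be an `r`-regular and `H` an `s`-regular bipartite graph on the
same bipartition `(A, B)` with `|A| = |B| = n` and `E(G) ∩ E(H) = ∅`.  If
`r > n/2 + s²` then there is a perfect matching in `G` which is acceptable for `H`. -/
theorem exists_acceptable_matching_of_regular
    (n r s : ℕ) (G H : Fin n → Fin n → Prop)
    (hG : BipRegular n r G) (hH : BipRegular n s H)
    (hdisj : ∀ a b : Fin n, ¬ (G a b ∧ H a b))
    (hcond : (n : ℝ) / 2 + (s : ℝ) ^ 2 < (r : ℝ)) :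
    ∃ σ : Fin n ≃ Fin n, AcceptableMatching n G H σ := by
  classical
  obtain ⟨hG1, hG2⟩ := hG
  obtain ⟨hH1, hH2⟩ := hH
  have conv : ∀ (p : Fin n → Prop) (k : ℕ), {x | p x}.ncard = k →
      (univ.filter p).card = k := by
    intro p k h
    rw [← h, Set.ncard_eq_toFinset_card']; simp
  have hGc1 : ∀ a, (univ.filter (fun b => G a b)).card = r := fun a => conv _ _ (hG1 a)
  have hGc2 : ∀ b, (univ.filter (fun a => G a b)).card = r := fun b => conv _ _ (hG2 b)
  have hHc1 : ∀ a, (univ.filter (fun b => H a b)).card = s := fun a => conv _ _ (hH1 a)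
  have hHc2 : ∀ b, (univ.filter (fun a => H a b)).card = s := fun b => conv _ _ (hH2 b)
  have key : ∀ (σ : Equiv.Perm (Fin n)) (p : Fin n → Prop),
      (univ.filter (fun x => p (σ x))).card = (univ.filter p).card := by
    intro σ p
    apply Finset.card_bij' (fun x _ => σ x) (fun y _ => σ.symm y) <;> simp
  have hrs : n + 2 * (s * s) + 1 ≤ 2 * r := by
    have h2 : ((n + 2 * (s * s) : ℕ) : ℝ) < ((2 * r : ℕ) : ℝ) := by push_cast; nlinarith
    exact_mod_cast h2
  have hinter : ∀ (A B : Finset (Fin n)), A.card + B.card ≤ n + (A ∩ B).card := by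
    intro A B
    have h1 := Finset.card_union_add_card_inter A B
    have h2 : (A ∪ B).card ≤ n := by simpa using Finset.card_le_univ (A ∪ B)
    omega
  -- Hall's condition
  have hall : ∀ W : Finset (Fin n),
      W.card ≤ (W.biUnion (fun a => univ.filter (fun b => G a b))).card := by
    intro W
    rcases W.eq_empty_or_nonempty with h | ⟨a, ha⟩
    · simp [h]
    by_cases hc : W.card ≤ r
    · calc W.card ≤ r := hc
        _ = (univ.filter (fun b => G a b)).card := (hGc1 a).symm
        _ ≤ _ := Finset.card_le_card
          (Finset.subset_biUnion_of_mem (fun a => univ.filter (fun b => G a b)) ha)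
    · have huniv : W.biUnion (fun a => univ.filter (fun b => G a b)) = univ := by
        apply Finset.eq_univ_of_forall
        intro b
        have h3 := hinter W (univ.filter (fun a => G a b))
        rw [hGc2 b] at h3
        have h4 : 0 < (W ∩ univ.filter (fun a => G a b)).card := by omega
        obtain ⟨a', ha'⟩ := Finset.card_pos.mp h4
        rw [Finset.mem_inter, Finset.mem_filter] at ha'
        exact Finset.mem_biUnion.mpr ⟨a', ha'.1, by simp [ha'.2.2]⟩
      rw [huniv]
      simpa using Finset.card_le_univ W
  obtain ⟨f, hfinj, hf⟩ := (Finset.all_card_le_biUnion_card_iff_exists_injective _).mp hall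
  have hfG : ∀ y, G y (f y) := by intro y; have := hf y; simpa using this
  have hbij : Function.Bijective f := Finite.injective_iff_bijective.mp hfinj
  set M : Finset (Equiv.Perm (Fin n)) :=
    univ.filter (fun σ : Equiv.Perm (Fin n) => ∀ y, G y (σ y)) with hM
  have hMne : M.Nonempty := by
    refine ⟨Equiv.ofBijective f hbij, ?_⟩
    simp only [hM, Finset.mem_filter, Finset.mem_univ, true_and]
    intro y; exact hfG y
  set bc : Equiv.Perm (Fin n) → ℕ := fun ρ =>
    ((univ ×ˢ univ : Finset (Fin n × Fin n)).filter
       (fun p => p.1 ≠ p.2 ∧ H p.1 (ρ p.2) ∧ H p.2 (ρ p.1))).card with hbc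
  obtain ⟨σ, hσM, hmin⟩ := Finset.exists_min_image M bc hMne
  have hmσ : ∀ y, G y (σ y) := by
    simp only [hM, Finset.mem_filter, Finset.mem_univ, true_and] at hσM
    exact hσM
  by_cases hbad : ∃ a a' : Fin n, a ≠ a' ∧ H a (σ a') ∧ H a' (σ a)
  case neg =>
    refine ⟨σ, hmσ, ?_⟩
    rintro a a' hne ⟨h1, h2⟩
    exact hbad ⟨a, a', hne, h1, h2⟩
  case pos =>
  exfalso
  obtain ⟨a, a', hne, hB1, hB2⟩ := hbad
  set N1 : Fin n → Finset (Fin n) := fun x =>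
    univ.filter (fun z => z ≠ a ∧ z ≠ x ∧ H a (σ z) ∧ H z (σ x)) with hN1
  set N2 : Fin n → Finset (Fin n) := fun x =>
    univ.filter (fun z => z ≠ a ∧ z ≠ x ∧ H x (σ z) ∧ H z (σ a)) with hN2
  have hnotaa : ¬ H a (σ a) := fun h => hdisj a (σ a) ⟨hmσ a, h⟩
  -- Key swap lemma
  have K1 : ∀ x : Fin n, x ≠ a → G a (σ x) → G x (σ a) →
      1 ≤ (N1 x).card + (N2 x).card := by
    intro x hxa hGax hGxa
    set τ : Equiv.Perm (Fin n) := (Equiv.swap a x).trans σ with hτ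
    have hτa : τ a = σ x := by simp [hτ]
    have hτx : τ x = σ a := by simp [hτ]
    have hτo : ∀ y, y ≠ a → y ≠ x → τ y = σ y := by
      intro y h1 h2; simp [hτ, Equiv.swap_apply_of_ne_of_ne h1 h2]
    have hτM : τ ∈ M := by
      simp only [hM, Finset.mem_filter, Finset.mem_univ, true_and]
      intro y
      by_cases h1 : y = a
      · subst h1; rw [hτa]; exact hGax
      by_cases h2 : y = x
      · subst h2; rw [hτx]; exact hGxa
      · rw [hτo y h1 h2]; exact hmσ y
    have hminτ := hmin τ hτM
    set P := (univ ×ˢ univ : Finset (Fin n × Fin n)) with hP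
    set touch : Fin n × Fin n → Prop := fun p => p.1 = a ∨ p.1 = x ∨ p.2 = a ∨ p.2 = x
      with htouch
    have hsplit : ∀ ρ : Equiv.Perm (Fin n),
        bc ρ = (P.filter (fun p => (p.1 ≠ p.2 ∧ H p.1 (ρ p.2) ∧ H p.2 (ρ p.1)) ∧ touch p)).card
          + (P.filter
              (fun p => (p.1 ≠ p.2 ∧ H p.1 (ρ p.2) ∧ H p.2 (ρ p.1)) ∧ ¬ touch p)).card := by
      intro ρ
      have h := Finset.card_filter_add_card_filter_not
        (s := P.filter (fun p => p.1 ≠ p.2 ∧ H p.1 (ρ p.2) ∧ H p.2 (ρ p.1))) (p := touch)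
      rw [Finset.filter_filter, Finset.filter_filter] at h
      simp only [hbc]
      omega
    have hnotc : (P.filter (fun p => (p.1 ≠ p.2 ∧ H p.1 (τ p.2) ∧ H p.2 (τ p.1)) ∧ ¬ touch p))
        = (P.filter (fun p => (p.1 ≠ p.2 ∧ H p.1 (σ p.2) ∧ H p.2 (σ p.1)) ∧ ¬ touch p)) := by
      apply Finset.filter_congr
      intro p _
      by_cases ht : touch p
      · simp [ht]
      · have h1 : p.1 ≠ a ∧ p.1 ≠ x ∧ p.2 ≠ a ∧ p.2 ≠ x := by
          simp only [htouch] at ht; push_neg at ht; exact ht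
        rw [hτo p.1 h1.1 h1.2.1, hτo p.2 h1.2.2.1 h1.2.2.2]
    have hTσ : 2 ≤ (P.filter
        (fun p => (p.1 ≠ p.2 ∧ H p.1 (σ p.2) ∧ H p.2 (σ p.1)) ∧ touch p)).card := by
      have hsub : ({(a, a'), (a', a)} : Finset (Fin n × Fin n)) ⊆ P.filter
          (fun p => (p.1 ≠ p.2 ∧ H p.1 (σ p.2) ∧ H p.2 (σ p.1)) ∧ touch p) := by
        intro p hp
        simp only [Finset.mem_insert, Finset.mem_singleton] at hp
        rcases hp with rfl | rfl <;>
          simp [hP, htouch, Finset.mem_filter, hne, hne.symm, hB1, hB2]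
      have hcard : ({(a, a'), (a', a)} : Finset (Fin n × Fin n)).card = 2 :=
        Finset.card_pair (fun h => hne (congrArg Prod.fst h))
      rw [← hcard]
      exact Finset.card_le_card hsub
    have hTτ : (P.filter
        (fun p => (p.1 ≠ p.2 ∧ H p.1 (τ p.2) ∧ H p.2 (τ p.1)) ∧ touch p)).card
        ≤ 2 * ((N1 x).card + (N2 x).card) := by
      have hHax : ¬ H a (τ x) := by rw [hτx]; exact hnotaa
      have hsub : P.filter (fun p => (p.1 ≠ p.2 ∧ H p.1 (τ p.2) ∧ H p.2 (τ p.1)) ∧ touch p)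
          ⊆ (((N1 x).image (fun z => (a, z)) ∪ (N1 x).image (fun z => (z, a)))
             ∪ (N2 x).image (fun z => (x, z))) ∪ (N2 x).image (fun z => (z, x)) := by
        rintro ⟨y, z⟩ hp
        rw [Finset.mem_filter] at hp
        obtain ⟨-, ⟨hpne, hp1, hp2⟩, ht⟩ := hp
        simp only [] at hpne hp1 hp2
        simp only [Finset.mem_union, Finset.mem_image]
        simp only [htouch] at ht
        rcases ht with h | h | h | h
        · -- y = a
          rw [h] at hpne hp1 hp2
          have hza : z ≠ a := fun hh => hpne hh.symm
          have hzx : z ≠ x := by rintro rfl; exact hHax hp1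
          rw [hτo z hza hzx] at hp1
          rw [hτa] at hp2
          refine Or.inl (Or.inl (Or.inl ⟨z, ?_, by rw [h]⟩))
          simp [hN1, Finset.mem_filter, hza, hzx, hp1, hp2]
        · -- y = x
          rw [h] at hpne hp1 hp2
          have hza : z ≠ a := by rintro rfl; rw [hτx] at hp2; exact hnotaa hp2
          have hzx : z ≠ x := fun hh => hpne hh.symm
          rw [hτo z hza hzx] at hp1
          rw [hτx] at hp2
          refine Or.inl (Or.inr ⟨z, ?_, by rw [h]⟩)
          simp [hN2, Finset.mem_filter, hza, hzx, hp1, hp2]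
        · -- z = a
          rw [h] at hpne hp1 hp2
          have hya : y ≠ a := hpne
          have hyx : y ≠ x := by rintro rfl; exact hHax hp2
          rw [hτa] at hp1
          rw [hτo y hya hyx] at hp2
          refine Or.inl (Or.inl (Or.inr ⟨y, ?_, by rw [h]⟩))
          simp [hN1, Finset.mem_filter, hya, hyx, hp1, hp2]
        · -- z = x
          rw [h] at hpne hp1 hp2
          have hya : y ≠ a := by rintro rfl; exact hHax hp1
          have hyx : y ≠ x := hpne
          rw [hτx] at hp1
          rw [hτo y hya hyx] at hp2
          refine Or.inr ⟨y, ?_, by rw [h]⟩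
          simp [hN2, Finset.mem_filter, hya, hyx, hp1, hp2]
      have h4 := Finset.card_le_card hsub
      have u1 := Finset.card_union_le
        (((N1 x).image (fun z => (a, z)) ∪ (N1 x).image (fun z => (z, a)))
          ∪ (N2 x).image (fun z => (x, z))) ((N2 x).image (fun z => (z, x)))
      have u2 := Finset.card_union_le
        ((N1 x).image (fun z => (a, z)) ∪ (N1 x).image (fun z => (z, a)))
        ((N2 x).image (fun z => (x, z)))
      have u3 := Finset.card_union_le ((N1 x).image (fun z => (a, z)))
        ((N1 x).image (fun z => (z, a)))
      have i1 := Finset.card_image_le (s := N1 x) (f := fun z => ((a, z) : Fin n × Fin n))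
      have i2 := Finset.card_image_le (s := N1 x) (f := fun z => ((z, a) : Fin n × Fin n))
      have i3 := Finset.card_image_le (s := N2 x) (f := fun z => ((x, z) : Fin n × Fin n))
      have i4 := Finset.card_image_le (s := N2 x) (f := fun z => ((z, x) : Fin n × Fin n))
      omega
    have h1 := hsplit σ
    have h2 := hsplit τ
    rw [hnotc] at h2
    omega
  -- sum bounds
  have hS1 : ∑ x : Fin n, (N1 x).card ≤ s * s := by
    calc ∑ x : Fin n, (N1 x).card
        = ∑ x : Fin n, ∑ z : Fin n,
            (if z ≠ a ∧ z ≠ x ∧ H a (σ z) ∧ H z (σ x) then 1 else 0) := by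
          refine Finset.sum_congr rfl fun x _ => ?_
          simp only [hN1]
          rw [Finset.card_filter]
      _ = ∑ z : Fin n, ∑ x : Fin n,
            (if z ≠ a ∧ z ≠ x ∧ H a (σ z) ∧ H z (σ x) then 1 else 0) := Finset.sum_comm
      _ = ∑ z : Fin n,
            (univ.filter (fun x => z ≠ a ∧ z ≠ x ∧ H a (σ z) ∧ H z (σ x))).card := by
          refine Finset.sum_congr rfl fun z _ => ?_
          rw [Finset.card_filter]
      _ ≤ ∑ z : Fin n, (if z ≠ a ∧ H a (σ z) then s else 0) := by
          refine Finset.sum_le_sum fun z _ => ?_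
          by_cases hz : z ≠ a ∧ H a (σ z)
          · rw [if_pos hz]
            calc (univ.filter (fun x => z ≠ a ∧ z ≠ x ∧ H a (σ z) ∧ H z (σ x))).card
                ≤ (univ.filter (fun x => H z (σ x))).card := by
                  apply Finset.card_le_card
                  intro u hu
                  simp only [Finset.mem_filter] at hu ⊢
                  exact ⟨hu.1, hu.2.2.2.2⟩
              _ = s := by rw [key σ (fun b => H z b), hHc1 z]
          · rw [if_neg hz]
            have : (univ.filter (fun x => z ≠ a ∧ z ≠ x ∧ H a (σ z) ∧ H z (σ x))) = ∅ := by
              apply Finset.filter_false_of_mem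
              intro u _
              intro hcon
              exact hz ⟨hcon.1, hcon.2.2.1⟩
            simp [this]
      _ = (univ.filter (fun z => z ≠ a ∧ H a (σ z))).card * s := by
          rw [Finset.sum_ite, Finset.sum_const, Finset.sum_const_zero, add_zero, smul_eq_mul]
      _ ≤ s * s := by
          have h5 : (univ.filter (fun z => z ≠ a ∧ H a (σ z))).card
              ≤ (univ.filter (fun z => H a (σ z))).card := by
            apply Finset.card_le_card
            intro u hu
            simp only [Finset.mem_filter] at hu ⊢
            exact ⟨hu.1, hu.2.2⟩
          rw [key σ (fun b => H a b), hHc1 a] at h5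
          exact Nat.mul_le_mul_right s h5
  have hS2 : ∑ x : Fin n, (N2 x).card ≤ s * s := by
    calc ∑ x : Fin n, (N2 x).card
        = ∑ x : Fin n, ∑ z : Fin n,
            (if z ≠ a ∧ z ≠ x ∧ H x (σ z) ∧ H z (σ a) then 1 else 0) := by
          refine Finset.sum_congr rfl fun x _ => ?_
          simp only [hN2]
          rw [Finset.card_filter]
      _ = ∑ z : Fin n, ∑ x : Fin n,
            (if z ≠ a ∧ z ≠ x ∧ H x (σ z) ∧ H z (σ a) then 1 else 0) := Finset.sum_comm
      _ = ∑ z : Fin n,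
            (univ.filter (fun x => z ≠ a ∧ z ≠ x ∧ H x (σ z) ∧ H z (σ a))).card := by
          refine Finset.sum_congr rfl fun z _ => ?_
          rw [Finset.card_filter]
      _ ≤ ∑ z : Fin n, (if z ≠ a ∧ H z (σ a) then s else 0) := by
          refine Finset.sum_le_sum fun z _ => ?_
          by_cases hz : z ≠ a ∧ H z (σ a)
          · rw [if_pos hz]
            calc (univ.filter (fun x => z ≠ a ∧ z ≠ x ∧ H x (σ z) ∧ H z (σ a))).card
                ≤ (univ.filter (fun x => H x (σ z))).card := by
                  apply Finset.card_le_card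
                  intro u hu
                  simp only [Finset.mem_filter] at hu ⊢
                  exact ⟨hu.1, hu.2.2.2.1⟩
              _ = s := hHc2 (σ z)
          · rw [if_neg hz]
            have : (univ.filter (fun x => z ≠ a ∧ z ≠ x ∧ H x (σ z) ∧ H z (σ a))) = ∅ := by
              apply Finset.filter_false_of_mem
              intro u _
              intro hcon
              exact hz ⟨hcon.1, hcon.2.2.2⟩
            simp [this]
      _ = (univ.filter (fun z => z ≠ a ∧ H z (σ a))).card * s := by
          rw [Finset.sum_ite, Finset.sum_const, Finset.sum_const_zero, add_zero, smul_eq_mul]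
      _ ≤ s * s := by
          have h5 : (univ.filter (fun z => z ≠ a ∧ H z (σ a))).card
              ≤ (univ.filter (fun z => H z (σ a))).card := by
            apply Finset.card_le_card
            intro u hu
            simp only [Finset.mem_filter] at hu ⊢
            exact ⟨hu.1, hu.2.2⟩
          rw [hHc2 (σ a)] at h5
          exact Nat.mul_le_mul_right s h5
  -- the candidate set
  set A1 : Finset (Fin n) := univ.filter (fun x => G a (σ x)) with hA1def
  set A2 : Finset (Fin n) := univ.filter (fun x => G x (σ a)) with hA2def
  have hA1 : A1.card = r := by rw [hA1def, key σ (fun b => G a b), hGc1 a]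
  have hA2 : A2.card = r := by rw [hA2def]; exact hGc2 (σ a)
  have haI : a ∈ A1 ∩ A2 := by
    simp [hA1def, hA2def, Finset.mem_filter, hmσ a]
  have hIcard : 2 * (s * s) + 1 ≤ (A1 ∩ A2).card := by
    have := hinter A1 A2
    rw [hA1, hA2] at this
    omega
  set C : Finset (Fin n) := (A1 ∩ A2).erase a with hC
  have hCcard : 2 * (s * s) ≤ C.card := by
    rw [hC, Finset.card_erase_of_mem haI]
    omega
  -- combine
  have hCa : ∀ x ∈ C, 1 ≤ (N1 x).card + (N2 x).card := by
    intro x hx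
    rw [hC, Finset.mem_erase, Finset.mem_inter] at hx
    obtain ⟨hxa, hx1, hx2⟩ := hx
    rw [hA1def, Finset.mem_filter] at hx1
    rw [hA2def, Finset.mem_filter] at hx2
    exact K1 x hxa hx1.2 hx2.2
  have hsumC : C.card ≤ ∑ x ∈ C, ((N1 x).card + (N2 x).card) := by
    calc C.card = ∑ _x ∈ C, 1 := by simp
      _ ≤ _ := Finset.sum_le_sum hCa
  have ha2 : 2 ≤ (N1 a).card + (N2 a).card := by
    have h1 : a' ∈ N1 a := by
      simp only [hN1, Finset.mem_filter, Finset.mem_univ, true_and]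
      exact ⟨hne.symm, hne.symm, hB1, hB2⟩
    have h2 : a' ∈ N2 a := by
      simp only [hN2, Finset.mem_filter, Finset.mem_univ, true_and]
      exact ⟨hne.symm, hne.symm, hB1, hB2⟩
    have c1 := Finset.card_pos.mpr ⟨a', h1⟩
    have c2 := Finset.card_pos.mpr ⟨a', h2⟩
    omega
  have haC : a ∉ C := by rw [hC]; exact Finset.notMem_erase a _
  have htot : ∑ x ∈ insert a C, ((N1 x).card + (N2 x).card)
      ≤ ∑ x : Fin n, ((N1 x).card + (N2 x).card) :=
    Finset.sum_le_sum_of_subset (Finset.subset_univ _)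
  rw [Finset.sum_insert haC] at htot
  have hdistrib : ∑ x : Fin n, ((N1 x).card + (N2 x).card)
      = (∑ x : Fin n, (N1 x).card) + (∑ x : Fin n, (N2 x).card) :=
    Finset.sum_add_distrib
  omega
end

section
/- For every ε > 0 there are infinitely many n for which there exists a positive integer s with s ≤ (2+ε)·n^{3/4} and an s-regular bipartite graph H on bipartition (A,B) with |A|=|B|=n such that no perfect matching in the bipartite complement of H is acceptable for H. Consequently b(n) < (2+o(1))·n^{3/4} for infinitely many n. -/
/-- `bFn n` is the minimum `s` such that there exists an `s`-regular bipartite graph `H`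
on parts of size `n` for which no perfect matching in the bipartite complement of `H`
is acceptable for `H`. -/
noncomputable def bFn (n : ℕ) : ℕ :=
  sInf {s : ℕ | ∃ H : Fin n → Fin n → Prop, BipRegular n s H ∧
    ¬ ∃ σ : Fin n ≃ Fin n, AcceptableMatching n (fun a b => ¬ H a b) H σ}

/-!
The graph is `K_{q^m,q^m}` plus the Cayley graph on `W = F_q^m × F_q` whose connection set is
the graph `D = {(u, u ⬝ᵥ u)}` of the standard quadratic form; it is `q^m`-regular. A matching in
the complement of `H` must send the left side of the complete block into `W` and match its right
side from `W`; acceptability then says that the two resulting `q^m`-sets `S, T ⊆ W` span no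
edge `x → y` with `y - x ∈ D`. But for `q` odd two distinct vertices have at most `q^(m-1)`
common out-neighbours, because `(u + a) ⬝ᵥ (u + a) - u ⬝ᵥ u` is a non-constant affine function
of `u` when `a ≠ 0`. Cauchy–Schwarz applied to the numbers of neighbours in `S` of the vertices
of `W \ T` then makes `|T| = q^m` impossible as soon as `m ≥ 2`. Taking `q = p` prime and
`m = 3` gives `n = p^3 + p^4` and `s = p^3 ≤ n^{3/4}`.
-/

open Finset

section Codegree

variable {V : Type*} [Fintype V] (r : V → V → Prop) [DecidableRel r]

theorem sum_card_filter_rel_sq (S : Finset V) :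
    ∑ y, #{x ∈ S | r x y} ^ 2 = ∑ x ∈ S, ∑ x' ∈ S, #{y | r x y ∧ r x' y} := by
  have hsq : ∀ y, #{x ∈ S | r x y} ^ 2 = #{q ∈ S ×ˢ S | r q.1 y ∧ r q.2 y} := by
    intro y
    rw [sq, ← card_product, ← filter_product]
  simp_rw [hsq, ← sum_product' (f := fun x x' => #{y | r x y ∧ r x' y})]
  exact (sum_card_bipartiteAbove_eq_sum_card_bipartiteBelow
    (fun (q : V × V) y => r q.1 y ∧ r q.2 y)).symm

theorem sum_sum_codegree_le [DecidableEq V] {k l : ℕ} (hdeg : ∀ x, #{y | r x y} = k)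
    (hcodeg : ∀ x x', x ≠ x' → #{y | r x y ∧ r x' y} ≤ l) (S : Finset V) :
    ∑ x ∈ S, ∑ x' ∈ S, #{y | r x y ∧ r x' y} ≤ #S * k + #S ^ 2 * l := by
  have hle : ∀ x x', #{y | r x y ∧ r x' y} ≤ (if x = x' then k else 0) + l := by
    intro x x'
    split_ifs with h
    · subst h; simp [hdeg]
    · exact (hcodeg x x' h).trans (by omega)
  calc ∑ x ∈ S, ∑ x' ∈ S, #{y | r x y ∧ r x' y}
      ≤ ∑ x ∈ S, ∑ x' ∈ S, ((if x = x' then k else 0) + l) :=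
        sum_le_sum fun x _ => sum_le_sum fun x' _ => hle x x'
    _ = #S * k + #S ^ 2 * l := by
        rw [sum_congr rfl fun x hx => by rw [sum_add_distrib, sum_ite_eq, if_pos hx]]
        simp only [sum_const, smul_eq_mul]
        ring

theorem sq_card_mul_le_of_codegree_le [DecidableEq V] {k l : ℕ} (hdeg : ∀ x, #{y | r x y} = k)
    (hcodeg : ∀ x x', x ≠ x' → #{y | r x y ∧ r x' y} ≤ l) {S T : Finset V}
    (hST : ∀ x ∈ S, ∀ y ∈ T, ¬ r x y) :
    (#S * k) ^ 2 ≤ #Tᶜ * (#S * k + #S ^ 2 * l) := by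
  set d : V → ℕ := fun y => #{x ∈ S | r x y}
  have hd : ∀ y ∉ Tᶜ, d y = 0 := fun y hy =>
    card_eq_zero.2 <| filter_eq_empty_iff.2 fun x hx => hST x hx y (by simpa using hy)
  have sum_d : ∑ y ∈ Tᶜ, d y = #S * k := by
    rw [sum_subset (subset_univ _) fun y _ hy => hd y hy]
    exact (sum_card_bipartiteAbove_eq_sum_card_bipartiteBelow r).symm.trans
      (sum_const_nat fun x _ => hdeg x)
  have sum_sq_d : ∑ y ∈ Tᶜ, d y ^ 2 ≤ #S * k + #S ^ 2 * l := by
    rw [sum_subset (subset_univ _) fun y _ hy => by simp [hd y hy], sum_card_filter_rel_sq]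
    exact sum_sum_codegree_le r hdeg hcodeg S
  calc (#S * k) ^ 2 = (∑ y ∈ Tᶜ, d y) ^ 2 := by rw [sum_d]
    _ ≤ #Tᶜ * ∑ y ∈ Tᶜ, d y ^ 2 := sq_sum_le_card_mul_sum_sq
    _ ≤ #Tᶜ * (#S * k + #S ^ 2 * l) := Nat.mul_le_mul_left _ sum_sq_d

end Codegree

section Cayley

variable {G : Type*} [AddCommGroup G] [Fintype G] [DecidableEq G] (D : Finset G)

theorem card_filter_sub_mem (x : G) : #{y | y - x ∈ D} = #D :=
  card_nbij' (· - x) (· + x) (by intro y; simp) (by intro d; simp)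
    (by intro y _; simp) (by intro d _; simp)

theorem card_filter_sub_mem' (y : G) : #{x | y - x ∈ D} = #D :=
  card_nbij' (y - ·) (y - ·) (by intro x; simp) (by intro d; simp)
    (by intro x _; simp) (by intro d _; simp)

theorem card_filter_sub_mem_and_sub_mem (x x' : G) :
    #{y | y - x ∈ D ∧ y - x' ∈ D} = #{d ∈ D | d + (x - x') ∈ D} :=
  card_nbij' (· - x) (· + x) (by intro y; simp) (by intro d; simp [add_sub_assoc])
    (by intro y _; simp) (by intro d _; simp)

end Cayley

theorem eq_of_dotProduct_eq_of_forall_ne {ι R : Type*} [Fintype ι] [DecidableEq ι] [Ring R]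
    [NoZeroDivisors R]
    {a u v : ι → R} {i : ι} (hai : a i ≠ 0) (huv : a ⬝ᵥ u = a ⬝ᵥ v)
    (hne : ∀ j, j ≠ i → u j = v j) : u = v := by
  have hrest : ∑ j ∈ {i}ᶜ, a j * u j = ∑ j ∈ {i}ᶜ, a j * v j :=
    sum_congr rfl fun j hj => by rw [hne j (by simpa using hj)]
  have hi : a i * u i = a i * v i := by
    simpa [dotProduct, Fintype.sum_eq_add_sum_compl i, hrest] using huv
  funext j
  by_cases hj : j = i
  · subst hj; exact mul_left_cancel₀ hai hi
  · exact hne j hj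

section Quadric

variable (F : Type*) [Field F] [Fintype F] [DecidableEq F] (m : ℕ)

def quadricGraph : Finset ((Fin m → F) × F) := {w | w.2 = w.1 ⬝ᵥ w.1}

variable {F m}

theorem mem_quadricGraph {w : (Fin m → F) × F} : w ∈ quadricGraph F m ↔ w.2 = w.1 ⬝ᵥ w.1 := by
  simp [quadricGraph]

theorem card_quadricGraph : #(quadricGraph F m) = Fintype.card F ^ m := by
  calc #(quadricGraph F m) = #(univ : Finset (Fin m → F)) :=
        card_nbij' Prod.fst (fun u => (u, u ⬝ᵥ u)) (by intro w; simp)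
          (by intro u; simp [mem_quadricGraph])
          (by intro w hw; simp [(mem_quadricGraph.1 hw).symm]) (by intro u _; simp)
    _ = Fintype.card F ^ m := by simp

theorem card_quadricGraph_add_mem_le (h2 : (2 : F) ≠ 0) {w : (Fin m → F) × F} (hw : w ≠ 0) :
    #{d ∈ quadricGraph F m | d + w ∈ quadricGraph F m} ≤ Fintype.card F ^ (m - 1) := by
  obtain ⟨a, c⟩ := w
  have hlin : ∀ d ∈ ({d ∈ quadricGraph F m | d + (a, c) ∈ quadricGraph F m} : Finset _),
      2 * (a ⬝ᵥ d.1) = c - a ⬝ᵥ a := by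
    intro d hd
    simp only [mem_filter, mem_quadricGraph, Prod.fst_add, Prod.snd_add] at hd
    obtain ⟨hd, hdw⟩ := hd
    rw [hd, add_dotProduct, dotProduct_add, dotProduct_add, dotProduct_comm d.1 a] at hdw
    linear_combination -hdw
  by_cases ha : a = 0
  · subst ha
    have hc : c ≠ 0 := fun hc => hw (by simp [hc])
    refine (card_eq_zero.2 <| eq_empty_of_forall_notMem fun d hd => hc ?_).trans_le (Nat.zero_le _)
    simpa using (hlin d hd).symm
  obtain ⟨i, hai⟩ := Function.ne_iff.1 ha
  calc #{d ∈ quadricGraph F m | d + (a, c) ∈ quadricGraph F m}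
      ≤ #(univ : Finset ({j // j ≠ i} → F)) := by
        refine card_le_card_of_injOn (fun d j => d.1 j) (fun _ _ => mem_coe.2 (mem_univ _)) ?_
        intro d hd d' hd' hdd'
        have h1 : d.1 = d'.1 := eq_of_dotProduct_eq_of_forall_ne hai
          (mul_left_cancel₀ h2 ((hlin d hd).trans (hlin d' hd').symm))
          fun j hj => congrFun hdd' ⟨j, hj⟩
        have hq := (mem_quadricGraph.1 (mem_filter.1 hd).1)
        have hq' := (mem_quadricGraph.1 (mem_filter.1 hd').1)
        exact Prod.ext h1 (by rw [hq, hq', h1])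
    _ = Fintype.card F ^ (m - 1) := by simp

end Quadric

theorem pow_sub_pow_mul_lt {q m : ℕ} (hq : 2 ≤ q) (hm : 2 ≤ m) :
    (q ^ (m + 1) - q ^ m) * (q ^ m * q ^ m + (q ^ m) ^ 2 * q ^ (m - 1)) < (q ^ m * q ^ m) ^ 2 := by
  obtain ⟨s, rfl⟩ : ∃ s, q = s + 1 := ⟨q - 1, by omega⟩
  obtain ⟨t, ht⟩ : ∃ t, m = t + 1 := ⟨m - 1, by omega⟩
  subst ht
  set u := (s + 1) ^ t
  have hsu : s < u := Nat.lt_of_lt_of_le (Nat.lt_succ_self s)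
    (by simpa using Nat.pow_le_pow_right (Nat.succ_pos s) (by omega : 1 ≤ t))
  have hdiff : (s + 1) ^ (t + 1 + 1) - (s + 1) ^ (t + 1) = (s + 1) * u * s := by
    have h : (s + 1) ^ (t + 1 + 1) = (s + 1) * u * s + (s + 1) ^ (t + 1) := by
      simp only [u]; ring
    omega
  rw [hdiff, Nat.add_sub_cancel, pow_succ]
  calc (s + 1) * u * s * (u * (s + 1) * (u * (s + 1)) + (u * (s + 1)) ^ 2 * u)
      = ((s + 1) * u) ^ 3 * (s * (1 + u)) := by ring
    _ < ((s + 1) * u) ^ 3 * ((s + 1) * u) :=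
        Nat.mul_lt_mul_of_pos_left (by nlinarith) (by positivity)
    _ = (u * (s + 1) * (u * (s + 1))) ^ 2 := by ring

theorem exists_sub_mem_quadricGraph {F : Type*} [Field F] [Fintype F] [DecidableEq F] {m : ℕ}
    (h2 : (2 : F) ≠ 0) (hm : 2 ≤ m) {S T : Finset ((Fin m → F) × F)}
    (hS : #S = Fintype.card F ^ m) (hT : #T = Fintype.card F ^ m) :
    ∃ x ∈ S, ∃ y ∈ T, y - x ∈ quadricGraph F m := by
  by_contra! hST
  have hcs := sq_card_mul_le_of_codegree_le (fun x y => y - x ∈ quadricGraph F m)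
    (fun x => (card_filter_sub_mem _ x).trans card_quadricGraph)
    (fun x x' hxx' => (card_filter_sub_mem_and_sub_mem _ x x').trans_le
      (card_quadricGraph_add_mem_le h2 (sub_ne_zero.2 hxx'))) hST
  have hcard : Fintype.card ((Fin m → F) × F) = Fintype.card F ^ (m + 1) := by
    simp [pow_succ]
  rw [card_compl, hS, hT, hcard] at hcs
  exact (pow_sub_pow_mul_lt Fintype.one_lt_card hm).not_ge hcs

section LiftRel

variable {α β γ δ : Type*} {r : α → γ → Prop} {s : β → δ → Prop} {k : ℕ}

theorem ncard_setOf_liftRel_left (hr : ∀ a, {c | r a c}.ncard = k)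
    (hs : ∀ b, {d | s b d}.ncard = k) (z : α ⊕ β) :
    {z' | Sum.LiftRel r s z z'}.ncard = k := by
  rcases z with a | b
  · have h : {z' | Sum.LiftRel r s (.inl a) z'} = Sum.inl '' {c | r a c} := by
      ext (c | d) <;> simp
    rw [h, Set.ncard_image_of_injective _ Sum.inl_injective, hr]
  · have h : {z' | Sum.LiftRel r s (.inr b) z'} = Sum.inr '' {d | s b d} := by
      ext (c | d) <;> simp
    rw [h, Set.ncard_image_of_injective _ Sum.inr_injective, hs]

theorem ncard_setOf_liftRel_right (hr : ∀ c, {a | r a c}.ncard = k)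
    (hs : ∀ d, {b | s b d}.ncard = k) (z' : γ ⊕ δ) :
    {z | Sum.LiftRel r s z z'}.ncard = k := by
  rcases z' with c | d
  · have h : {z | Sum.LiftRel r s z (.inl c)} = Sum.inl '' {a | r a c} := by
      ext (a | b) <;> simp
    rw [h, Set.ncard_image_of_injective _ Sum.inl_injective, hr]
  · have h : {z | Sum.LiftRel r s z (.inr d)} = Sum.inr '' {b | s b d} := by
      ext (a | b) <;> simp
    rw [h, Set.ncard_image_of_injective _ Sum.inr_injective, hs]

end LiftRel

theorem bipRegular_comp_equiv {n k : ℕ} {X : Type*} (e : Fin n ≃ X) {R : X → X → Prop}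
    (hrow : ∀ x, {y | R x y}.ncard = k) (hcol : ∀ y, {x | R x y}.ncard = k) :
    BipRegular n k (fun a b => R (e a) (e b)) :=
  have hrange : ∀ s : Set X, s ⊆ Set.range e := fun _ x _ => e.surjective x
  ⟨fun _ => (Set.ncard_preimage_of_injective_subset_range e.injective (hrange _)).trans (hrow _),
    fun _ => (Set.ncard_preimage_of_injective_subset_range e.injective (hrange _)).trans (hcol _)⟩

section Blocks

/-! `Sum.LiftRel (fun _ _ => True) r` is the disjoint union of the complete bipartite graph on
`α` and the bipartite graph `r` on `V`. -/

variable {α V : Type*} [Fintype α] [DecidableEq V] {r : V → V → Prop}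

theorem exists_liftRel_crossing
    (hr : ∀ S T : Finset V, #S = Fintype.card α → #T = Fintype.card α → ∃ x ∈ S, ∃ y ∈ T, r x y)
    (τ : α ⊕ V ≃ α ⊕ V) (hτ : ∀ z, ¬ Sum.LiftRel (fun _ _ => True) r z (τ z)) :
    ∃ z z', z ≠ z' ∧ Sum.LiftRel (fun _ _ => True) r z (τ z') ∧
      Sum.LiftRel (fun _ _ => True) r z' (τ z) := by
  have hf : ∀ a, ∃ y, τ (.inl a) = .inr y := fun a => by
    rcases h : τ (.inl a) with c | y
    · exact absurd (h ▸ Sum.LiftRel.inl trivial) (hτ (.inl a))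
    · exact ⟨y, rfl⟩
  have hg : ∀ c, ∃ x, τ (.inr x) = .inl c := fun c => by
    rcases h : τ.symm (.inl c) with a | x
    · exact absurd ((τ.symm_apply_eq.1 h) ▸ Sum.LiftRel.inl trivial) (hτ (.inl a))
    · exact ⟨x, (τ.symm_apply_eq.1 h).symm⟩
  choose f hf using hf
  choose g hg using hg
  have hf_inj : Function.Injective f := fun a a' h =>
    Sum.inl_injective (τ.injective (by rw [hf, hf, h]))
  have hg_inj : Function.Injective g := fun c c' h =>
    Sum.inl_injective (by rw [← hg, ← hg, h])
  obtain ⟨_, hx, _, hy, hxy⟩ := hr (univ.image g) (univ.image f)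
    (by rw [card_image_of_injective _ hg_inj, card_univ])
    (by rw [card_image_of_injective _ hf_inj, card_univ])
  obtain ⟨c, -, rfl⟩ := mem_image.1 hx
  obtain ⟨a, -, rfl⟩ := mem_image.1 hy
  exact ⟨.inl a, .inr (g c), Sum.inl_ne_inr, by rw [hg]; exact .inl trivial,
    by rw [hf]; exact .inr hxy⟩

theorem not_exists_acceptableMatching_liftRel {n : ℕ} (e : Fin n ≃ α ⊕ V)
    (hr : ∀ S T : Finset V, #S = Fintype.card α → #T = Fintype.card α → ∃ x ∈ S, ∃ y ∈ T, r x y) :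
    ¬ ∃ σ : Fin n ≃ Fin n, AcceptableMatching n
      (fun a b => ¬ Sum.LiftRel (fun _ _ => True) r (e a) (e b))
      (fun a b => Sum.LiftRel (fun _ _ => True) r (e a) (e b)) σ := by
  rintro ⟨σ, hcompl, hpair⟩
  let τ : α ⊕ V ≃ α ⊕ V := e.symm.trans (σ.trans e)
  obtain ⟨z, z', hzz', h, h'⟩ := exists_liftRel_crossing hr τ fun z => by
    simpa [τ] using hcompl (e.symm z)
  exact hpair (e.symm z) (e.symm z') (e.symm.injective.ne hzz') (by simpa [τ] using ⟨h, h'⟩)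

end Blocks

theorem exists_bipRegular_not_exists_acceptableMatching (F : Type*) [Field F] [Fintype F]
    [DecidableEq F] (h2 : (2 : F) ≠ 0) {m : ℕ} (hm : 2 ≤ m) :
    ∃ H : Fin (Fintype.card F ^ m + Fintype.card F ^ (m + 1)) →
        Fin (Fintype.card F ^ m + Fintype.card F ^ (m + 1)) → Prop,
      BipRegular _ (Fintype.card F ^ m) H ∧
      ¬ ∃ σ, AcceptableMatching _ (fun a b => ¬ H a b) H σ := by
  set q := Fintype.card F
  let r : (Fin m → F) × F → (Fin m → F) × F → Prop := fun x y => y - x ∈ quadricGraph F m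
  let e : Fin (q ^ m + q ^ (m + 1)) ≃ Fin (q ^ m) ⊕ (Fin m → F) × F :=
    Fintype.equivOfCardEq (by simp [q, pow_succ])
  have hcomplete : ∀ _ : Fin (q ^ m), {c : Fin (q ^ m) | True}.ncard = q ^ m := by simp
  refine ⟨fun a b => Sum.LiftRel (fun _ _ => True) r (e a) (e b),
    bipRegular_comp_equiv e (ncard_setOf_liftRel_left hcomplete ?_)
      (ncard_setOf_liftRel_right hcomplete ?_),
    not_exists_acceptableMatching_liftRel e fun S T hS hT => ?_⟩
  · intro x
    simp [r, q, Set.ncard_eq_toFinset_card', card_filter_sub_mem, card_quadricGraph]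
  · intro y
    simp [r, q, Set.ncard_eq_toFinset_card', card_filter_sub_mem', card_quadricGraph]
  · simp only [Fintype.card_fin] at hS hT
    exact exists_sub_mem_quadricGraph h2 hm hS hT

theorem pow_three_le_rpow {x y : ℝ} (hx : 0 ≤ x) (hxy : x ^ 4 ≤ y) :
    x ^ 3 ≤ y ^ ((3 : ℝ) / 4) :=
  calc x ^ 3 = (x ^ 4) ^ ((3 : ℝ) / 4) := by
        rw [← Real.rpow_natCast, ← Real.rpow_natCast, ← Real.rpow_mul hx]; norm_num
    _ ≤ y ^ ((3 : ℝ) / 4) := Real.rpow_le_rpow (by positivity) hxy (by norm_num)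

/-- **Theorem.**  For every `ε > 0` there are infinitely many `n` for which there is a
positive integer `s ≤ (2+ε)·n^{3/4}` and an `s`-regular bipartite graph `H` on parts of
size `n` such that no perfect matching in the bipartite complement of `H` is acceptable
for `H`.  Consequently `b(n) < (2+o(1))·n^{3/4}` for infinitely many `n`. -/
theorem bFn_upper_bound : ∀ ε : ℝ, 0 < ε → ∀ N : ℕ, ∃ n : ℕ, N ≤ n ∧
    (∃ s : ℕ, 0 < s ∧ (s : ℝ) ≤ (2 + ε) * (n : ℝ) ^ ((3 : ℝ) / 4) ∧
      ∃ H : Fin n → Fin n → Prop, BipRegular n s H ∧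
        ¬ ∃ σ : Fin n ≃ Fin n, AcceptableMatching n (fun a b => ¬ H a b) H σ) ∧
    (bFn n : ℝ) < (2 + ε) * (n : ℝ) ^ ((3 : ℝ) / 4) := by
  intro ε hε N
  obtain ⟨p, hNp, hp⟩ := Nat.exists_infinite_primes (N + 3)
  have := Fact.mk hp
  have h2 : (2 : ZMod p) ≠ 0 := Ring.two_ne_zero (by rw [ZMod.ringChar_zmod_n]; omega)
  have hex := exists_bipRegular_not_exists_acceptableMatching (ZMod p) h2 (m := 3) (by norm_num)
  rw [ZMod.card] at hex
  obtain ⟨H, hreg, hno⟩ := hex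
  have hp0 : (0 : ℝ) < p := by exact_mod_cast hp.pos
  have hpow : ((p ^ 3 : ℕ) : ℝ) ≤ ((p ^ 3 + p ^ (3 + 1) : ℕ) : ℝ) ^ ((3 : ℝ) / 4) := by
    push_cast
    exact pow_three_le_rpow hp0.le (le_add_of_nonneg_left (by positivity))
  have hlt : ((p ^ 3 : ℕ) : ℝ) < (2 + ε) * ((p ^ 3 + p ^ (3 + 1) : ℕ) : ℝ) ^ ((3 : ℝ) / 4) := by
    have : (0 : ℝ) < ((p ^ 3 : ℕ) : ℝ) := by exact_mod_cast pow_pos hp.pos 3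
    nlinarith
  have hb : bFn (p ^ 3 + p ^ (3 + 1)) ≤ p ^ 3 := Nat.sInf_le ⟨H, hreg, hno⟩
  refine ⟨_, ?_, ⟨p ^ 3, pow_pos hp.pos 3, hlt.le, H, hreg, hno⟩,
    (Nat.cast_le.2 hb).trans_lt hlt⟩
  calc N ≤ p := by omega
    _ ≤ p ^ (3 + 1) := Nat.le_self_pow (by norm_num) p
    _ ≤ p ^ 3 + p ^ (3 + 1) := Nat.le_add_left _ _
end

section
/- For any integer d ≥ 1 and any n of the form n = (q^{d+1} − 1)/(q − 1) with q a prime power, there exists an r-regular bipartite graph on bipartition (A,B) with |A|=|B|=n and r = (q^d − 1)/(q − 1), such that for all 0 < x < n and every subset X ⊆ A with |X| = x, the neighbourhood Γ(X) of X satisfies |Γ(X)| ≥ n − n^{1+1/d}/x. -/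
set_option maxHeartbeats 1000000

open Finset Projectivization Module

section Combinatorics

private lemma alonAux_sum_deg {n r : ℕ} (E : Fin n → Fin n → Prop) [DecidableRel E]
    (hA : ∀ a, (univ.filter fun b => E a b).card = r) (X : Finset (Fin n)) :
    ∑ b : Fin n, (X.filter fun a => E a b).card = X.card * r := by
  simp only [card_filter]
  rw [Finset.sum_comm]
  rw [Finset.sum_congr rfl (fun a _ => ?_), Finset.sum_const, smul_eq_mul]
  rw [← hA a, card_filter]

private lemma alonAux_sum_deg_sq {n r lam : ℕ} (E : Fin n → Fin n → Prop) [DecidableRel E]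
    (hA : ∀ a, (univ.filter fun b => E a b).card = r)
    (hco : ∀ a a' : Fin n, a ≠ a' → (univ.filter fun b => E a b ∧ E a' b).card = lam)
    (X : Finset (Fin n)) :
    ∑ b : Fin n, ((X.filter fun a => E a b).card) ^ 2
      = X.card * (r + (X.card - 1) * lam) := by
  have expand : ∀ b : Fin n, ((X.filter fun a => E a b).card) ^ 2
      = ∑ a ∈ X, ∑ a' ∈ X, if E a b ∧ E a' b then 1 else 0 := by
    intro b
    rw [sq, card_filter, Finset.sum_mul_sum]
    refine Finset.sum_congr rfl fun a _ => Finset.sum_congr rfl fun a' _ => ?_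
    by_cases h1 : E a b <;> by_cases h2 : E a' b <;> simp [h1, h2]
  calc ∑ b : Fin n, ((X.filter fun a => E a b).card) ^ 2
      = ∑ b : Fin n, ∑ a ∈ X, ∑ a' ∈ X, if E a b ∧ E a' b then 1 else 0 :=
        Finset.sum_congr rfl fun b _ => expand b
    _ = ∑ a ∈ X, ∑ a' ∈ X, (univ.filter fun b => E a b ∧ E a' b).card := by
        rw [Finset.sum_comm]
        refine Finset.sum_congr rfl fun a _ => ?_
        rw [Finset.sum_comm]
        exact Finset.sum_congr rfl fun a' _ => (card_filter _ _).symm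
    _ = X.card * (r + (X.card - 1) * lam) := by
        rw [Finset.sum_congr rfl (fun a ha => ?_), Finset.sum_const, smul_eq_mul]
        rw [← Finset.add_sum_erase X _ ha]
        congr 1
        · rw [← hA a]
          exact congrArg Finset.card (Finset.filter_congr fun b _ => by simp)
        · rw [Finset.sum_congr rfl (fun a' ha' => hco a a' (Finset.ne_of_mem_erase ha').symm),
            Finset.sum_const, smul_eq_mul, Finset.card_erase_of_mem ha]

private lemma alonAux_expansion_bound {n q r lam : ℕ} (E : Fin n → Fin n → Prop) [DecidableRel E]
    (hA : ∀ a, (univ.filter fun b => E a b).card = r)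
    (hco : ∀ a a' : Fin n, a ≠ a' → (univ.filter fun b => E a b ∧ E a' b).card = lam)
    (hn : n = q * r + 1) (hr : r = q * lam + 1) (hq : 1 ≤ q)
    (X : Finset (Fin n)) (hx1 : 0 < X.card) (hx2 : X.card < n) :
    ((n : ℝ) - ((univ.filter fun b => ∃ a ∈ X, E a b).card : ℝ)) * (X.card : ℝ)
      ≤ (n : ℝ) * q := by
  classical
  have hx1' : (1 : ℝ) ≤ (X.card : ℝ) := by exact_mod_cast hx1
  have hx2' : (X.card : ℝ) ≤ (n : ℝ) - 1 := by
    have h : X.card + 1 ≤ n := hx2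
    have h' := (Nat.cast_le (α := ℝ)).2 h
    push_cast at h'; linarith
  have hN : (n : ℝ) = q * r + 1 := by rw [hn]; push_cast; ring
  have hR : (r : ℝ) = q * lam + 1 := by rw [hr]; push_cast; ring
  have hQ1 : (1 : ℝ) ≤ (q : ℝ) := by exact_mod_cast hq
  have hL0 : (0 : ℝ) ≤ (lam : ℝ) := Nat.cast_nonneg _
  have hR1 : (1 : ℝ) ≤ (r : ℝ) := by rw [hR]; nlinarith
  have hN0 : (0 : ℝ) < (n : ℝ) := by rw [hN]; nlinarith
  set f : Fin n → ℝ := fun b => ((X.filter fun a => E a b).card : ℝ) with hf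
  have S1 : ∑ b : Fin n, f b = (X.card : ℝ) * r := by
    have h := congrArg (Nat.cast (R := ℝ)) (alonAux_sum_deg E hA X)
    push_cast at h
    simpa [hf] using h
  have S2 : ∑ b : Fin n, (f b) ^ 2 = (X.card : ℝ) * (r + ((X.card : ℝ) - 1) * lam) := by
    have h := congrArg (Nat.cast (R := ℝ)) (alonAux_sum_deg_sq E hA hco X)
    push_cast [Nat.cast_sub (by exact_mod_cast hx1 : 1 ≤ X.card)] at h
    simpa [hf] using h
  set G : Finset (Fin n) := univ.filter fun b => ∃ a ∈ X, E a b with hG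
  set M : Finset (Fin n) := univ.filter fun b => ¬ ∃ a ∈ X, E a b with hM
  have hGMnat : G.card + M.card = n := by
    have h0 := Finset.card_filter_add_card_filter_not
      (s := (univ : Finset (Fin n))) (p := fun b : Fin n => ∃ a ∈ X, E a b)
    simpa [hG, hM] using h0
  have hMG : (M.card : ℝ) + (G.card : ℝ) = (n : ℝ) := by exact_mod_cast by omega
  have hfM : ∀ b ∈ M, f b = 0 := by
    intro b hb
    simp only [hM, mem_filter] at hb
    have he : X.filter (fun a => E a b) = ∅ := by
      rw [Finset.filter_eq_empty_iff]
      intro a ha hab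
      exact hb.2 ⟨a, ha, hab⟩
    simp [hf, he]
  set c : ℝ := (X.card : ℝ) * r / n with hc
  have var_lb : (M.card : ℝ) * c ^ 2 ≤ ∑ b : Fin n, (f b - c) ^ 2 := by
    have h1 : ∑ b ∈ M, (f b - c) ^ 2 ≤ ∑ b : Fin n, (f b - c) ^ 2 :=
      Finset.sum_le_sum_of_subset_of_nonneg (Finset.subset_univ M)
        (fun b _ _ => sq_nonneg _)
    have h2 : ∑ b ∈ M, (f b - c) ^ 2 = M.card * c ^ 2 := by
      rw [Finset.sum_congr rfl
        (fun b hb => by rw [hfM b hb]; ring_nf : ∀ b ∈ M, (f b - c)^2 = c^2),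
        Finset.sum_const, nsmul_eq_mul]
    linarith
  have var_ub : ∑ b : Fin n, (f b - c) ^ 2
      = (X.card : ℝ) * (r + ((X.card : ℝ)-1) * lam) - (X.card : ℝ)^2 * (r:ℝ)^2 / n := by
    have expand : ∑ b : Fin n, (f b - c) ^ 2
        = ∑ b : Fin n, (f b)^2 - 2 * c * ∑ b : Fin n, f b + n * c^2 := by
      rw [Finset.sum_congr rfl
        (fun b _ => by ring : ∀ b ∈ univ, (f b - c)^2 = (f b)^2 - 2*c*f b + c^2)]
      rw [Finset.sum_add_distrib, Finset.sum_sub_distrib, ← Finset.mul_sum, Finset.sum_const,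
        nsmul_eq_mul, Finset.card_univ, Fintype.card_fin]
      try ring
    rw [expand, S1, S2, hc]
    field_simp
    ring
  have key : (n:ℝ) * r + (n:ℝ) * ((X.card:ℝ) - 1) * lam - (X.card:ℝ) * (r:ℝ)^2
      ≤ (q:ℝ) * (r:ℝ)^2 := by
    have hid : (q:ℝ) * ((n:ℝ) * r + (n:ℝ) * ((X.card:ℝ) - 1) * lam - (X.card:ℝ) * (r:ℝ)^2)
        = ((n:ℝ) - X.card) * ((n:ℝ) - r) := by rw [hN, hR]; ring
    have hb1 : (n:ℝ) - X.card ≤ (q:ℝ) * r := by rw [hN]; linarith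
    have hb2 : (n:ℝ) - r ≤ (q:ℝ) * r := by rw [hN]; linarith
    have hb2' : (0:ℝ) ≤ (n:ℝ) - r := by rw [hN]; nlinarith
    have hmm : ((n:ℝ) - X.card) * ((n:ℝ) - r) ≤ ((q:ℝ) * r) * ((q:ℝ) * r) :=
      mul_le_mul hb1 hb2 hb2' (by nlinarith)
    nlinarith
  have main : (M.card : ℝ) * (X.card:ℝ)^2 * (r:ℝ)^2
      ≤ (n:ℝ) * (X.card:ℝ) * ((q:ℝ) * (r:ℝ)^2) := by
    have h3 : (M.card : ℝ) * c^2
        ≤ (X.card:ℝ) * (r + ((X.card:ℝ)-1)*lam) - (X.card:ℝ)^2*(r:ℝ)^2/(n:ℝ) := by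
      rw [← var_ub]; exact var_lb
    have hN0' : (n:ℝ) ≠ 0 := ne_of_gt hN0
    rw [hc] at h3
    have h4 : (M.card : ℝ) * ((X.card:ℝ)*(r:ℝ))^2
        ≤ (n:ℝ)^2 * ((X.card:ℝ) * (r + ((X.card:ℝ)-1)*lam)) - (n:ℝ) * ((X.card:ℝ)^2*(r:ℝ)^2) := by
      have hu : (X.card:ℝ)^2*(r:ℝ)^2/(n:ℝ) * (n:ℝ) = (X.card:ℝ)^2*(r:ℝ)^2 :=
        div_mul_cancel₀ _ hN0'
      have hcc : ((X.card:ℝ) * (r:ℝ) / (n:ℝ))^2 * (n:ℝ)^2 = ((X.card:ℝ)*(r:ℝ))^2 := by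
        rw [div_pow]; exact div_mul_cancel₀ _ (pow_ne_zero 2 hN0')
      have h3n := mul_le_mul_of_nonneg_right h3 (sq_nonneg ((n:ℝ)))
      nlinarith [h3n, hcc, hu]
    have h6 : (n:ℝ) * (X.card:ℝ) * ((n:ℝ)*r + (n:ℝ)*((X.card:ℝ)-1)*lam - (X.card:ℝ)*(r:ℝ)^2)
        ≤ (n:ℝ) * (X.card:ℝ) * ((q:ℝ) * (r:ℝ)^2) :=
      mul_le_mul_of_nonneg_left key (by nlinarith)
    nlinarith [h4]
  have hMx : (M.card : ℝ) * (X.card:ℝ) ≤ (n:ℝ) * q := by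
    have hpos : (0:ℝ) < (X.card:ℝ) * (r:ℝ)^2 := by nlinarith
    have hfin : ((M.card : ℝ) * (X.card:ℝ)) * ((X.card:ℝ) * (r:ℝ)^2)
        ≤ ((n:ℝ) * q) * ((X.card:ℝ) * (r:ℝ)^2) := by nlinarith [main]
    exact le_of_mul_le_mul_right hfin hpos
  have hfin2 : (n:ℝ) - (G.card : ℝ) = (M.card : ℝ) := by linarith
  rw [hfin2]
  exact hMx

end Combinatorics

section Geometry

variable {F V : Type*} [Field F] [Fintype F] [AddCommGroup V] [Module F V]
  [FiniteDimensional F V] [Fintype V]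

private lemma alonAux_proj_count (W : Submodule F V) :
    Nat.card {p : Projectivization F V // p.rep ∈ W} * (Fintype.card F - 1)
      = Fintype.card F ^ (finrank F W) - 1 := by
  classical
  have hbij : Function.Bijective
      (fun pc : {p : Projectivization F V // p.rep ∈ W} × Fˣ =>
        (⟨(pc.2 : F) • (pc.1 : Projectivization F V).rep,
          W.smul_mem _ pc.1.2,
          smul_ne_zero (Units.ne_zero _) (pc.1 : Projectivization F V).rep_nonzero⟩ :
          {v : V // v ∈ W ∧ v ≠ 0})) := by
    constructor
    · rintro ⟨⟨p, hp⟩, c⟩ ⟨⟨p', hp'⟩, c'⟩ h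
      simp only [Subtype.mk.injEq] at h
      have hpp' : p = p' := by
        conv_lhs => rw [← p.mk_rep]
        conv_rhs => rw [← p'.mk_rep]
        rw [Projectivization.mk_eq_mk_iff]
        refine ⟨c⁻¹ * c', ?_⟩
        rw [mul_smul, Units.smul_def c', ← h, ← Units.smul_def, inv_smul_smul]
      subst hpp'
      have hc : (c : F) = (c' : F) := by
        by_contra hne
        have h0 : ((c : F) - c') • p.rep = 0 := by rw [sub_smul, h, sub_self]
        rcases smul_eq_zero.1 h0 with h1 | h2
        · exact hne (by linear_combination h1)
        · exact p.rep_nonzero h2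
      simp [Prod.ext_iff, Units.ext_iff, hc]
    · rintro ⟨v, hvW, hv⟩
      obtain ⟨a, ha⟩ := Projectivization.exists_smul_eq_mk_rep F v hv
      refine ⟨⟨⟨Projectivization.mk F v hv, ?_⟩, a⁻¹⟩, ?_⟩
      · rw [← ha]; exact W.smul_mem _ hvW
      · simp only [Subtype.mk.injEq]
        simp only [← ha, Units.smul_def, smul_smul]
        rw [← Units.val_mul, inv_mul_cancel, Units.val_one, one_smul]
  have hcard := Nat.card_eq_of_bijective _ hbij
  rw [Nat.card_prod] at hcard
  have h1 : Nat.card Fˣ = Fintype.card F - 1 := by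
    rw [Nat.card_eq_fintype_card, Fintype.card_units]
  have h2 : Nat.card {v : V // v ∈ W ∧ v ≠ 0} = Fintype.card F ^ (finrank F W) - 1 := by
    have e : {v : V // v ∈ W ∧ v ≠ 0} ≃ {w : {v : V // v ∈ W} // ¬ ((w : V) = 0)} :=
      (Equiv.subtypeSubtypeEquivSubtypeInter (fun v : V => v ∈ W) (fun v => ¬ (v = 0))).symm
    rw [Nat.card_congr e, Nat.card_eq_fintype_card, Fintype.card_subtype_compl]
    congr 1
    · exact card_eq_pow_finrank (K := F) (V := W)
    · rw [Fintype.card_eq_one_iff_nonempty_unique]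
      exact ⟨⟨⟨⟨0, W.zero_mem⟩, rfl⟩, by rintro ⟨⟨w, hw⟩, (hw0 : w = 0)⟩; subst hw0; rfl⟩⟩
  rw [← h2, ← hcard, h1]

private lemma alonAux_mem_ann_singleton (v : V) (φ : Module.Dual F V) :
    φ ∈ (Submodule.span F {v}).dualAnnihilator ↔ φ v = 0 := by
  rw [Submodule.mem_dualAnnihilator]
  constructor
  · intro h; exact h v (Submodule.mem_span_singleton_self v)
  · intro h w hw
    obtain ⟨a, rfl⟩ := Submodule.mem_span_singleton.1 hw
    simp [h]

private lemma alonAux_count_total {m : ℕ} (hV : finrank F V = m) :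
    Nat.card (Projectivization F V) * (Fintype.card F - 1) = Fintype.card F ^ m - 1 := by
  have e : {p : Projectivization F V // p.rep ∈ (⊤ : Submodule F V)} ≃ Projectivization F V :=
    Equiv.subtypeUnivEquiv (fun p => Submodule.mem_top)
  rw [← hV, ← finrank_top F V, ← alonAux_proj_count (⊤ : Submodule F V), Nat.card_congr e]

private lemma alonAux_count_hyp {m : ℕ} (h : Module.Dual F V) (hh : h ≠ 0)
    (hV : finrank F V = m + 1) :
    Nat.card {p : Projectivization F V // h p.rep = 0} * (Fintype.card F - 1)
      = Fintype.card F ^ m - 1 := by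
  have e : {p : Projectivization F V // h p.rep = 0}
      ≃ {p : Projectivization F V // p.rep ∈ LinearMap.ker h} :=
    Equiv.subtypeEquivRight (fun p => (LinearMap.mem_ker (f := h)).symm)
  have hrange : LinearMap.range h = ⊤ := by
    rw [LinearMap.range_eq_top]
    obtain ⟨v0, hv0⟩ := DFunLike.ne_iff.1 hh
    simp only [LinearMap.zero_apply] at hv0
    intro c
    exact ⟨(c * (h v0)⁻¹) • v0, by
      rw [map_smul, smul_eq_mul, mul_assoc, inv_mul_cancel₀ hv0, mul_one]⟩
  have hker : finrank F (LinearMap.ker h) = m := by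
    have h1 := LinearMap.finrank_range_add_finrank_ker h
    rw [hrange, finrank_top, hV] at h1
    have h2 : finrank F F = 1 := Module.finrank_self F
    omega
  rw [Nat.card_congr e, alonAux_proj_count, hker]

private lemma alonAux_count_point {m : ℕ} [Fintype (Module.Dual F V)] (v : V) (hv : v ≠ 0)
    (hV : finrank F V = m + 1) :
    Nat.card {h : Projectivization F (Module.Dual F V) // h.rep v = 0}
      * (Fintype.card F - 1) = Fintype.card F ^ m - 1 := by
  have e : {h : Projectivization F (Module.Dual F V) // h.rep v = 0}
      ≃ {h : Projectivization F (Module.Dual F V) //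
          h.rep ∈ (Submodule.span F {v}).dualAnnihilator} :=
    Equiv.subtypeEquivRight (fun h => (alonAux_mem_ann_singleton v h.rep).symm)
  have hfr : finrank F ((Submodule.span F ({v} : Set V)).dualAnnihilator) = m := by
    have h1 : finrank F (V ⧸ Submodule.span F ({v} : Set V))
        = finrank F ((Submodule.span F ({v} : Set V)).dualAnnihilator) :=
      LinearEquiv.finrank_eq (Subspace.quotEquivAnnihilator _)
    have h2 := Submodule.finrank_quotient_add_finrank (Submodule.span F ({v} : Set V))
    rw [hV] at h2
    rw [finrank_span_singleton hv] at h2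
    omega
  rw [Nat.card_congr e, alonAux_proj_count, hfr]

private lemma alonAux_count_pair {m : ℕ} [Fintype (Module.Dual F V)] (v w : V)
    (hli : LinearIndependent F ![v, w]) (hV : finrank F V = m + 2) :
    Nat.card {h : Projectivization F (Module.Dual F V) // h.rep v = 0 ∧ h.rep w = 0}
      * (Fintype.card F - 1) = Fintype.card F ^ m - 1 := by
  have hrange : Set.range ![v, w] = {v, w} := by
    ext u; simp [Fin.exists_fin_two, or_comm]
  have hmem : ∀ φ : Module.Dual F V,
      φ ∈ (Submodule.span F ({v, w} : Set V)).dualAnnihilator ↔ φ v = 0 ∧ φ w = 0 := by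
    intro φ
    have hsp : Submodule.span F ({v, w} : Set V)
        = Submodule.span F {v} ⊔ Submodule.span F {w} := by
      rw [← Submodule.span_union, Set.singleton_union]
    rw [hsp, Submodule.dualAnnihilator_sup_eq, Submodule.mem_inf,
      alonAux_mem_ann_singleton, alonAux_mem_ann_singleton]
  have e : {h : Projectivization F (Module.Dual F V) // h.rep v = 0 ∧ h.rep w = 0}
      ≃ {h : Projectivization F (Module.Dual F V) //
          h.rep ∈ (Submodule.span F ({v, w} : Set V)).dualAnnihilator} :=
    Equiv.subtypeEquivRight (fun h => (hmem h.rep).symm)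
  have hspan2 : finrank F (Submodule.span F ({v, w} : Set V)) = 2 := by
    have hh := finrank_span_eq_card hli
    rw [hrange] at hh
    simpa using hh
  have hfr : finrank F ((Submodule.span F ({v, w} : Set V)).dualAnnihilator) = m := by
    have h1 : finrank F (V ⧸ Submodule.span F ({v, w} : Set V))
        = finrank F ((Submodule.span F ({v, w} : Set V)).dualAnnihilator) :=
      LinearEquiv.finrank_eq (Subspace.quotEquivAnnihilator _)
    have h2 := Submodule.finrank_quotient_add_finrank (Submodule.span F ({v, w} : Set V))
    rw [hV, hspan2] at h2
    omega
  rw [Nat.card_congr e, alonAux_proj_count, hfr]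

end Geometry

/-- **Theorem (Alon).**  For any integer `d ≥ 1` and `n = (q^{d+1} − 1)/(q − 1)` with `q`
a prime power, there is an `r`-regular bipartite graph with `r = (q^d − 1)/(q − 1)` such
that for all `0 < x < n` and any `X ⊆ A` with `|X| = x` we have
`|Γ(X)| ≥ n − n^{1+1/d}/x`. -/
theorem alon_expander (d q n r : ℕ) (hd : 1 ≤ d) (hq : IsPrimePow q)
    (hn : n = (q ^ (d + 1) - 1) / (q - 1)) (hr : r = (q ^ d - 1) / (q - 1)) :
    ∃ E : Fin n → Fin n → Prop, BipRegular n r E ∧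
      ∀ X : Set (Fin n), 0 < X.ncard → X.ncard < n →
        (n : ℝ) - (n : ℝ) ^ (1 + 1 / (d : ℝ)) / (X.ncard : ℝ) ≤
          ({b : Fin n | ∃ a ∈ X, E a b}.ncard : ℝ) := by
  classical
  obtain ⟨p, k, hp, hk, hpk⟩ := hq
  haveI : Fact p.Prime := ⟨hp.nat_prime⟩
  set F := GaloisField p k with hF
  have hq2 : 2 ≤ q := by
    rw [← hpk]
    calc 2 ≤ p := hp.nat_prime.two_le
    _ ≤ p ^ k := Nat.le_self_pow (by omega) p
  have hFcard' : Nat.card F = q := by rw [GaloisField.card p k (by omega)]; exact hpk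
  haveI : Finite F := Nat.finite_of_card_ne_zero (by omega)
  haveI : Fintype F := Fintype.ofFinite F
  have hFq : Fintype.card F = q := by rw [← Nat.card_eq_fintype_card, hFcard']
  set V := Fin (d + 1) → F with hV
  have hfrV : finrank F V = d + 1 := Module.finrank_fin_fun F
  haveI : Finite (Module.Dual F V) :=
    Finite.of_injective (fun φ => (φ : V → F)) DFunLike.coe_injective
  haveI : Fintype (Module.Dual F V) := Fintype.ofFinite _
  have hfrD : finrank F (Module.Dual F V) = d + 1 := by
    rw [Subspace.dual_finrank_eq, hfrV]
  -- numeric identities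
  set lam := (q ^ (d - 1) - 1) / (q - 1) with hlam
  have hdvd : ∀ m : ℕ, (q - 1) ∣ q ^ m - 1 := fun m => by
    simpa using Nat.sub_dvd_pow_sub_pow q 1 m
  have hn1 : n * (q - 1) = q ^ (d + 1) - 1 := by rw [hn]; exact Nat.div_mul_cancel (hdvd _)
  have hr1 : r * (q - 1) = q ^ d - 1 := by rw [hr]; exact Nat.div_mul_cancel (hdvd _)
  have hl1 : lam * (q - 1) = q ^ (d - 1) - 1 := by rw [hlam]; exact Nat.div_mul_cancel (hdvd _)
  have hqpow : ∀ m : ℕ, 1 ≤ q ^ m := fun m => Nat.one_le_pow _ _ (by omega)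
  have c1 : (n : ℤ) * ((q : ℤ) - 1) = (q : ℤ) ^ (d + 1) - 1 := by
    have := hn1; zify [hqpow (d+1), show 1 ≤ q by omega] at this; exact this
  have c2 : (r : ℤ) * ((q : ℤ) - 1) = (q : ℤ) ^ d - 1 := by
    have := hr1; zify [hqpow d, show 1 ≤ q by omega] at this; exact this
  have c3 : (lam : ℤ) * ((q : ℤ) - 1) = (q : ℤ) ^ (d - 1) - 1 := by
    have := hl1; zify [hqpow (d-1), show 1 ≤ q by omega] at this; exact this
  have hqd : (q : ℤ) ^ d = (q : ℤ) ^ (d - 1) * q := by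
    rw [← pow_succ, Nat.sub_add_cancel hd]
  have hq1z : ((q : ℤ) - 1) ≠ 0 := by
    have : (2 : ℤ) ≤ (q : ℤ) := by exact_mod_cast hq2
    omega
  have idn : n = q * r + 1 := by
    have hz : ((n : ℤ) - ((q : ℤ) * r + 1)) * ((q : ℤ) - 1) = 0 := by
      linear_combination c1 - (q : ℤ) * c2
    have := (mul_eq_zero.1 hz).resolve_right hq1z
    have h' : (n : ℤ) = (q : ℤ) * r + 1 := by linarith
    exact_mod_cast h'
  have idr : r = q * lam + 1 := by
    have hz : ((r : ℤ) - ((q : ℤ) * lam + 1)) * ((q : ℤ) - 1) = 0 := by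
      linear_combination c2 - (q : ℤ) * c3 + hqd
    have := (mul_eq_zero.1 hz).resolve_right hq1z
    have h' : (r : ℤ) = (q : ℤ) * lam + 1 := by linarith
    exact_mod_cast h'
  have idnr : n = q ^ d + r := by
    have hz : ((n : ℤ) - ((q : ℤ) ^ d + r)) * ((q : ℤ) - 1) = 0 := by
      linear_combination c1 - c2
    have := (mul_eq_zero.1 hz).resolve_right hq1z
    have h' : (n : ℤ) = (q : ℤ) ^ d + r := by linarith
    exact_mod_cast h'
  have hqdn : q ^ d ≤ n := by omega
  have hr1' : 1 ≤ r := by omega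
  have hn1' : 1 ≤ n := by omega
  have hq10 : 0 < q - 1 := by omega
  -- cardinalities of the projective spaces
  haveI : Finite {v : V // v ≠ 0} := Subtype.finite
  haveI : Finite (Projectivization F V) := Quotient.finite _
  haveI : Fintype (Projectivization F V) := Fintype.ofFinite _
  haveI : Finite {v : Module.Dual F V // v ≠ 0} := Subtype.finite
  haveI : Finite (Projectivization F (Module.Dual F V)) := Quotient.finite _
  haveI : Fintype (Projectivization F (Module.Dual F V)) := Fintype.ofFinite _
  have hPcard : Nat.card (Projectivization F V) = n := by
    have hc := alonAux_count_total (F := F) (V := V) hfrV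
    rw [hFq] at hc
    exact Nat.eq_of_mul_eq_mul_right hq10 (hc.trans hn1.symm)
  have hHcard : Nat.card (Projectivization F (Module.Dual F V)) = n := by
    have hc := alonAux_count_total (F := F) (V := Module.Dual F V) hfrD
    rw [hFq] at hc
    exact Nat.eq_of_mul_eq_mul_right hq10 (hc.trans hn1.symm)
  -- the equivalences with `Fin n`
  let eA : Fin n ≃ Projectivization F V :=
    (Fintype.equivFinOfCardEq (by rw [← Nat.card_eq_fintype_card, hPcard])).symm
  let eB : Fin n ≃ Projectivization F (Module.Dual F V) :=
    (Fintype.equivFinOfCardEq (by rw [← Nat.card_eq_fintype_card, hHcard])).symm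
  -- the incidence relation
  refine ⟨fun i j => (eB j).rep ((eA i).rep) = 0, ?_, ?_⟩
  case _ =>
    constructor
    · intro a
      have e : {b : Fin n // (eB b).rep ((eA a).rep) = 0}
          ≃ {h : Projectivization F (Module.Dual F V) // h.rep ((eA a).rep) = 0} :=
        Equiv.subtypeEquiv eB (fun j => Iff.rfl)
      have hc := alonAux_count_point (F := F) (V := V) (m := d)
        ((eA a).rep) ((eA a).rep_nonzero) hfrV
      rw [hFq] at hc
      have : Nat.card {b : Fin n // (eB b).rep ((eA a).rep) = 0} = r := by
        rw [Nat.card_congr e]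
        exact Nat.eq_of_mul_eq_mul_right hq10 (hc.trans hr1.symm)
      rw [← Nat.card_coe_set_eq]
      exact this
    · intro b
      have e : {a : Fin n // (eB b).rep ((eA a).rep) = 0}
          ≃ {p : Projectivization F V // (eB b).rep p.rep = 0} :=
        Equiv.subtypeEquiv eA (fun i => Iff.rfl)
      have hc := alonAux_count_hyp (F := F) (V := V) (m := d)
        ((eB b).rep) ((eB b).rep_nonzero) hfrV
      rw [hFq] at hc
      have : Nat.card {a : Fin n // (eB b).rep ((eA a).rep) = 0} = r := by
        rw [Nat.card_congr e]
        exact Nat.eq_of_mul_eq_mul_right hq10 (hc.trans hr1.symm)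
      rw [← Nat.card_coe_set_eq]
      exact this
  case _ =>
    intro X hx1 hx2
    -- design parameters in filter form
    have degA : ∀ a : Fin n, (univ.filter fun b : Fin n => (eB b).rep ((eA a).rep) = 0).card = r := by
      intro a
      have e : {b : Fin n // (eB b).rep ((eA a).rep) = 0}
          ≃ {h : Projectivization F (Module.Dual F V) // h.rep ((eA a).rep) = 0} :=
        Equiv.subtypeEquiv eB (fun j => Iff.rfl)
      have hc := alonAux_count_point (F := F) (V := V) (m := d)
        ((eA a).rep) ((eA a).rep_nonzero) hfrV
      rw [hFq] at hc
      rw [← Fintype.card_subtype, ← Nat.card_eq_fintype_card, Nat.card_congr e]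
      exact Nat.eq_of_mul_eq_mul_right hq10 (hc.trans hr1.symm)
    have codeg : ∀ a a' : Fin n, a ≠ a' →
        (univ.filter fun b : Fin n =>
          (eB b).rep ((eA a).rep) = 0 ∧ (eB b).rep ((eA a').rep) = 0).card = lam := by
      intro a a' hne
      have hAB : eA a ≠ eA a' := fun h => hne (eA.injective h)
      have hli : LinearIndependent F ![(eA a).rep, (eA a').rep] := by
        rw [LinearIndependent.pair_iff' ((eA a).rep_nonzero)]
        intro t ht
        have hmk : Projectivization.mk F ((eA a').rep) ((eA a').rep_nonzero)
            = Projectivization.mk F ((eA a).rep) ((eA a).rep_nonzero) :=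
          (Projectivization.mk_eq_mk_iff' F _ _ _ _).2 ⟨t, ht⟩
        rw [Projectivization.mk_rep, Projectivization.mk_rep] at hmk
        exact hAB hmk.symm
      have e : {b : Fin n // (eB b).rep ((eA a).rep) = 0 ∧ (eB b).rep ((eA a').rep) = 0}
          ≃ {h : Projectivization F (Module.Dual F V) //
              h.rep ((eA a).rep) = 0 ∧ h.rep ((eA a').rep) = 0} :=
        Equiv.subtypeEquiv eB (fun j => Iff.rfl)
      have hc := alonAux_count_pair (F := F) (V := V) (m := d - 1)
        ((eA a).rep) ((eA a').rep) hli (by rw [hfrV]; omega)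
      rw [hFq] at hc
      rw [← Fintype.card_subtype, ← Nat.card_eq_fintype_card, Nat.card_congr e]
      exact Nat.eq_of_mul_eq_mul_right hq10 (hc.trans hl1.symm)
    -- apply the expansion bound
    set Xf := X.toFinset with hXf
    have hXc : Xf.card = X.ncard := (Set.ncard_eq_toFinset_card' X).symm
    have bound := alonAux_expansion_bound (n := n) (q := q) (r := r) (lam := lam)
      (fun i j => (eB j).rep ((eA i).rep) = 0) degA codeg idn idr (by omega) Xf
      (by rw [hXc]; exact hx1) (by rw [hXc]; exact hx2)
    have hGset : ({b : Fin n | ∃ a ∈ X, (eB b).rep ((eA a).rep) = 0}.ncard : ℕ)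
        = (univ.filter fun b : Fin n => ∃ a ∈ Xf, (eB b).rep ((eA a).rep) = 0).card := by
      rw [Set.ncard_eq_toFinset_card']
      congr 1
      ext b
      simp [Set.mem_toFinset, hXf]
    rw [hXc] at bound
    rw [← hGset] at bound
    -- real-number conclusion
    have hx0R : (0 : ℝ) < (X.ncard : ℝ) := by exact_mod_cast hx1
    have hn0R : (0 : ℝ) < (n : ℝ) := by exact_mod_cast hn1'
    have hd0 : (0 : ℝ) < (d : ℝ) := by exact_mod_cast hd
    have hqdnR : ((q : ℝ)) ^ (d : ℕ) ≤ (n : ℝ) := by exact_mod_cast hqdn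
    have hqle : (q : ℝ) ≤ (n : ℝ) ^ (1 / (d : ℝ)) := by
      have h1 := Real.rpow_le_rpow (by positivity : (0:ℝ) ≤ ((q:ℝ))^(d:ℕ)) hqdnR
        (by positivity : (0:ℝ) ≤ 1 / (d : ℝ))
      rwa [← Real.rpow_natCast (q : ℝ) d, ← Real.rpow_mul (by positivity),
        mul_one_div, div_self (ne_of_gt hd0), Real.rpow_one] at h1
    have hpow : (n : ℝ) ^ (1 + 1 / (d : ℝ)) = (n : ℝ) * (n : ℝ) ^ (1 / (d : ℝ)) := by
      rw [Real.rpow_add hn0R, Real.rpow_one]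
    have hNQ : (n : ℝ) * q ≤ (n : ℝ) ^ (1 + 1 / (d : ℝ)) := by
      rw [hpow]
      exact mul_le_mul_of_nonneg_left hqle (le_of_lt hn0R)
    have hfinal : (n : ℝ) - ({b : Fin n | ∃ a ∈ X, (eB b).rep ((eA a).rep) = 0}.ncard : ℝ)
        ≤ (n : ℝ) ^ (1 + 1 / (d : ℝ)) / (X.ncard : ℝ) := by
      rw [le_div_iff₀ hx0R]
      calc ((n : ℝ) - _) * (X.ncard : ℝ) ≤ (n : ℝ) * q := bound
        _ ≤ _ := hNQ
    linarith
end

section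
/- For every n ≥ 7 there exist a 2-regular bipartite graph G and a 1-regular bipartite graph H on a common bipartition (A,B) with |A|=|B|=n and E(G)∩E(H)=∅, such that no perfect matching in G is acceptable for H. -/
theorem Fin.val_sub_one_eq_ite {n : ℕ} [NeZero n] (a : Fin n) :
    (a - 1).val = if a.val = 0 then n - 1 else a.val - 1 := by
  obtain ⟨m, rfl⟩ := Nat.exists_eq_succ_of_ne_zero (NeZero.ne n)
  by_cases ha : a = 0 <;> simp [Fin.coe_sub_one, ha, Fin.val_eq_zero_iff]

section

variable {n : ℕ}

def permBipGraph (f : Equiv.Perm (Fin n)) : Fin n → Fin n → Prop := fun a b => b = f a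

theorem bipRegular_permBipGraph (f : Equiv.Perm (Fin n)) : BipRegular n 1 (permBipGraph f) := by
  constructor
  · intro a
    exact Set.ncard_singleton (f a)
  · intro b
    have hs : {a | permBipGraph f a b} = {f.symm b} := by
      ext a
      simp [permBipGraph, Equiv.eq_symm_apply, eq_comm]
    rw [hs, Set.ncard_singleton]

variable [NeZero n]

variable (n) in
def cycleBipGraph : Fin n → Fin n → Prop := fun a b => b = a ∨ b = a - 1

theorem bipRegular_cycleBipGraph (hn : n ≠ 1) : BipRegular n 2 (cycleBipGraph n) := by
  have h₁ : (1 : Fin n) ≠ 0 := fun h => hn (Fin.one_eq_zero_iff.mp h)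
  constructor
  · intro a
    have hs : {b | cycleBipGraph n a b} = {a, a - 1} := rfl
    rw [hs, Set.ncard_pair fun h => h₁ (sub_eq_self.mp h.symm)]
  · intro b
    have hs : {a | cycleBipGraph n a b} = {b, b + 1} := by
      ext a
      simp [cycleBipGraph, eq_sub_iff_add_eq, eq_comm]
    rw [hs, Set.ncard_pair fun h => h₁ (left_eq_add.mp h)]

open Fin.NatCast in
theorem forall_eq_or_forall_eq_sub_one_of_cycleBipGraph {σ : Fin n ≃ Fin n}
    (h : ∀ a, cycleBipGraph n a (σ a)) : (∀ a, σ a = a) ∨ (∀ a, σ a = a - 1) := by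
  by_cases hfix : ∃ a, σ a = a
  · obtain ⟨a₀, ha₀⟩ := hfix
    have step (a : Fin n) (ha : σ a = a) : σ (a + 1) = a + 1 := by
      rcases h (a + 1) with h' | h'
      · exact h'
      · rw [add_sub_cancel_right] at h'
        rw [σ.injective (h'.trans ha.symm), ha]
    have shift (k : ℕ) : σ (a₀ + k) = a₀ + k := by
      induction k with
      | zero => simpa using ha₀
      | succ k ih => simpa [add_assoc] using step _ ih
    left
    intro b
    simpa using shift (b - a₀).val
  · exact Or.inr fun a => (h a).resolve_left (not_exists.mp hfix a)

theorem not_exists_acceptableMatching_of_twoCycles (f : Equiv.Perm (Fin n))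
    {a a' b b' : Fin n} (ha : a ≠ a') (hfa : f a = a') (hfa' : f a' = a)
    (hb : b ≠ b') (hfb : f b = b' - 1) (hfb' : f b' = b - 1) :
    ¬ ∃ σ, AcceptableMatching n (cycleBipGraph n) (permBipGraph f) σ := by
  rintro ⟨σ, hσG, hσH⟩
  rcases forall_eq_or_forall_eq_sub_one_of_cycleBipGraph hσG with hσ | hσ
  · exact hσH a a' ha ⟨(hσ a').trans hfa.symm, (hσ a).trans hfa'.symm⟩
  · exact hσH b b' hb ⟨(hσ b').trans hfb.symm, (hσ b).trans hfb'.symm⟩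

end

/-- The permutation `(0 2) (3 n-1) (1 4 5 ⋯ n-2)` of `{0, …, n - 1}`; composed with `(· + 1)`
it swaps `0` and `3`. -/
def blockingFun (n x : ℕ) : ℕ :=
  if x = 0 then 2 else if x = 2 then 0 else if x = 3 then n - 1 else if x = n - 1 then 3
  else if x = n - 2 then 1 else if x = 1 then 4 else x + 1

section

variable {n : ℕ} (hn : 7 ≤ n)
include hn

theorem blockingFun_lt {x : ℕ} (hx : x < n) : blockingFun n x < n := by
  unfold blockingFun; split_ifs <;> omega

theorem blockingFun_injOn : Set.InjOn (blockingFun n) (Set.Iio n) := by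
  intro x hx y hy h
  simp only [Set.mem_Iio] at hx hy
  unfold blockingFun at h; split_ifs at h <;> omega

noncomputable def blockingPerm : Equiv.Perm (Fin n) :=
  Equiv.ofBijective (fun a => ⟨blockingFun n a, blockingFun_lt hn a.isLt⟩) <|
    Finite.injective_iff_bijective.mp fun a b h =>
      Fin.ext (blockingFun_injOn hn a.isLt b.isLt (Fin.val_eq_of_eq h))

theorem blockingPerm_val (a : Fin n) : (blockingPerm hn a).val = blockingFun n a := rfl

theorem not_cycleBipGraph_blockingPerm [NeZero n] (a : Fin n) :
    ¬ cycleBipGraph n a (blockingPerm hn a) := by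
  simp only [cycleBipGraph, Fin.ext_iff, blockingPerm_val, Fin.val_sub_one_eq_ite, blockingFun]
  split_ifs <;> omega

end

/-- **Remark.**  For every `n ≥ 7` there exist a 2-regular bipartite graph `G` and a
1-regular bipartite graph `H` on a common bipartition with parts of size `n`, with
disjoint edge sets, such that no perfect matching in `G` is acceptable for `H`. -/
theorem two_regular_one_regular_no_acceptable_matching (n : ℕ) (hn : 7 ≤ n) :
    ∃ G H : Fin n → Fin n → Prop, BipRegular n 2 G ∧ BipRegular n 1 H ∧
      (∀ a b : Fin n, ¬ (G a b ∧ H a b)) ∧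
      ¬ ∃ σ : Fin n ≃ Fin n, AcceptableMatching n G H σ := by
  have : NeZero n := ⟨by omega⟩
  refine ⟨cycleBipGraph n, permBipGraph (blockingPerm hn), bipRegular_cycleBipGraph (by omega),
    bipRegular_permBipGraph _, ?_, ?_⟩
  · rintro a b ⟨hG, rfl⟩
    exact not_cycleBipGraph_blockingPerm hn a hG
  · refine not_exists_acceptableMatching_of_twoCycles (blockingPerm hn)
      (a := ⟨0, by omega⟩) (a' := ⟨2, by omega⟩) (b := ⟨0, by omega⟩) (b' := ⟨3, by omega⟩)
      (by simp) (Fin.ext rfl) (Fin.ext rfl) (by simp) (Fin.ext ?_) (Fin.ext ?_) <;>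
    (rw [Fin.val_sub_one_eq_ite]; rfl)
end

section
/- Let x = (x₁,…,x_k) be a vector of positive integers with x₁+⋯+x_k = r and let n ≥ r. If F ⊆ [n]^(r) is a family such that the complete graph K_n has no x-acceptable Hamilton cycle with respect to F, then c(x)·x₁!·x₂!⋯x_k!·(n−r+k−1)! · |F| ≥ (n−1)!. In particular m(x,n) ≥ (n−1)! / (c(x)·x₁!⋯x_k!·(n−r+k−1)!). -/
/-- A Hamilton cycle in the complete graph `K_n` is modelled as a cyclic ordering of the
vertex set, i.e. a bijection `c : ZMod n ≃ Fin n`; the vertices of the cycle in cyclic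
order are `c 0, c 1, …, c (n-1)`.  `cycInterval c t x` is the interval
`{c (t+1), c (t+2), …, c (t+x)}` of `x` consecutive vertices of the cycle. -/
def cycInterval {n : ℕ} (c : ZMod n ≃ Fin n) (t : ZMod n) (x : ℕ) : Finset (Fin n) :=
  (Finset.range x).image fun i : ℕ => c (t + (i : ZMod n) + 1)

/-- Given a vector `x = (x₁, …, x_k)` of positive integers and a family `F` of subsets
of the vertex set, a Hamilton cycle `c` of `K_n` is `x`-*acceptable* for `F` if there
do not exist `t₁, …, t_k` such that the union
`⋃ i, {c (tᵢ+1), …, c (tᵢ+xᵢ)}` is an element of `F`. -/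
def IsXAcceptable {n k : ℕ} (x : Fin k → ℕ) (F : Set (Finset (Fin n)))
    (c : ZMod n ≃ Fin n) : Prop :=
  ¬ ∃ t : Fin k → ZMod n,
      (Finset.univ.biUnion fun i : Fin k => cycInterval c (t i) (x i)) ∈ F

/-- `mxn x n` is the size of the smallest family `F` of `r`-element subsets of `[n]`
(where `r = x₁ + ⋯ + x_k`) such that `K_n` has no `x`-acceptable Hamilton cycle with
respect to `F`. -/
noncomputable def mxn {k : ℕ} (x : Fin k → ℕ) (n : ℕ) : ℕ :=
  sInf {m : ℕ | ∃ F : Set (Finset (Fin n)),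
    (∀ A ∈ F, A.card = ∑ i : Fin k, x i) ∧ F.ncard = m ∧
    ∀ c : ZMod n ≃ Fin n, ¬ IsXAcceptable x F c}

/-- `cX x r` is the number of unordered partitions of an `r`-element set into `k` parts
of sizes `x₁, x₂, …, x_k` (a partition is recorded as the finite set of its blocks, and
the multiset of block sizes must equal the multiset `{x₁, …, x_k}`). -/
noncomputable def cX {k : ℕ} (x : Fin k → ℕ) (r : ℕ) : ℕ :=
  Set.ncard {P : Finset (Finset (Fin r)) |
    (∀ A ∈ P, A.Nonempty) ∧
    (∀ A ∈ P, ∀ B ∈ P, A ≠ B → Disjoint A B) ∧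
    P.biUnion id = Finset.univ ∧
    P.val.map Finset.card = Finset.univ.val.map x}


/-!
Double counting over the `n!` cyclic orders `c`. If `c` is not `x`-acceptable, a witness
`t` gives `k` intervals of lengths `xᵢ` whose union lies in `F` and so has exactly
`r = ∑ xᵢ` elements; hence the intervals are pairwise disjoint and form a partition `P` of
type `x` of a set of `F`. There are at most `|F| · c(x)` such partitions. Conversely, complete
`P` by singletons to a partition of the vertex set into `m = k + n - r` blocks. A cyclic order
in which every block is an interval is determined by the position `s` where the block of
vertex `0` starts together with the list `c s, c (s+1), …, c (s+n-1)`, and this list is a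
concatenation of the `m` blocks, each internally ordered, with the block of `0` first: at most
`n · (m - 1)! · ∏ xᵢ!` cyclic orders. Hence `n! ≤ |F| · c(x) · n · (m - 1)! · ∏ xᵢ!`.
-/

open Finset Nat

namespace List

variable {α : Type*}

theorem IsInfix.of_append_left {l l' t : List α} (h : l' <:+: l ++ t) (hl : ∀ a ∈ l', a ∉ l) :
    l' <:+: t := by
  obtain ⟨s, u, h⟩ := h
  rw [append_assoc, append_eq_append_iff] at h
  rcases h with ⟨as, rfl, hs⟩ | ⟨bs, rfl, rfl⟩
  · rcases as with _ | ⟨b, as⟩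
    · exact ⟨[], u, by simpa using hs⟩
    · rcases l' with _ | ⟨a, l'⟩
      · exact nil_infix
      · obtain rfl : a = b := (cons_eq_cons.mp hs).1
        exact absurd (by simp) (hl a mem_cons_self)
  · exact ⟨bs, u, by simp⟩

variable [DecidableEq α]

def IsBlockArrangement (𝒯 : Finset (Finset α)) (L : List α) : Prop :=
  L.Nodup ∧ L.toFinset = 𝒯.biUnion id ∧ ∀ T ∈ 𝒯, ∃ l : List α, l.toFinset = T ∧ l <:+: L

variable {𝒯 : Finset (Finset α)} {T : Finset α} {L l t : List α}

theorem IsBlockArrangement.exists_toFinset_take_eq (hL : IsBlockArrangement 𝒯 L)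
    (h𝒯 : 𝒯.Nonempty) : ∃ T ∈ 𝒯, (L.take #T).toFinset = T := by
  rcases L with _ | ⟨a, L⟩
  · obtain ⟨T, hT⟩ := h𝒯
    refine ⟨T, hT, ?_⟩
    have := hL.2.1 ▸ Finset.subset_biUnion_of_mem id hT
    simpa [Finset.subset_empty, eq_comm] using this
  · obtain ⟨T, hT, haT⟩ := Finset.mem_biUnion.mp (hL.2.1 ▸ by simp : a ∈ 𝒯.biUnion id)
    obtain ⟨l, rfl, s, u, hsu⟩ := hL.2.2 T hT
    refine ⟨_, hT, ?_⟩
    have hnodup := hL.1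
    rcases s with _ | ⟨b, s⟩
    · rw [← hsu, nil_append] at hnodup ⊢
      rw [toFinset_card_of_nodup (nodup_append.mp hnodup).1, take_left]
    -- the head `a` would occur both in `s` and in the block `l`
    · obtain ⟨rfl, -⟩ := cons_eq_cons.mp hsu
      rw [← hsu] at hnodup
      simp only [cons_append, nodup_cons, mem_append] at hnodup
      exact absurd (Or.inl (Or.inr (by simpa using haT))) hnodup.1

theorem IsBlockArrangement.of_append (hL : IsBlockArrangement 𝒯 (l ++ t))
    (h𝒯 : (𝒯 : Set (Finset α)).PairwiseDisjoint id) (hT : T ∈ 𝒯) (hl : l.toFinset = T) :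
    l.Nodup ∧ IsBlockArrangement (𝒯.erase T) t := by
  obtain ⟨hnodup, hcover, hblocks⟩ := hL
  obtain ⟨hl_nodup, ht_nodup, hlt⟩ := nodup_append.mp hnodup
  have hdisj : ∀ T' ∈ 𝒯.erase T, ∀ a ∈ T', a ∉ l := fun T' hT' a haT' hal =>
    Finset.disjoint_left.mp (h𝒯 (Finset.mem_of_mem_erase hT') hT (Finset.ne_of_mem_erase hT'))
      haT' (hl ▸ mem_toFinset.mpr hal)
  refine ⟨hl_nodup, ht_nodup, ?_, fun T' hT' => ?_⟩
  · ext a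
    simp only [mem_toFinset, Finset.mem_biUnion, id]
    constructor
    · intro hat
      obtain ⟨T', hT', haT'⟩ := Finset.mem_biUnion.mp (hcover ▸ by simp [hat] : a ∈ 𝒯.biUnion id)
      refine ⟨T', Finset.mem_erase.mpr ⟨?_, hT'⟩, haT'⟩
      rintro rfl
      exact hlt a (by simpa [← hl] using haT') a hat rfl
    · rintro ⟨T', hT', haT'⟩
      have : a ∈ (l ++ t).toFinset :=
        hcover ▸ Finset.mem_biUnion.mpr ⟨T', Finset.mem_of_mem_erase hT', haT'⟩
      simpa [hdisj T' hT' a haT'] using this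
  · obtain ⟨l', rfl, hl'⟩ := hblocks T' (Finset.mem_of_mem_erase hT')
    exact ⟨l', rfl, hl'.of_append_left fun a ha => hdisj _ hT' a (by simpa using ha)⟩

end List

namespace Finset

open List

variable {α : Type*} [DecidableEq α]

noncomputable def nodupLists (T : Finset α) : Finset (List α) := T.toList.permutations.toFinset

theorem mem_nodupLists {T : Finset α} {l : List α} :
    l ∈ nodupLists T ↔ l.Nodup ∧ l.toFinset = T := by
  rw [nodupLists, List.mem_toFinset, List.mem_permutations]
  constructor
  · intro h
    exact ⟨h.nodup_iff.mpr T.nodup_toList, by simpa using List.toFinset_eq_of_perm _ _ h⟩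
  · rintro ⟨hl, rfl⟩
    exact List.perm_of_nodup_nodup_toFinset_eq hl (nodup_toList _) (by simp)

theorem card_nodupLists (T : Finset α) : #(nodupLists T) = (#T)! := by
  rw [nodupLists, List.toFinset_card_of_nodup (List.nodup_permutations _ T.nodup_toList),
    List.length_permutations, length_toList]

open Classical in
noncomputable def blockArrangements (𝒯 : Finset (Finset α)) : Finset (List α) :=
  {L ∈ nodupLists (𝒯.biUnion id) | IsBlockArrangement 𝒯 L}

variable {𝒯 : Finset (Finset α)} {T : Finset α}

theorem mem_blockArrangements {L : List α} :
    L ∈ blockArrangements 𝒯 ↔ IsBlockArrangement 𝒯 L := by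
  classical
  simp only [blockArrangements, mem_filter, mem_nodupLists, and_iff_right_iff_imp]
  exact fun hL => ⟨hL.1, hL.2.1⟩

theorem card_filter_blockArrangements_le_mul (h𝒯 : (𝒯 : Set (Finset α)).PairwiseDisjoint id)
    (hT : T ∈ 𝒯) :
    #{L ∈ blockArrangements 𝒯 | (L.take #T).toFinset = T}
      ≤ (#T)! * #(blockArrangements (𝒯.erase T)) := by
  classical
  rw [← card_nodupLists]
  refine (card_le_card fun L hL => ?_).trans (card_image₂_le (· ++ ·) _ _)
  obtain ⟨hL, hl⟩ := mem_filter.mp hL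
  rw [← take_append_drop #T L] at hL ⊢
  obtain ⟨hl_nodup, ht⟩ := (mem_blockArrangements.mp hL).of_append h𝒯 hT hl
  exact mem_image₂_of_mem (mem_nodupLists.mpr ⟨hl_nodup, hl⟩) (mem_blockArrangements.mpr ht)

theorem card_blockArrangements_le (h𝒯 : (𝒯 : Set (Finset α)).PairwiseDisjoint id) :
    #(blockArrangements 𝒯) ≤ (#𝒯)! * ∏ T ∈ 𝒯, (#T)! := by
  classical
  induction 𝒯 using Finset.strongInduction with
  | H 𝒯 ih =>
  rcases 𝒯.eq_empty_or_nonempty with rfl | h𝒯ne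
  · refine (card_le_card fun L hL => ?_).trans (card_nodupLists (∅ : Finset α)).le
    obtain ⟨hnodup, hcover, -⟩ := mem_blockArrangements.mp hL
    exact mem_nodupLists.mpr ⟨hnodup, by simpa using hcover⟩
  have hcover : blockArrangements 𝒯 ⊆
      𝒯.biUnion fun T => {L ∈ blockArrangements 𝒯 | (L.take #T).toFinset = T} := fun L hL =>
    have ⟨T, hT, hL'⟩ := (mem_blockArrangements.mp hL).exists_toFinset_take_eq h𝒯ne
    mem_biUnion.mpr ⟨T, hT, mem_filter.mpr ⟨hL, hL'⟩⟩
  calc #(blockArrangements 𝒯)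
      ≤ ∑ T ∈ 𝒯, (#T)! * #(blockArrangements (𝒯.erase T)) :=
        (card_le_card hcover).trans <| card_biUnion_le.trans <|
          sum_le_sum fun T hT => card_filter_blockArrangements_le_mul h𝒯 hT
    _ ≤ ∑ T ∈ 𝒯, (#T)! * ((#𝒯 - 1)! * ∏ T' ∈ 𝒯.erase T, (#T')!) := by
        gcongr with T hT
        rw [← card_erase_of_mem hT]
        exact ih _ (erase_ssubset hT) (h𝒯.subset (by simp))
    _ = #𝒯 * (#𝒯 - 1)! * ∏ T ∈ 𝒯, (#T)! := by
        rw [sum_congr rfl fun T hT => by rw [mul_left_comm, mul_prod_erase 𝒯 (fun T => (#T)!) hT],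
          sum_const, smul_eq_mul, mul_assoc]
    _ = (#𝒯)! * ∏ T ∈ 𝒯, (#T)! := by rw [Nat.mul_factorial_pred h𝒯ne.card_pos.ne']

theorem card_filter_blockArrangements_le (h𝒯 : (𝒯 : Set (Finset α)).PairwiseDisjoint id)
    (hT : T ∈ 𝒯) :
    #{L ∈ blockArrangements 𝒯 | (L.take #T).toFinset = T} ≤ (#𝒯 - 1)! * ∏ T ∈ 𝒯, (#T)! :=
  calc _ ≤ (#T)! * #(blockArrangements (𝒯.erase T)) :=
        card_filter_blockArrangements_le_mul h𝒯 hT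
    _ ≤ (#T)! * ((#𝒯 - 1)! * ∏ T' ∈ 𝒯.erase T, (#T')!) := by
        rw [← card_erase_of_mem hT]
        gcongr
        exact card_blockArrangements_le (h𝒯.subset (by simp))
    _ = (#𝒯 - 1)! * ∏ T ∈ 𝒯, (#T)! := by
        rw [mul_left_comm, mul_prod_erase 𝒯 (fun T => (#T)!) hT]

end Finset

section CycleList

variable {n : ℕ} {c : ZMod n ≃ Fin n} {s t : ZMod n} {l : ℕ}

def cycleList (c : ZMod n ≃ Fin n) (s : ZMod n) : List (Fin n) :=
  List.ofFn fun j : Fin n => c (s + (j : ℕ))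

def IsArc (c : ZMod n ≃ Fin n) (B : Finset (Fin n)) : Prop := ∃ t, cycInterval c t #B = B

theorem isArc_singleton (c : ZMod n ≃ Fin n) (v : Fin n) : IsArc c {v} :=
  ⟨c.symm v - 1, by simp [cycInterval]⟩

theorem nodup_cycleList : (cycleList c s).Nodup := by
  refine List.nodup_ofFn.mpr fun i j hij => Fin.ext ?_
  have := congrArg ZMod.val (add_left_cancel (c.injective hij))
  rwa [ZMod.val_cast_of_lt i.isLt, ZMod.val_cast_of_lt j.isLt] at this

theorem take_drop_cycleList {u : ℕ} (hu : u + l ≤ n) :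
    ((cycleList c s).drop u).take l = (List.range l).map fun i : ℕ => c (s + (u : ℕ) + i) := by
  refine List.ext_getElem (by simp [cycleList]; omega) fun i _ _ => ?_
  simp only [cycleList, List.getElem_take, List.getElem_drop, List.getElem_ofFn, List.getElem_map,
    List.getElem_range]
  push_cast
  ring_nf

variable [NeZero n]

theorem getElem_cycleList_val_sub (z : ZMod n) :
    (cycleList c s)[(z - s).val]'(by simpa [cycleList] using ZMod.val_lt _) = c z := by
  simp [cycleList]

theorem toFinset_cycleList : (cycleList c s).toFinset = univ := by
  refine eq_univ_of_forall fun v => List.mem_toFinset.mpr ?_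
  rw [← c.apply_symm_apply v, ← getElem_cycleList_val_sub]
  exact List.getElem_mem _

theorem cycleList_injective (s : ZMod n) :
    Function.Injective fun c : ZMod n ≃ Fin n => cycleList c s := by
  intro c c' h
  ext z
  rw [← getElem_cycleList_val_sub (s := s), ← getElem_cycleList_val_sub (s := s)]
  simp only at h
  simp [h]

theorem toFinset_take_drop_cycleList (h : (t + 1 - s).val + l ≤ n) :
    (((cycleList c s).drop (t + 1 - s).val).take l).toFinset = cycInterval c t l := by
  ext v
  simp only [take_drop_cycleList h, cycInterval, List.mem_toFinset, List.mem_map, List.mem_range,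
    mem_image, mem_range, ZMod.natCast_zmod_val]
  ring_nf

/-- An interval not containing position `s` does not wrap around `s`. -/
theorem val_sub_add_le (h : t + 1 = s ∨ c s ∉ cycInterval c t l) (hl : l ≤ n) :
    (t + 1 - s).val + l ≤ n := by
  rcases h with rfl | h
  · simpa using hl
  by_contra! hlt
  have hu := ZMod.val_lt (t + 1 - s)
  refine h (mem_image.mpr ⟨n - (t + 1 - s).val, mem_range.mpr (by omega), ?_⟩)
  rw [Nat.cast_sub hu.le, ZMod.natCast_self, ZMod.natCast_zmod_val]
  ring_nf

theorem IsArc.exists_infix_cycleList {B : Finset (Fin n)} (hB : IsArc c B) (hs : c s ∉ B) :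
    ∃ l : List (Fin n), l.toFinset = B ∧ l <:+: cycleList c s := by
  obtain ⟨t, ht⟩ := hB
  have hle := val_sub_add_le (s := s) (Or.inr (ht ▸ hs)) (card_finset_fin_le B)
  exact ⟨_, (toFinset_take_drop_cycleList hle).trans ht,
    (List.take_prefix _ _).isInfix.trans (List.drop_suffix _ _).isInfix⟩

theorem toFinset_take_cycleList {B : Finset (Fin n)} (ht : cycInterval c t #B = B) :
    ((cycleList c (t + 1)).take #B).toFinset = B := by
  have hle := val_sub_add_le (c := c) (s := t + 1) (Or.inl rfl) (card_finset_fin_le B)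
  simpa [ht] using toFinset_take_drop_cycleList (c := c) hle

theorem isBlockArrangement_cycleList {𝒯 : Finset (Finset (Fin n))}
    (hdisj : (𝒯 : Set (Finset (Fin n))).PairwiseDisjoint id) (hcover : 𝒯.biUnion id = univ)
    (harc : ∀ T ∈ 𝒯, IsArc c T) {T₀ : Finset (Fin n)} (hT₀ : T₀ ∈ 𝒯) (hne : T₀.Nonempty)
    (ht : cycInterval c t #T₀ = T₀) :
    List.IsBlockArrangement 𝒯 (cycleList c (t + 1)) := by
  refine ⟨nodup_cycleList, toFinset_cycleList.trans hcover.symm, fun T hT => ?_⟩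
  by_cases hs : c (t + 1) ∈ T
  · have hs₀ : c (t + 1) ∈ T₀ := ht ▸ mem_image.mpr ⟨0, by simpa using hne.card_pos, by simp⟩
    obtain rfl : T = T₀ := hdisj.elim hT hT₀ (not_disjoint_iff.mpr ⟨_, hs, hs₀⟩)
    exact ⟨_, toFinset_take_cycleList ht, (List.take_prefix _ _).isInfix⟩
  · exact (harc T hT).exists_infix_cycleList hs

theorem ncard_setOf_forall_isArc_le (𝒯 : Finset (Finset (Fin n)))
    (hdisj : (𝒯 : Set (Finset (Fin n))).PairwiseDisjoint id) (hcover : 𝒯.biUnion id = univ) :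
    {c : ZMod n ≃ Fin n | ∀ T ∈ 𝒯, IsArc c T}.ncard ≤ n * ((#𝒯 - 1)! * ∏ T ∈ 𝒯, (#T)!) := by
  obtain ⟨T₀, hT₀, h0⟩ := mem_biUnion.mp (hcover ▸ mem_univ (0 : Fin n))
  choose! start hstart using fun c (hc : ∀ T ∈ 𝒯, IsArc c T) => hc T₀ hT₀
  let anchored := {L ∈ blockArrangements 𝒯 | (L.take #T₀).toFinset = T₀}
  calc _ ≤ ((Set.univ : Set (ZMod n)) ×ˢ (anchored : Set (List (Fin n)))).ncard := by
        refine Set.ncard_le_ncard_of_injOn (fun c => (start c + 1, cycleList c (start c + 1)))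
          (fun c hc => ⟨Set.mem_univ _, mem_filter.mpr ⟨mem_blockArrangements.mpr ?_, ?_⟩⟩) ?_
        · exact isBlockArrangement_cycleList hdisj hcover hc hT₀ ⟨0, h0⟩ (hstart c hc)
        · exact toFinset_take_cycleList (hstart c hc)
        · intro c _ c' _ h
          obtain ⟨hs, hL⟩ := Prod.mk.inj h
          rw [hs] at hL
          exact cycleList_injective _ hL
    _ = n * #anchored := by
        rw [Set.ncard_prod, Set.ncard_univ, Nat.card_zmod, Set.ncard_coe_finset]
    _ ≤ _ := by
        gcongr
        exact card_filter_blockArrangements_le hdisj hT₀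

end CycleList

theorem Finset.map_preimage_of_subset_map {α β : Type*} {e : β ↪ α} {B : Finset α}
    {u : Finset β} (hB : B ⊆ u.map e) : (B.preimage e e.injective.injOn).map e = B := by
  obtain ⟨u, -, rfl⟩ := subset_map_iff.mp hB
  rw [preimage_map]

theorem Finset.pairwiseDisjoint_of_sum_card_le_card_biUnion {ι β : Type*} [DecidableEq β]
    {s : Finset ι} {f : ι → Finset β} (h : ∑ i ∈ s, #(f i) ≤ #(s.biUnion f)) :
    (s : Set ι).PairwiseDisjoint f := by
  classical
  intro i hi j hj hij
  have hsplit : s.biUnion f = f i ∪ (s.erase i).biUnion f := by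
    rw [← biUnion_insert, insert_erase hi]
  have hunion := card_union_add_card_inter (f i) ((s.erase i).biUnion f)
  have hrest : #((s.erase i).biUnion f) ≤ ∑ j ∈ s.erase i, #(f j) := card_biUnion_le
  rw [← add_sum_erase s _ hi, hsplit] at h
  have hinter : #(f i ∩ (s.erase i).biUnion f) = 0 := by omega
  exact (disjoint_iff_inter_eq_empty.mpr (card_eq_zero.mp hinter)).mono_right
    (subset_biUnion_of_mem f (mem_erase.mpr ⟨hij.symm, hj⟩))

section Partitions

variable {α : Type*} [DecidableEq α] {k : ℕ} {x : Fin k → ℕ} {U : Finset α}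
  {P : Finset (Finset α)}

def IsPartitionOfType (x : Fin k → ℕ) (U : Finset α) (P : Finset (Finset α)) : Prop :=
  (∀ B ∈ P, B.Nonempty) ∧ (P : Set (Finset α)).PairwiseDisjoint id ∧ P.biUnion id = U ∧
    P.val.map card = univ.val.map x

theorem cX_eq_ncard (x : Fin k → ℕ) (r : ℕ) :
    cX x r = {P : Finset (Finset (Fin r)) | IsPartitionOfType x univ P}.ncard := rfl

namespace IsPartitionOfType

theorem subset (hP : IsPartitionOfType x U P) {B : Finset α} (hB : B ∈ P) : B ⊆ U :=
  hP.2.2.1 ▸ subset_biUnion_of_mem id hB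

theorem card_eq (hP : IsPartitionOfType x U P) : #P = k := by
  simpa using congrArg Multiset.card hP.2.2.2

theorem prod_factorial_card (hP : IsPartitionOfType x U P) : ∏ B ∈ P, (#B)! = ∏ i, (x i)! := by
  have := congrArg (Multiset.map factorial) hP.2.2.2
  simp only [Multiset.map_map] at this
  rw [prod_eq_multiset_prod, prod_eq_multiset_prod]
  exact congrArg Multiset.prod this

theorem of_image (b : Fin k → Finset α) (hb : ∀ i, #(b i) = x i) (hx : ∀ i, 0 < x i)
    (hdisj : ((univ : Finset (Fin k)) : Set (Fin k)).PairwiseDisjoint b) :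
    IsPartitionOfType x (univ.biUnion b) (univ.image b) := by
  have hne : ∀ i, (b i).Nonempty := fun i => card_pos.mp (hb i ▸ hx i)
  have hinj : Function.Injective b := fun i j hij => by
    by_contra hij'
    have : Disjoint (b i) (b j) := hdisj (mem_coe.mpr (mem_univ i)) (mem_coe.mpr (mem_univ j)) hij'
    rw [hij, disjoint_self, bot_eq_empty] at this
    exact (hne j).ne_empty this
  refine ⟨by simpa using hne, ?_, by simp [image_biUnion], ?_⟩
  · rintro _ hB _ hB' hBB'
    obtain ⟨i, -, rfl⟩ := mem_image.mp hB
    obtain ⟨j, -, rfl⟩ := mem_image.mp hB'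
    exact hdisj (mem_coe.mpr (mem_univ i)) (mem_coe.mpr (mem_univ j)) fun h => hBB' (h ▸ rfl)
  · rw [image_val_of_injOn hinj.injOn, Multiset.map_map]
    exact Multiset.map_congr rfl fun i _ => hb i

variable {β : Type*} [Fintype β] [DecidableEq β] {e : β ↪ α}

theorem image_preimage (hP : IsPartitionOfType x (univ.map e) P) :
    IsPartitionOfType x univ (P.image fun B => B.preimage e e.injective.injOn) := by
  have hcard : ∀ B ∈ P, #(B.preimage e e.injective.injOn) = #B := fun B hB => by
    rw [← card_map e, map_preimage_of_subset_map (hP.subset hB)]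
  refine ⟨?_, ?_, ?_, ?_⟩
  · simp only [mem_image, forall_exists_index, and_imp, forall_apply_eq_imp_iff₂]
    exact fun B hB => card_pos.mp ((hcard B hB).symm ▸ card_pos.mpr (hP.1 B hB))
  · rintro _ hB _ hB' hBB'
    obtain ⟨B, hBP, rfl⟩ := mem_image.mp hB
    obtain ⟨B', hBP', rfl⟩ := mem_image.mp hB'
    exact disjoint_preimage (hP.2.1 hBP hBP' fun h => hBB' (h ▸ rfl))
  · refine eq_univ_of_forall fun j => ?_
    obtain ⟨B, hB, hjB⟩ := mem_biUnion.mp (hP.2.2.1 ▸ mem_map_of_mem e (mem_univ j))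
    exact mem_biUnion.mpr ⟨_, mem_image_of_mem _ hB, mem_preimage.mpr hjB⟩
  · rw [image_val_of_injOn, Multiset.map_map, ← hP.2.2.2]
    · exact Multiset.map_congr rfl fun B hB => hcard B hB
    · intro B hB B' hB' h
      rw [← map_preimage_of_subset_map (hP.subset hB), ← map_preimage_of_subset_map (hP.subset hB')]
      exact congrArg (map e) h

end IsPartitionOfType

theorem injOn_image_preimage {β : Type*} [DecidableEq β] (e : β ↪ α) (u : Finset β) :
    Set.InjOn (fun P : Finset (Finset α) => P.image fun B => B.preimage e e.injective.injOn)
      {P | ∀ B ∈ P, B ⊆ u.map e} := by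
  intro P hP P' hP' h
  have recover : ∀ Q : Finset (Finset α), (∀ B ∈ Q, B ⊆ u.map e) →
      (Q.image fun B => B.preimage e e.injective.injOn).image (map e) = Q := fun Q hQ => by
    rw [image_image]
    exact (image_congr fun B hB => map_preimage_of_subset_map (hQ B hB)).trans image_id
  rw [← recover P hP, ← recover P' hP']
  exact congrArg _ h

theorem ncard_setOf_isPartitionOfType_le {r : ℕ} (hU : #U = r) :
    {P | IsPartitionOfType x U P}.ncard ≤ cX x r := by
  let e : Fin r ↪ α := (U.equivFinOfCardEq hU).symm.toEmbedding.trans (.subtype (· ∈ U))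
  have he : univ.map e = U := by
    rw [← map_map, map_univ_equiv, univ_eq_attach, attach_map_val]
  rw [cX_eq_ncard, ← he]
  exact Set.ncard_le_ncard_of_injOn _ (fun P hP => hP.image_preimage) fun P hP P' hP' =>
    injOn_image_preimage e univ (fun _ => hP.subset) (fun _ => hP'.subset)

end Partitions

namespace Finset

variable {α : Type*} [Fintype α] [DecidableEq α] {P : Finset (Finset α)}

def addSingletons (P : Finset (Finset α)) : Finset (Finset α) :=
  P ∪ (P.biUnion id)ᶜ.image fun a => {a}

theorem disjoint_image_singleton_compl_biUnion :
    Disjoint P ((P.biUnion id)ᶜ.image fun a => {a}) := by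
  refine disjoint_right.mpr fun T hT hTP => ?_
  obtain ⟨a, ha, rfl⟩ := mem_image.mp hT
  exact mem_compl.mp ha (mem_biUnion.mpr ⟨_, hTP, mem_singleton_self a⟩)

theorem biUnion_addSingletons : (addSingletons P).biUnion id = univ := by
  refine eq_univ_of_forall fun a => ?_
  by_cases ha : a ∈ P.biUnion id
  · exact biUnion_subset_biUnion_of_subset_left _ subset_union_left ha
  · exact mem_biUnion.mpr ⟨{a}, mem_union_right _ (mem_image_of_mem _ (mem_compl.mpr ha)),
      mem_singleton_self a⟩

theorem pairwiseDisjoint_addSingletons (hP : (P : Set (Finset α)).PairwiseDisjoint id) :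
    (addSingletons P : Set (Finset α)).PairwiseDisjoint id := by
  rw [addSingletons, coe_union, Set.pairwiseDisjoint_union]
  refine ⟨hP, ?_, fun B hB T hT _ => ?_⟩
  · rintro _ h _ h' hne
    obtain ⟨a, -, rfl⟩ := mem_image.mp h
    obtain ⟨b, -, rfl⟩ := mem_image.mp h'
    exact disjoint_singleton.mpr fun hab => hne (hab ▸ rfl)
  · obtain ⟨a, ha, rfl⟩ := mem_image.mp hT
    exact disjoint_singleton_right.mpr fun haB => mem_compl.mp ha (mem_biUnion.mpr ⟨B, hB, haB⟩)

theorem card_addSingletons : #(addSingletons P) = #P + (Fintype.card α - #(P.biUnion id)) := by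
  rw [addSingletons, card_union_of_disjoint disjoint_image_singleton_compl_biUnion,
    card_image_of_injective _ singleton_injective, card_compl]

theorem prod_factorial_card_addSingletons : ∏ T ∈ addSingletons P, (#T)! = ∏ B ∈ P, (#B)! := by
  rw [addSingletons, prod_union disjoint_image_singleton_compl_biUnion,
    prod_image fun a _ b _ h => singleton_injective h]
  simp

end Finset

section Main

variable {n k r : ℕ} {x : Fin k → ℕ}

theorem ncard_setOf_forall_isArc_le_of_isPartitionOfType [NeZero n] {A : Finset (Fin n)}
    {P : Finset (Finset (Fin n))} (hP : IsPartitionOfType x A P) :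
    {c : ZMod n ≃ Fin n | ∀ B ∈ P, IsArc c B}.ncard ≤ n * ((k + (n - #A) - 1)! * ∏ i, (x i)!) := by
  have harcs : {c : ZMod n ≃ Fin n | ∀ B ∈ P, IsArc c B} =
      {c | ∀ T ∈ addSingletons P, IsArc c T} := by
    ext c
    simp [addSingletons, or_imp, forall_and, isArc_singleton]
  have hcard : #(addSingletons P) = k + (n - #A) := by
    rw [card_addSingletons, hP.card_eq, hP.2.2.1, Fintype.card_fin]
  rw [harcs, ← hP.prod_factorial_card, ← prod_factorial_card_addSingletons, ← hcard]
  exact ncard_setOf_forall_isArc_le _ (pairwiseDisjoint_addSingletons hP.2.1) biUnion_addSingletons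

section Intervals

variable {c : ZMod n ≃ Fin n} {t : Fin k → ZMod n}

theorem card_cycInterval_le (c : ZMod n ≃ Fin n) (t : ZMod n) (l : ℕ) :
    #(cycInterval c t l) ≤ l :=
  card_image_le.trans (card_range l).le

theorem sum_card_cycInterval_eq (hr : ∑ i, x i = r)
    (hU : #(univ.biUnion fun i => cycInterval c (t i) (x i)) = r) :
    ∑ i, #(cycInterval c (t i) (x i)) = ∑ i, x i :=
  (sum_le_sum fun _ _ => card_cycInterval_le ..).antisymm (hr.trans hU.symm ▸ card_biUnion_le)

theorem card_cycInterval_eq (hr : ∑ i, x i = r)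
    (hU : #(univ.biUnion fun i => cycInterval c (t i) (x i)) = r) (i : Fin k) :
    #(cycInterval c (t i) (x i)) = x i :=
  (sum_eq_sum_iff_of_le fun _ _ => card_cycInterval_le ..).mp (sum_card_cycInterval_eq hr hU) i
    (mem_univ i)

theorem isPartitionOfType_cycInterval (hx : ∀ i, 0 < x i) (hr : ∑ i, x i = r)
    (hU : #(univ.biUnion fun i => cycInterval c (t i) (x i)) = r) :
    IsPartitionOfType x (univ.biUnion fun i => cycInterval c (t i) (x i))
      (univ.image fun i => cycInterval c (t i) (x i)) :=
  .of_image _ (card_cycInterval_eq hr hU) hx <| pairwiseDisjoint_of_sum_card_le_card_biUnion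
    ((sum_card_cycInterval_eq hr hU).trans (hr.trans hU.symm)).le

end Intervals

theorem factorial_le_of_forall_not_isXAcceptable [NeZero n] (hx : ∀ i, 0 < x i)
    (hr : ∑ i, x i = r) {F : Set (Finset (Fin n))} (hF : ∀ A ∈ F, #A = r)
    (hblock : ∀ c : ZMod n ≃ Fin n, ¬ IsXAcceptable x F c) :
    n ! ≤ n * ((k + (n - r) - 1)! * ∏ i, (x i)!) * (F.ncard * cX x r) := by
  classical
  choose t ht using fun c => not_not.mp (hblock c)
  let blocks (c : ZMod n ≃ Fin n) := univ.image fun i => cycInterval c (t c i) (x i)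
  let partitions := F.toFinite.toFinset.biUnion fun A =>
    (Set.toFinite {P | IsPartitionOfType x A P}).toFinset
  have hmaps : ∀ c ∈ univ, blocks c ∈ partitions := fun c _ =>
    mem_biUnion.mpr ⟨_, F.toFinite.mem_toFinset.mpr (ht c), Set.Finite.mem_toFinset _ |>.mpr
      (isPartitionOfType_cycInterval hx hr (hF _ (ht c)))⟩
  have hfiber : ∀ P ∈ partitions,
      #{c ∈ univ | blocks c = P} ≤ n * ((k + (n - r) - 1)! * ∏ i, (x i)!) := by
    intro P hP
    obtain ⟨A, hA, hP⟩ := mem_biUnion.mp hP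
    rw [Set.Finite.mem_toFinset] at hA hP
    rw [← hF A hA, ← Set.ncard_coe_finset]
    refine (Set.ncard_le_ncard fun c hc => ?_).trans
      (ncard_setOf_forall_isArc_le_of_isPartitionOfType hP)
    obtain rfl : blocks c = P := by simpa using hc
    simp only [Set.mem_ofPred, blocks, mem_image, mem_univ, true_and, forall_exists_index,
      forall_apply_eq_imp_iff]
    exact fun i => ⟨t c i, by rw [card_cycInterval_eq hr (hF _ (ht c)) i]⟩
  calc n ! = #(univ : Finset (ZMod n ≃ Fin n)) := by
        rw [Finset.card_univ, Fintype.card_equiv (ZMod.finEquiv n).symm.toEquiv, ZMod.card]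
    _ ≤ n * ((k + (n - r) - 1)! * ∏ i, (x i)!) * #partitions :=
        card_le_mul_card_image_of_maps_to hmaps _ hfiber
    _ ≤ n * ((k + (n - r) - 1)! * ∏ i, (x i)!) * (F.ncard * cX x r) := by
        gcongr
        refine card_biUnion_le.trans ((sum_le_card_nsmul _ _ (cX x r) fun A hA => ?_).trans_eq ?_)
        · rw [← Set.ncard_eq_toFinset_card]
          exact ncard_setOf_isPartitionOfType_le (hF A (F.toFinite.mem_toFinset.mp hA))
        · rw [smul_eq_mul, Set.ncard_eq_toFinset_card F]

theorem factorial_pred_le_of_forall_not_isXAcceptable (hx : ∀ i, 0 < x i) (hr : ∑ i, x i = r)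
    (hn : 0 < n) {F : Set (Finset (Fin n))} (hF : ∀ A ∈ F, #A = r)
    (hblock : ∀ c : ZMod n ≃ Fin n, ¬ IsXAcceptable x F c) :
    (n - 1)! ≤ cX x r * (∏ i, (x i)!) * (n - r + k - 1)! * F.ncard := by
  have : NeZero n := ⟨hn.ne'⟩
  refine Nat.le_of_mul_le_mul_left ?_ hn
  calc n * (n - 1)! = n ! := Nat.mul_factorial_pred hn.ne'
    _ ≤ n * ((k + (n - r) - 1)! * ∏ i, (x i)!) * (F.ncard * cX x r) :=
        factorial_le_of_forall_not_isXAcceptable hx hr hF hblock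
    _ = n * (cX x r * (∏ i, (x i)!) * (n - r + k - 1)! * F.ncard) := by
        rw [Nat.add_comm k]
        ring

theorem exists_ncard_eq_mxn {F : Set (Finset (Fin n))} (hF : ∀ A ∈ F, #A = ∑ i, x i)
    (hblock : ∀ c : ZMod n ≃ Fin n, ¬ IsXAcceptable x F c) :
    ∃ F₀ : Set (Finset (Fin n)), (∀ A ∈ F₀, #A = ∑ i, x i) ∧ F₀.ncard = mxn x n ∧
      ∀ c : ZMod n ≃ Fin n, ¬ IsXAcceptable x F₀ c :=
  Nat.sInf_mem (s := {m | ∃ F : Set (Finset (Fin n)), (∀ A ∈ F, #A = ∑ i, x i) ∧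
    F.ncard = m ∧ ∀ c, ¬ IsXAcceptable x F c}) ⟨_, F, hF, rfl, hblock⟩

end Main

/-- **Theorem (averaging lower bound).**  Let `x = (x₁, …, x_k)` be a vector of positive
integers with `x₁ + ⋯ + x_k = r` and `n ≥ r`.  If `F` is a family of `r`-element subsets
of `[n]` such that `K_n` has no `x`-acceptable Hamilton cycle with respect to `F`, then
`c(x)·x₁!·x₂!⋯x_k!·(n−r+k−1)!·|F| ≥ (n−1)!`.  In particular
`m(x,n) ≥ (n−1)!/(c(x)·x₁!⋯x_k!·(n−r+k−1)!)`. -/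
theorem averaging_lower_bound {k r n : ℕ} (hk : 0 < k) (x : Fin k → ℕ)
    (hx : ∀ i, 0 < x i) (hr : ∑ i : Fin k, x i = r) (hn : r ≤ n)
    (F : Set (Finset (Fin n))) (hF : ∀ A ∈ F, A.card = r)
    (hblock : ∀ c : ZMod n ≃ Fin n, ¬ IsXAcceptable x F c) :
    Nat.factorial (n - 1) ≤
      cX x r * (∏ i : Fin k, Nat.factorial (x i)) * Nat.factorial (n - r + k - 1)
        * F.ncard ∧
    Nat.factorial (n - 1) ≤
      cX x r * (∏ i : Fin k, Nat.factorial (x i)) * Nat.factorial (n - r + k - 1)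
        * mxn x n := by
  have hr_pos : 0 < r := hr ▸ (hx ⟨0, hk⟩).trans_le (single_le_sum (by simp) (mem_univ _))
  have hn_pos : 0 < n := hr_pos.trans_le hn
  refine ⟨factorial_pred_le_of_forall_not_isXAcceptable hx hr hn_pos hF hblock, ?_⟩
  obtain ⟨F₀, hF₀, hcard, hblock₀⟩ :=
    exists_ncard_eq_mxn (fun A hA => (hF A hA).trans hr.symm) hblock
  rw [← hcard]
  exact factorial_pred_le_of_forall_not_isXAcceptable hx hr hn_pos
    (fun A hA => (hF₀ A hA).trans hr) hblock₀
end

section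
/- Let x = (x₁,…,x_k) be a vector of positive integers with x₁+⋯+x_k = r and let n ≥ r. Then the family F = {X ∈ [n]^(r) : {1,2,…,k} ⊆ X}, which has size C(n−k, r−k), admits no x-acceptable Hamilton cycle in K_n. Consequently m(x,n) ≤ C(n−k, r−k). -/

def arcZ {n : ℕ} (t : ZMod n) (m : ℕ) : Finset (ZMod n) :=
  (Finset.range m).image fun i : ℕ => t + (i : ZMod n) + 1

lemma mem_arcZ {n : ℕ} {t : ZMod n} {m : ℕ} {a : ZMod n} :
    a ∈ arcZ t m ↔ ∃ i : ℕ, i < m ∧ a = t + (i : ZMod n) + 1 := by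
  simp only [arcZ, Finset.mem_image, Finset.mem_range]
  constructor
  · rintro ⟨i, hi, rfl⟩; exact ⟨i, hi, rfl⟩
  · rintro ⟨i, hi, rfl⟩; exact ⟨i, hi, rfl⟩

lemma natCast_injOn_zmod {n : ℕ} {a b : ℕ} (h : (a : ZMod n) = b) (ha : a < n) (hb : b < n) :
    a = b := by
  have := (ZMod.natCast_eq_natCast_iff a b n).mp h
  exact Nat.ModEq.eq_of_lt_of_lt this ha hb

lemma arcZ_card {n : ℕ} {t : ZMod n} {m : ℕ} (hm : m ≤ n) : (arcZ t m).card = m := by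
  rw [arcZ, Finset.card_image_of_injOn, Finset.card_range]
  intro i hi j hj hij
  simp only [Finset.coe_range, Set.mem_Iio] at hi hj
  have : (i : ZMod n) = j := by
    have := add_left_cancel (add_right_cancel hij)
    exact this
  exact natCast_injOn_zmod this (lt_of_lt_of_le hi hm) (lt_of_lt_of_le hj hm)

lemma arcZ_succ {n : ℕ} (t : ZMod n) (m : ℕ) :
    arcZ t (m + 1) = insert (t + (m : ZMod n) + 1) (arcZ t m) := by
  ext a
  simp only [mem_arcZ, Finset.mem_insert]
  constructor
  · rintro ⟨i, hi, rfl⟩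
    rcases Nat.lt_succ_iff_lt_or_eq.mp hi with h | rfl
    · exact Or.inr ⟨i, h, rfl⟩
    · exact Or.inl rfl
  · rintro (rfl | ⟨i, hi, rfl⟩)
    · exact ⟨m, Nat.lt_succ_self m, rfl⟩
    · exact ⟨i, Nat.lt_succ_of_lt hi, rfl⟩

lemma arcZ_shift {n : ℕ} (t : ZMod n) (m : ℕ) :
    arcZ (t + 1) m = (arcZ t m).image (· + 1) := by
  unfold arcZ
  rw [Finset.image_image]
  apply Finset.image_congr
  intro i _
  simp only [Function.comp_apply]
  ring

lemma arcZ_shift_subset {n : ℕ} (t : ZMod n) (m : ℕ) :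
    arcZ (t + 1) m ⊆ arcZ t (m + 1) := by
  intro a ha
  rw [mem_arcZ] at ha ⊢
  obtain ⟨i, hi, rfl⟩ := ha
  exact ⟨i + 1, by omega, by push_cast; ring⟩

lemma arcZ_subset_of_meet {n : ℕ} [NeZero n] {t e : ZMod n} {m f : ℕ}
    (hmn : m ≤ n) (hf1 : 0 < f) (hfn : f ≤ n)
    (he : e ∉ arcZ t m) (hef : e + (f : ℕ) ∉ arcZ t m)
    (hmeet : ¬ Disjoint (arcZ t m) (arcZ e (f - 1))) :
    arcZ t m ⊆ arcZ e (f - 1) := by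
  have hn : 0 < n := Nat.pos_of_ne_zero (NeZero.ne n)
  set d : ℕ → ℕ := fun q => ((t + (q : ZMod n) + 1) - e).val with hd
  have hdcast : ∀ q : ℕ, ((d q : ℕ) : ZMod n) = (t + (q : ZMod n) + 1) - e := by
    intro q; simp [hd, ZMod.natCast_val, ZMod.cast_id]
  have hcell : ∀ q : ℕ, t + (q : ZMod n) + 1 = e + (d q : ZMod n) := by
    intro q; rw [hdcast]; ring
  have hdlt : ∀ q, d q < n := fun q => ZMod.val_lt _
  have hstep : ∀ q, d (q + 1) = (d q + 1) % n := by
    intro q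
    have h1 : t + ((q + 1 : ℕ) : ZMod n) + 1 = (t + (q : ZMod n) + 1) + 1 := by
      push_cast; ring
    have h2 : (t + ((q+1:ℕ) : ZMod n) + 1) - e = ((d q + 1 : ℕ) : ZMod n) := by
      rw [h1]; push_cast [hdcast]; ring
    show ((t + ((q+1:ℕ) : ZMod n) + 1) - e).val = _
    rw [h2, ZMod.val_natCast]
  have hne0 : ∀ q, q < m → d q ≠ 0 := by
    intro q hq h0
    apply he
    rw [mem_arcZ]
    refine ⟨q, hq, ?_⟩
    rw [hcell q, h0]; simp
  have hnef : ∀ q, q < m → d q ≠ f := by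
    intro q hq hdf
    rcases lt_or_ge (d q) f with h | h
    · omega
    · have : d q = f := le_antisymm (by omega) h
      apply hef
      rw [mem_arcZ]
      refine ⟨q, hq, ?_⟩
      rw [hcell q, this]
  have hmem : ∀ q : ℕ, ((t + (q : ZMod n) + 1) ∈ arcZ e (f - 1)) ↔ (1 ≤ d q ∧ d q ≤ f - 1) := by
    intro q
    constructor
    · intro h
      rw [mem_arcZ] at h
      obtain ⟨i, hi, hqe⟩ := h
      have hq2 := hcell q
      rw [hqe] at hq2
      have hcc : ((d q : ℕ) : ZMod n) = ((i + 1 : ℕ) : ZMod n) := by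
        push_cast
        linear_combination - hq2
      have heq : d q = i + 1 := natCast_injOn_zmod hcc (hdlt q) (by omega)
      omega
    · rintro ⟨h1, h2⟩
      rw [mem_arcZ]
      refine ⟨d q - 1, by omega, ?_⟩
      rw [hcell q, Nat.cast_sub h1]
      push_cast
      ring
  have hup : ∀ q, q + 1 < m → (1 ≤ d q ∧ d q ≤ f - 1) → (1 ≤ d (q+1) ∧ d (q+1) ≤ f - 1) := by
    intro q hq hP
    have h0 := hne0 (q+1) hq
    have hf' := hnef (q+1) hq
    have hs := hstep q
    have hl := hdlt q
    rcases lt_or_ge (d q + 1) n with h | h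
    · rw [Nat.mod_eq_of_lt h] at hs; omega
    · have : d q + 1 = n := by omega
      rw [this, Nat.mod_self] at hs; omega
  have hdown : ∀ q, q + 1 < m → (1 ≤ d (q+1) ∧ d (q+1) ≤ f - 1) → (1 ≤ d q ∧ d q ≤ f - 1) := by
    intro q hq hP
    have h0 := hne0 q (by omega)
    have hf' := hnef q (by omega)
    have hs := hstep q
    have hl := hdlt q
    rcases lt_or_ge (d q + 1) n with h | h
    · rw [Nat.mod_eq_of_lt h] at hs; omega
    · have : d q + 1 = n := by omega
      rw [this, Nat.mod_self] at hs; omega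
  obtain ⟨a, ha1, ha2⟩ := Finset.not_disjoint_iff.mp hmeet
  rw [mem_arcZ] at ha1
  obtain ⟨u, hu, rfl⟩ := ha1
  have hbase : 1 ≤ d u ∧ d u ≤ f - 1 := (hmem u).mp ha2
  have hdownall : ∀ w, w ≤ u → (1 ≤ d (u - w) ∧ d (u - w) ≤ f - 1) := by
    intro w
    induction w with
    | zero => intro _; simpa using hbase
    | succ v ih =>
      intro hv
      have h1 : (u - (v+1)) + 1 = u - v := by omega
      have := ih (by omega)
      apply hdown (u - (v+1)) (by omega)
      rw [h1]
      exact this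
  have hupall : ∀ w, u + w < m → (1 ≤ d (u + w) ∧ d (u + w) ≤ f - 1) := by
    intro w
    induction w with
    | zero => intro _; simpa using hbase
    | succ v ih =>
      intro hv
      have := ih (by omega)
      have h1 : u + (v+1) = (u + v) + 1 := by omega
      rw [h1]
      exact hup (u + v) (by omega) this
  have hall : ∀ q, q < m → (1 ≤ d q ∧ d q ≤ f - 1) := by
    intro q hq
    rcases le_or_gt q u with h | h
    · have := hdownall (u - q) (by omega)
      rwa [Nat.sub_sub_self h] at this
    · have := hupall (q - u) (by omega)
      rwa [Nat.add_sub_cancel' (le_of_lt h)] at this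
  intro a ha
  rw [mem_arcZ] at ha
  obtain ⟨q, hq, rfl⟩ := ha
  exact (hmem q).mpr (hall q hq)

lemma zmod_cast_ne {n : ℕ} {a b : ℕ} (hb : 0 < b) (hba : b < a) (han : a ≤ n) :
    ((a : ℕ) : ZMod n) ≠ ((b : ℕ) : ZMod n) := by
  intro h
  have hmod := (ZMod.natCast_eq_natCast_iff a b n).mp h
  have hdvd : n ∣ a - b := (Nat.modEq_iff_dvd' (le_of_lt hba)).mp hmod.symm
  have := Nat.le_of_dvd (by omega) hdvd
  omega

lemma packing {n : ℕ} [NeZero n] {k : ℕ} :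
    ∀ (s : ℕ) (x : Fin k → ℕ), ∑ i, x i = s → (∀ i, 0 < x i) → s ≤ n →
    ∀ p : Fin k → ZMod n, Function.Injective p →
    ∃ t : Fin k → ZMod n,
      (∀ i, p i ∈ Finset.univ.biUnion fun l => arcZ (t l) (x l)) ∧
      (∀ i l : Fin k, i ≠ l → Disjoint (arcZ (t i) (x i)) (arcZ (t l) (x l))) := by
  intro s
  induction s using Nat.strong_induction_on with
  | _ s IH =>
  intro x hxs hx hsn p hp
  classical
  by_cases hbase : ∀ i, x i = 1
  · refine ⟨fun i => p i - 1, ?_, ?_⟩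
    · intro i
      refine Finset.mem_biUnion.mpr ⟨i, Finset.mem_univ i, ?_⟩
      rw [mem_arcZ]
      exact ⟨0, hx i, by push_cast; ring⟩
    · intro i l hil
      rw [Finset.disjoint_left]
      intro a ha ha'
      rw [mem_arcZ] at ha ha'
      obtain ⟨u, hu, hau⟩ := ha
      obtain ⟨w, hw, haw⟩ := ha'
      rw [hbase i] at hu
      rw [hbase l] at hw
      interval_cases u
      interval_cases w
      apply hil
      apply hp
      have h1 : p i = a := by rw [hau]; push_cast; ring
      have h2 : p l = a := by rw [haw]; push_cast; ring
      rw [h1, h2]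
  · push_neg at hbase
    obtain ⟨j, hjne⟩ := hbase
    have hxj : 2 ≤ x j := by have := hx j; omega
    have hn : 0 < n := Nat.pos_of_ne_zero (NeZero.ne n)
    have hs2 : 2 ≤ s := by
      calc 2 ≤ x j := hxj
      _ ≤ ∑ i, x i := Finset.single_le_sum (fun i _ => Nat.zero_le _) (Finset.mem_univ j)
      _ = s := hxs
    set x' := Function.update x j (x j - 1) with hx'def
    have hx'j : x' j = x j - 1 := Function.update_self j _ x
    have hx'eq : ∀ i, i ≠ j → x' i = x i := fun i h => Function.update_of_ne h _ x
    have hx' : ∀ i, 0 < x' i := by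
      intro i
      by_cases h : i = j
      · subst h; rw [hx'j]; omega
      · rw [hx'eq i h]; exact hx i
    have hsum' : ∑ i, x' i = s - 1 := by
      have h1 : ∑ i, x' i = (x j - 1) + ∑ i ∈ Finset.univ \ {j}, x i :=
        Finset.sum_update_of_mem (Finset.mem_univ j) x (x j - 1)
      have h2 : ∑ i, x i = x j + ∑ i ∈ Finset.univ \ {j}, x i :=
        Finset.sum_eq_add_sum_sdiff_singleton_of_mem (Finset.mem_univ j) x
      omega
    obtain ⟨t', hcov, hdisj⟩ := IH (s-1) (by omega) x' hsum' hx' (by omega) p hp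
    have hxle : ∀ i, x i ≤ n := by
      intro i
      calc x i ≤ ∑ l, x l := Finset.single_le_sum (fun l _ => Nat.zero_le _) (Finset.mem_univ i)
      _ ≤ n := by omega
    have hx'le : ∀ i, x' i ≤ n := by
      intro i
      by_cases h : i = j
      · rw [h, hx'j]; have := hxle j; omega
      · rw [hx'eq i h]; exact hxle i
    set U := Finset.univ.biUnion fun l => arcZ (t' l) (x' l) with hUdef
    have hUcard : U.card = s - 1 := by
      rw [hUdef, Finset.card_biUnion (fun i _ l _ hil => hdisj i l hil)]
      rw [← hsum']
      exact Finset.sum_congr rfl (fun i _ => arcZ_card (hx'le i))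
    set e : ZMod n := t' j + ((x j - 1 : ℕ) : ZMod n) with he
    have hcast1 : ((x j - 1 : ℕ) : ZMod n) = ((x j - 2 : ℕ) : ZMod n) + 1 := by
      rw [show x j - 1 = (x j - 2) + 1 by omega]; push_cast; ring
    have heAj : e ∈ arcZ (t' j) (x' j) := by
      rw [mem_arcZ]
      exact ⟨x j - 2, by omega, by rw [he, hcast1]; ring⟩
    have heU : e ∈ U := Finset.mem_biUnion.mpr ⟨j, Finset.mem_univ j, heAj⟩
    have hcompl : (Uᶜ).Nonempty := by
      rw [← Finset.card_pos, Finset.card_compl]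
      have hcard : Fintype.card (ZMod n) = n := ZMod.card n
      omega
    obtain ⟨a, haU⟩ := hcompl
    rw [Finset.mem_compl] at haU
    have hane : a ≠ e := by rintro rfl; exact haU heU
    have hv0 : (a - e).val ≠ 0 := by
      intro h
      rw [ZMod.val_eq_zero, sub_eq_zero] at h
      exact hane h
    have hvn : (a - e).val < n := ZMod.val_lt _
    have hva : e + (((a - e).val : ℕ) : ZMod n) = a := by
      rw [ZMod.natCast_val, ZMod.cast_id]; ring
    have hex : ∃ m : ℕ, (0 < m ∧ m ≤ n) ∧ e + (m : ZMod n) ∉ U :=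
      ⟨(a - e).val, ⟨by omega, by omega⟩, by rw [hva]; exact haU⟩
    set f := Nat.find hex with hfdef
    obtain ⟨⟨hf1, hfn⟩, hfU⟩ := Nat.find_spec hex
    rw [← hfdef] at hf1 hfn hfU
    have hmin : ∀ m, 0 < m → m < f → e + (m : ZMod n) ∈ U := by
      intro m hm hmf
      by_contra hmem
      exact (Nat.find_min hex hmf) ⟨⟨hm, by omega⟩, hmem⟩
    set C := arcZ e (f - 1) with hC
    have hmemC : ∀ u : ℕ, 1 ≤ u → u ≤ f - 1 → e + (u : ZMod n) ∈ C := by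
      intro u h1 h2
      rw [hC, mem_arcZ]
      refine ⟨u - 1, by omega, ?_⟩
      rw [show u = (u - 1) + 1 by omega]
      push_cast; ring
    have hmemC' : ∀ z ∈ C, ∃ u : ℕ, 1 ≤ u ∧ u ≤ f - 1 ∧ z = e + (u : ZMod n) := by
      intro z hz
      rw [hC, mem_arcZ] at hz
      obtain ⟨i, hi, rfl⟩ := hz
      exact ⟨i + 1, by omega, by omega, by push_cast; ring⟩
    have hCU : C ⊆ U := by
      intro z hz
      obtain ⟨u, h1, h2, rfl⟩ := hmemC' z hz
      exact hmin u (by omega) (by omega)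
    -- key: cells e+1 .. e+f avoid the old arc at j
    have hAj : ∀ m : ℕ, 1 ≤ m → m ≤ f → e + (m : ZMod n) ∉ arcZ (t' j) (x' j) := by
      intro m hm1 hmf hmem
      have hxjn := hxle j
      rw [mem_arcZ, hx'j] at hmem
      obtain ⟨l, hl, heq⟩ := hmem
      rw [he] at heq
      have hcast : (((x j - 1) + m : ℕ) : ZMod n) = ((l + 1 : ℕ) : ZMod n) := by
        push_cast
        linear_combination heq
      have hmod := (ZMod.natCast_eq_natCast_iff _ _ _).mp hcast
      have hdvd : n ∣ ((x j - 1) + m) - (l + 1) := (Nat.modEq_iff_dvd' (by omega)).mp hmod.symm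
      have hbig : n ≤ ((x j - 1) + m) - (l + 1) := Nat.le_of_dvd (by omega) hdvd
      -- so m ≥ n - x j + 2 + l
      have hVU : arcZ e (n - x j + 1) ⊆ U := by
        intro z hz
        rw [mem_arcZ] at hz
        obtain ⟨i, hi, rfl⟩ := hz
        have h2 : e + ((i + 1 : ℕ) : ZMod n) ∈ U := hmin (i + 1) (by omega) (by omega)
        rwa [show ((i + 1 : ℕ) : ZMod n) = (i : ZMod n) + 1 by push_cast; ring, ← add_assoc] at h2
      have hVAj : Disjoint (arcZ e (n - x j + 1)) (arcZ (t' j) (x' j)) := by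
        rw [Finset.disjoint_left]
        intro z hz hz'
        rw [mem_arcZ] at hz
        rw [mem_arcZ, hx'j] at hz'
        obtain ⟨i, hi, rfl⟩ := hz
        obtain ⟨l', hl', heq'⟩ := hz'
        rw [he] at heq'
        have hcast2 : (((x j - 1) + (i + 1) : ℕ) : ZMod n) = ((l' + 1 : ℕ) : ZMod n) := by
          push_cast
          linear_combination heq'
        exact zmod_cast_ne (a := (x j - 1) + (i + 1)) (b := l' + 1) (by omega) (by omega) (by omega) hcast2
      have hsubU : (arcZ e (n - x j + 1)) ∪ (arcZ (t' j) (x' j)) ⊆ U := by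
        rw [hUdef]
        exact Finset.union_subset (hUdef ▸ hVU) (Finset.subset_biUnion_of_mem (fun l => arcZ (t' l) (x' l)) (Finset.mem_univ j))
      have hcardU := Finset.card_le_card hsubU
      rw [Finset.card_union_of_disjoint hVAj, arcZ_card (by omega), arcZ_card (hx'le j), hx'j] at hcardU
      omega
    have hCAj : Disjoint C (arcZ (t' j) (x' j)) := by
      rw [Finset.disjoint_left]
      intro z hz hz'
      obtain ⟨u, h1, h2, rfl⟩ := hmemC' z hz
      exact hAj u h1 (by omega) hz'
    have hsplit : ∀ i : Fin k, i ≠ j → (arcZ (t' i) (x' i) ⊆ C) ∨ Disjoint (arcZ (t' i) (x' i)) C := by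
      intro i hij
      by_cases hd : Disjoint (arcZ (t' i) (x' i)) C
      · exact Or.inr hd
      · left
        refine arcZ_subset_of_meet (hx'le i) hf1 hfn ?_ ?_ hd
        · intro hmem
          exact (Finset.disjoint_left.mp (hdisj i j hij) hmem) heAj
        · intro hmem
          exact hfU (Finset.mem_biUnion.mpr ⟨i, Finset.mem_univ i, hmem⟩)
    set t : Fin k → ZMod n :=
      fun i => if i = j then t' j else if arcZ (t' i) (x' i) ⊆ C then t' i + 1 else t' i with htdef
    have hNj : arcZ (t j) (x j) = insert (e + 1) (arcZ (t' j) (x' j)) := by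
      have h1 : t j = t' j := by simp [htdef]
      have h2 := arcZ_succ (t' j) (x j - 1)
      rw [show x j - 1 + 1 = x j by omega] at h2
      rw [h1, h2, hx'j, he]
    have hshift : ∀ i, i ≠ j → arcZ (t' i) (x' i) ⊆ C →
        arcZ (t i) (x i) = (arcZ (t' i) (x' i)).image (· + 1) := by
      intro i h hsub
      have h1 : t i = t' i + 1 := by simp [htdef, h, hsub]
      rw [h1, ← hx'eq i h, arcZ_shift]
    have hkeep : ∀ i, i ≠ j → ¬ (arcZ (t' i) (x' i) ⊆ C) →
        arcZ (t i) (x i) = arcZ (t' i) (x' i) := by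
      intro i h hsub
      have h1 : t i = t' i := by simp [htdef, h, hsub]
      rw [h1, ← hx'eq i h]
    have hmemShift : ∀ i, i ≠ j → arcZ (t' i) (x' i) ⊆ C →
        ∀ z ∈ arcZ (t i) (x i), ∃ u : ℕ, 2 ≤ u ∧ u ≤ f ∧ z = e + (u : ZMod n) := by
      intro i h hsub z hz
      rw [hshift i h hsub] at hz
      rw [Finset.mem_image] at hz
      obtain ⟨y, hy, rfl⟩ := hz
      obtain ⟨u, h1, h2, rfl⟩ := hmemC' y (hsub hy)
      exact ⟨u + 1, by omega, by omega, by push_cast; ring⟩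
    -- disjointness with the new arc at j
    have key : ∀ i : Fin k, i ≠ j → Disjoint (arcZ (t j) (x j)) (arcZ (t i) (x i)) := by
      intro i hij
      rw [hNj, Finset.disjoint_left]
      intro z hz hz'
      rw [Finset.mem_insert] at hz
      by_cases hsub : arcZ (t' i) (x' i) ⊆ C
      · obtain ⟨u, h1, h2, rfl⟩ := hmemShift i hij hsub z hz'
        rcases hz with hz | hz
        · have : ((u : ℕ) : ZMod n) = ((1 : ℕ) : ZMod n) := by
            push_cast at hz ⊢
            linear_combination hz
          exact zmod_cast_ne (by omega) (by omega) (by omega) this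
        · exact hAj u (by omega) h2 hz
      · rw [hkeep i hij hsub] at hz'
        have hdisjC : Disjoint (arcZ (t' i) (x' i)) C := (hsplit i hij).resolve_left hsub
        rcases hz with hz | hz
        · subst hz
          by_cases hf2 : 2 ≤ f
          · have : e + ((1:ℕ) : ZMod n) ∈ C := hmemC 1 le_rfl (by omega)
            rw [Nat.cast_one] at this
            exact (Finset.disjoint_left.mp hdisjC hz') this
          · have hfeq : f = 1 := by omega
            apply hfU
            rw [hfeq, Nat.cast_one]
            exact Finset.mem_biUnion.mpr ⟨i, Finset.mem_univ i, hz'⟩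
        · exact (Finset.disjoint_left.mp (hdisj j i (Ne.symm hij)) hz) hz'
    have key2 : ∀ i l : Fin k, i ≠ j → l ≠ j → i ≠ l →
        Disjoint (arcZ (t i) (x i)) (arcZ (t l) (x l)) := by
      intro i l hi hl hil
      by_cases hsi : arcZ (t' i) (x' i) ⊆ C
      · by_cases hsl : arcZ (t' l) (x' l) ⊆ C
        · rw [hshift i hi hsi, hshift l hl hsl]
          exact (Finset.disjoint_image (add_left_injective 1)).mpr (hdisj i l hil)
        · rw [hkeep l hl hsl]
          have hdisjC : Disjoint (arcZ (t' l) (x' l)) C := (hsplit l hl).resolve_left hsl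
          rw [Finset.disjoint_left]
          intro z hz hz'
          obtain ⟨u, h1, h2, rfl⟩ := hmemShift i hi hsi z hz
          by_cases huf : u ≤ f - 1
          · exact (Finset.disjoint_left.mp hdisjC hz') (hmemC u (by omega) huf)
          · have : u = f := by omega
            subst this
            exact hfU (Finset.mem_biUnion.mpr ⟨l, Finset.mem_univ l, hz'⟩)
      · by_cases hsl : arcZ (t' l) (x' l) ⊆ C
        · rw [hkeep i hi hsi]
          have hdisjC : Disjoint (arcZ (t' i) (x' i)) C := (hsplit i hi).resolve_left hsi
          rw [Finset.disjoint_left]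
          intro z hz hz'
          obtain ⟨u, h1, h2, rfl⟩ := hmemShift l hl hsl z hz'
          by_cases huf : u ≤ f - 1
          · exact (Finset.disjoint_left.mp hdisjC hz) (hmemC u (by omega) huf)
          · have : u = f := by omega
            subst this
            exact hfU (Finset.mem_biUnion.mpr ⟨i, Finset.mem_univ i, hz⟩)
        · rw [hkeep i hi hsi, hkeep l hl hsl]
          exact hdisj i l hil
    have hdisjN : ∀ i l : Fin k, i ≠ l → Disjoint (arcZ (t i) (x i)) (arcZ (t l) (x l)) := by
      intro i l hil
      by_cases h1 : i = j
      · subst h1; exact key l (Ne.symm hil)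
      · by_cases h2 : l = j
        · subst h2; exact (key i h1).symm
        · exact key2 i l h1 h2 hil
    -- coverage
    have hUsub : U ⊆ Finset.univ.biUnion fun l => arcZ (t l) (x l) := by
      intro z hz
      rw [hUdef, Finset.mem_biUnion] at hz
      obtain ⟨i, _, hzi⟩ := hz
      rw [Finset.mem_biUnion]
      by_cases h1 : i = j
      · subst h1
        exact ⟨i, Finset.mem_univ i, by rw [hNj]; exact Finset.mem_insert_of_mem hzi⟩
      by_cases h2 : arcZ (t' i) (x' i) ⊆ C
      · have hzC := h2 hzi
        obtain ⟨u, hu1, hu2, rfl⟩ := hmemC' _ hzC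
        rcases Nat.lt_or_ge u 2 with hu | hu
        · have hu1' : u = 1 := by omega
          subst hu1'
          refine ⟨j, Finset.mem_univ j, ?_⟩
          rw [hNj, Nat.cast_one]
          exact Finset.mem_insert_self _ _
        · -- predecessor cell e + (u-1) is in C hence in U, in some old arc l
          have hyC : e + ((u - 1 : ℕ) : ZMod n) ∈ C := hmemC (u-1) (by omega) (by omega)
          have hyU : e + ((u - 1 : ℕ) : ZMod n) ∈ U := hCU hyC
          rw [hUdef, Finset.mem_biUnion] at hyU
          obtain ⟨l, _, hyl⟩ := hyU
          have hlj : l ≠ j := by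
            rintro rfl
            exact (Finset.disjoint_left.mp hCAj hyC) hyl
          have hlsub : arcZ (t' l) (x' l) ⊆ C := by
            rcases hsplit l hlj with h | h
            · exact h
            · exact absurd hyC (Finset.disjoint_left.mp h hyl)
          refine ⟨l, Finset.mem_univ l, ?_⟩
          rw [hshift l hlj hlsub, Finset.mem_image]
          refine ⟨_, hyl, ?_⟩
          rw [show u = (u - 1) + 1 by omega]
          push_cast; ring
      · exact ⟨i, Finset.mem_univ i, by rw [hkeep i h1 h2]; exact hzi⟩
    exact ⟨t, fun i => hUsub (hcov i), hdisjN⟩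

/-- **Theorem (general upper bound).**  Let `x = (x₁, …, x_k)` be a vector of positive
integers with `x₁ + ⋯ + x_k = r` and `n ≥ r`.  The family
`F = {X ∈ [n]^(r) : {1, …, k} ⊆ X}` has size `C(n−k, r−k)` and admits no `x`-acceptable
Hamilton cycle in `K_n`.  Consequently `m(x,n) ≤ C(n−k, r−k)`.
(Here the ground set `[n]` is modelled as `Fin n`, with `{1, …, k}` corresponding to the
elements of value `< k`.) -/
theorem general_upper_bound {k r n : ℕ} (hk : 0 < k) (x : Fin k → ℕ)
    (hx : ∀ i, 0 < x i) (hr : ∑ i : Fin k, x i = r) (hn : r ≤ n)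
    (F : Set (Finset (Fin n)))
    (hF : ∀ A : Finset (Fin n),
      A ∈ F ↔ A.card = r ∧ ∀ v : Fin n, (v : ℕ) < k → v ∈ A) :
    F.ncard = Nat.choose (n - k) (r - k) ∧
    (∀ c : ZMod n ≃ Fin n, ¬ IsXAcceptable x F c) ∧
    mxn x n ≤ Nat.choose (n - k) (r - k) := by
  classical
  have hkr : k ≤ r := by
    have h1 : ∑ _i : Fin k, 1 ≤ ∑ i : Fin k, x i := Finset.sum_le_sum (fun i _ => hx i)
    simp only [Finset.sum_const, Finset.card_univ, Fintype.card_fin, smul_eq_mul, mul_one] at h1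
    omega
  have hkn : k ≤ n := le_trans hkr hn
  have hn1 : 0 < n := by omega
  haveI : NeZero n := ⟨by omega⟩
  have hxile : ∀ i, x i ≤ n := by
    intro i
    have := Finset.single_le_sum (f := x) (fun l _ => Nat.zero_le _) (Finset.mem_univ i)
    omega
  set K : Finset (Fin n) :=
    (Finset.range k).attachFin (fun m hm => lt_of_lt_of_le (Finset.mem_range.mp hm) hkn) with hK
  have hKmem : ∀ v : Fin n, v ∈ K ↔ (v : ℕ) < k := by
    intro v; rw [hK, Finset.mem_attachFin]; exact Finset.mem_range
  have hKcard : K.card = k := by rw [hK, Finset.card_attachFin, Finset.card_range]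
  set G := ((Kᶜ).powersetCard (r - k)).image (fun B => B ∪ K) with hG
  have hBK : ∀ B : Finset (Fin n), B ⊆ Kᶜ → (B ∪ K) \ K = B := by
    intro B hB
    rw [Finset.union_sdiff_right]
    apply Finset.sdiff_eq_self_iff_disjoint.mpr
    exact Finset.disjoint_left.mpr (fun v hv => Finset.mem_compl.mp (hB hv))
  have hFG : F = ↑G := by
    ext A
    rw [hF A, Finset.mem_coe, hG, Finset.mem_image]
    constructor
    · rintro ⟨hcard, hsub⟩
      have hKA : K ⊆ A := fun v hv => hsub v ((hKmem v).mp hv)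
      refine ⟨A \ K, ?_, Finset.sdiff_union_of_subset hKA⟩
      rw [Finset.mem_powersetCard]
      constructor
      · intro v hv
        rw [Finset.mem_compl]
        exact (Finset.mem_sdiff.mp hv).2
      · rw [Finset.card_sdiff_of_subset hKA, hcard, hKcard]
    · intro hA
      obtain ⟨B, hB, rfl⟩ := hA
      rw [Finset.mem_powersetCard] at hB
      obtain ⟨hBsub, hBcard⟩ := hB
      have hdisjBK : Disjoint B K :=
        Finset.disjoint_left.mpr (fun v hv => Finset.mem_compl.mp (hBsub hv))
      constructor
      · rw [Finset.card_union_of_disjoint hdisjBK, hBcard, hKcard]; omega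
      · intro v hv
        exact Finset.mem_union_right _ ((hKmem v).mpr hv)
  have hGcard : G.card = (n - k).choose (r - k) := by
    rw [hG, Finset.card_image_of_injOn, Finset.card_powersetCard, Finset.card_compl, hKcard,
      Fintype.card_fin]
    intro B1 h1 B2 h2 heq
    rw [Finset.mem_coe, Finset.mem_powersetCard] at h1 h2
    have e1 := hBK B1 h1.1
    have e2 := hBK B2 h2.1
    have heq' : B1 ∪ K = B2 ∪ K := heq
    rw [← e1, ← e2, heq']
  have part1 : F.ncard = (n - k).choose (r - k) := by
    rw [hFG, Set.ncard_coe_finset, hGcard]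
  have part2 : ∀ c : ZMod n ≃ Fin n, ¬ IsXAcceptable x F c := by
    intro c
    rw [IsXAcceptable, not_not]
    set p : Fin k → ZMod n := fun i => c.symm ⟨(i : ℕ), lt_of_lt_of_le i.isLt hkn⟩ with hp
    have hpinj : Function.Injective p := by
      intro i1 i2 h
      have h2 := c.symm.injective h
      have h3 : (i1 : ℕ) = (i2 : ℕ) := by simpa using h2
      exact Fin.ext h3
    obtain ⟨t, hcov, hdisj⟩ := packing r x hr hx hn p hpinj
    refine ⟨t, ?_⟩
    rw [hF]
    have hcyc : ∀ (tt : ZMod n) (m : ℕ), cycInterval c tt m = (arcZ tt m).image (⇑c) := by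
      intro tt m
      rw [cycInterval, arcZ, Finset.image_image]
      rfl
    have himg : (Finset.univ.biUnion fun i => cycInterval c (t i) (x i))
        = (Finset.univ.biUnion fun i => arcZ (t i) (x i)).image (⇑c) := by
      rw [Finset.biUnion_image]
      exact Finset.biUnion_congr rfl (fun i _ => hcyc (t i) (x i))
    constructor
    · rw [himg, Finset.card_image_of_injective _ c.injective,
        Finset.card_biUnion (fun i _ l _ h => hdisj i l h), ← hr]
      exact Finset.sum_congr rfl (fun i _ => arcZ_card (hxile i))
    · intro v hv
      rw [himg, Finset.mem_image]
      refine ⟨p ⟨(v : ℕ), hv⟩, hcov _, ?_⟩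
      rw [hp]
      simp only [Equiv.apply_symm_apply]
  refine ⟨part1, part2, ?_⟩
  apply Nat.sInf_le
  exact ⟨F, fun A hA => by rw [hr]; exact ((hF A).mp hA).1, by rw [part1], part2⟩
end

section
/- Let x₁,…,x_k be positive integers with x₁+⋯+x_k = r ≤ n. Then in any permutation c₁,c₂,…,c_n of [n] there exist k pairwise disjoint intervals of consecutive positions, of lengths x₁,…,x_k respectively, such that the union of the sets of entries appearing in these intervals contains {1,2,…,k}. -/
/-!
Place the intervals from left to right. Let `p` be the leftmost point still to be covered
and `r` the total length of the intervals not yet placed. If `p + r ≤ n`, start the next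
interval at `p`: it covers `p`, so at most as many points as intervals remain to its right.
Otherwise every remaining point lies in `[n - r, n)`, which the remaining intervals tile
when laid end to end.
-/

open Finset

section IntervalPacking

variable {k : ℕ}

/-- The intervals `[t i, t i + x i)` lie in `[a, b)`, in increasing order of `i`. -/
def IsOrderedPacking (x t : Fin k → ℕ) (a b : ℕ) : Prop :=
  (∀ i, a ≤ t i) ∧ (∀ i, t i + x i ≤ b) ∧ ∀ i j, i < j → t i + x i ≤ t j

def CoversPoint (x t : Fin k → ℕ) (p : ℕ) : Prop :=
  ∃ i, t i ≤ p ∧ p < t i + x i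

theorem IsOrderedPacking.mono {x t : Fin k → ℕ} {a a' b b' : ℕ}
    (h : IsOrderedPacking x t a b) (ha : a' ≤ a) (hb : b ≤ b') :
    IsOrderedPacking x t a' b' :=
  ⟨fun i => ha.trans (h.1 i), fun i => (h.2.1 i).trans hb, h.2.2⟩

theorem IsOrderedPacking.cons {x t : Fin k → ℕ} {x₀ s a b : ℕ}
    (h : IsOrderedPacking x t (s + x₀) b) (hs : a ≤ s) (hfit : s + x₀ ≤ b) :
    IsOrderedPacking (Fin.cons x₀ x : Fin (k + 1) → ℕ) (Fin.cons s t) a b := by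
  refine ⟨fun i => ?_, Fin.cases hfit h.2.1, fun i j hij => ?_⟩
  · induction i using Fin.cases with
    | zero => exact hs
    | succ i => simpa using hs.trans ((Nat.le_add_right s x₀).trans (h.1 i))
  ·
    induction i using Fin.cases with
    | zero =>
      induction j using Fin.cases with
      | zero => exact absurd hij (lt_irrefl 0)
      | succ j => simpa using h.1 j
    | succ i =>
      induction j using Fin.cases with
      | zero => exact absurd hij (Fin.succ_pos i).not_gt
      | succ j => simpa using h.2.2 i j (Fin.succ_lt_succ_iff.mp hij)

theorem coversPoint_cons_iff {x t : Fin k → ℕ} {x₀ s p : ℕ} :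
    CoversPoint (Fin.cons x₀ x : Fin (k + 1) → ℕ) (Fin.cons s t) p ↔
      (s ≤ p ∧ p < s + x₀) ∨ CoversPoint x t p := by
  simp [CoversPoint, Fin.exists_fin_succ]

theorem exists_orderedPacking_covering_Ico (x : Fin k → ℕ) (a : ℕ) :
    ∃ t, IsOrderedPacking x t a (a + ∑ i, x i) ∧
      ∀ p, a ≤ p → p < a + ∑ i, x i → CoversPoint x t p := by
  induction k generalizing a with
  | zero =>
    refine ⟨finZeroElim, ⟨finZeroElim, finZeroElim, finZeroElim⟩, fun p hap hp => ?_⟩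
    simp only [univ_eq_empty, sum_empty] at hp
    omega
  | succ k ih =>
    obtain ⟨x₀, x, rfl⟩ : ∃ x₀ x', x = Fin.cons x₀ x' := ⟨_, _, (Fin.cons_self_tail x).symm⟩
    obtain ⟨t, ht, hcov⟩ := ih x (a + x₀)
    rw [Fin.sum_cons, ← add_assoc]
    refine ⟨Fin.cons a t, ht.cons le_rfl (Nat.le_add_right _ _), fun p hap hp => ?_⟩
    rw [coversPoint_cons_iff]
    by_cases hp₀ : p < a + x₀
    · exact Or.inl ⟨hap, hp₀⟩
    · exact Or.inr (hcov p (not_lt.mp hp₀) hp)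

theorem exists_orderedPacking_covering {x : Fin k → ℕ} (hx : ∀ i, 0 < x i) {a b : ℕ}
    (hsum : a + ∑ i, x i ≤ b) (P : Finset ℕ) (hP : ∀ p ∈ P, a ≤ p ∧ p < b)
    (hcard : #P ≤ k) :
    ∃ t, IsOrderedPacking x t a b ∧ ∀ p ∈ P, CoversPoint x t p := by
  induction k generalizing a P with
  | zero =>
    obtain rfl : P = ∅ := card_eq_zero.mp (Nat.le_zero.mp hcard)
    exact ⟨finZeroElim, ⟨finZeroElim, finZeroElim, finZeroElim⟩, by simp⟩
  | succ k ih =>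
    obtain ⟨x₀, x, rfl⟩ : ∃ x₀ x', x = Fin.cons x₀ x' := ⟨_, _, (Fin.cons_self_tail x).symm⟩
    have hx₀ : 0 < x₀ := hx 0
    rw [Fin.sum_cons] at hsum
    by_cases hlate : ∀ p ∈ P, b < p + (x₀ + ∑ i, x i)
    · obtain ⟨t, ht, hcov⟩ :=
        exists_orderedPacking_covering_Ico (Fin.cons x₀ x) (b - (x₀ + ∑ i, x i))
      rw [Fin.sum_cons] at ht hcov
      refine ⟨t, ht.mono (by omega) (by omega), fun p hp => hcov p ?_ ?_⟩
      · have := hlate p hp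
        omega
      · have := hP p hp
        omega
    · push Not at hlate
      have hne : P.Nonempty := let ⟨q, hq, _⟩ := hlate; ⟨q, hq⟩
      set p := P.min' hne
      have hpP : p ∈ P := P.min'_mem hne
      have hpfit : p + (x₀ + ∑ i, x i) ≤ b :=
        let ⟨q, hq, hqb⟩ := hlate
        (Nat.add_le_add_right (P.min'_le q hq) _).trans hqb
      set P' := P.filter (p + x₀ ≤ ·)
      have hcard' : #P' ≤ k := by
        have : #P' < #P := card_lt_card (filter_ssubset.mpr ⟨p, hpP, by omega⟩)
        omega
      have hP' : ∀ q ∈ P', p + x₀ ≤ q ∧ q < b := fun q hq =>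
        ⟨(mem_filter.mp hq).2, (hP q (mem_filter.mp hq).1).2⟩
      obtain ⟨t, ht, hcov⟩ :=
        ih (x := x) (fun i => by simpa using hx i.succ) (by omega) P' hP' hcard'
      refine ⟨Fin.cons p t, ht.cons (hP p hpP).1 (by omega), fun q hq => ?_⟩
      rw [coversPoint_cons_iff]
      by_cases hq₀ : q < p + x₀
      · exact Or.inl ⟨P.min'_le q hq, hq₀⟩
      · exact Or.inr (hcov q (mem_filter.mpr ⟨hq, not_lt.mp hq₀⟩))

end IntervalPacking

/-- **Lemma.**  Let `x₁, …, x_k` be positive integers with `x₁ + ⋯ + x_k = r ≤ n`.  In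
any permutation `c` of `[n]` (modelled as a bijection from positions `Fin n` to values
`Fin n`) there exist `k` pairwise disjoint intervals of consecutive positions, of
lengths `x₁, …, x_k` respectively, such that the union of the sets of entries appearing
in these intervals contains the first `k` values (the elements of `Fin n` of value
`< k`, corresponding to `{1, …, k}`). -/
theorem disjoint_intervals_covering_initial_segment
    {k r n : ℕ} (x : Fin k → ℕ) (hx : ∀ i, 0 < x i)
    (hr : ∑ i : Fin k, x i = r) (hn : r ≤ n) (c : Fin n ≃ Fin n) :
    ∃ t : Fin k → ℕ,
      (∀ i : Fin k, t i + x i ≤ n) ∧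
      (∀ i j : Fin k, i ≠ j → t i + x i ≤ t j ∨ t j + x j ≤ t i) ∧
      ∀ v : Fin n, (v : ℕ) < k → ∃ (i : Fin k) (p : Fin n),
        t i ≤ (p : ℕ) ∧ (p : ℕ) < t i + x i ∧ c p = v := by
  set small : Finset (Fin n) := univ.filter fun v => (v : ℕ) < k
  set P : Finset ℕ := small.image fun v => (c.symm v : ℕ)
  have hcard : #P ≤ k := card_image_le.trans <|
    card_le_card_of_injOn (s := small) (t := range k) Fin.val
      (fun v hv => mem_range.mpr (mem_filter.mp hv).2) Fin.val_injective.injOn |>.trans_eq (card_range k)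
  have hP : ∀ p ∈ P, 0 ≤ p ∧ p < n := by
    rintro _ hp
    obtain ⟨v, -, rfl⟩ := mem_image.mp hp
    exact ⟨Nat.zero_le _, (c.symm v).isLt⟩
  obtain ⟨t, ⟨-, hfit, hord⟩, hcov⟩ :=
    exists_orderedPacking_covering hx (by omega) P hP hcard
  refine ⟨t, hfit, fun i j hij => (lt_or_gt_of_ne hij).imp (hord i j) (hord j i), fun v hv => ?_⟩
  obtain ⟨i, hi⟩ := hcov _ (mem_image_of_mem _ (mem_filter.mpr ⟨mem_univ v, hv⟩))
  exact ⟨i, c.symm v, hi.1, hi.2, c.apply_symm_apply v⟩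
end

section
/- Let n ≥ 5 and let H be a graph with vertex set {3,4,…,n} which contains no 4-cycle, contains no triangle, and contains no Hamilton path. Then the family F = {X ∈ [n]^(4) : 1 ∈ X, 2 ∈ X, and X∖{1,2} is not an edge of H} admits no (2,2)-acceptable Hamilton cycle in K_n; that is, every Hamilton cycle of K_n contains two disjoint edges whose union is an element of F. -/
/-!
Write `α = 1`, `β = 2`. If `α` and `β` are consecutive on the Hamilton cycle, the rest of the
cycle is a Hamilton path of `K_n` on `{3, …, n}`; since `H` has no Hamilton path, two consecutive
vertices `u, w` of it are non-adjacent in `H`, and the cycle edges `αβ` and `uw` have union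
`{α, β, u, w} ∈ F`.
Otherwise, let `P, Q` be the cycle neighbours of `α` and `R, S` those of `β`. A cycle edge at `α`
and one at `β` have union `{α, β, x, y}` with `x ∈ {P, Q}`, `y ∈ {R, S}`. If every such `x ≠ y`
were an edge of `H`, then `P R Q S` would be a 4-cycle of `H`, or, when `β` is at distance two
from `α` (so `P = S` or `Q = R`; as `n ≥ 5`, not both), `H` would contain a triangle.
-/

namespace SimpleGraph

variable {W : Type*} {G : SimpleGraph W}

def FourCycleFree (G : SimpleGraph W) : Prop :=
  ∀ a b c d : W, a ≠ c → b ≠ d → G.Adj a b → G.Adj b c → G.Adj c d → ¬ G.Adj d a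

theorem exists_isHamiltonian_of_bijective [DecidableEq W] {m : ℕ} (hm : 0 < m) {g : Fin m → W}
    (hg : g.Bijective) (hadj : ∀ k (hk : k + 1 < m), G.Adj (g ⟨k, by omega⟩) (g ⟨k + 1, hk⟩)) :
    ∃ (u v : W) (p : G.Walk u v), p.IsHamiltonian := by
  have hne : List.ofFn g ≠ [] := by simpa using hm.ne'
  have hchain : (List.ofFn g).IsChain G.Adj :=
    List.isChain_iff_getElem.2 fun k hk => by simpa using hadj k (by simpa using hk)
  refine ⟨_, _, Walk.ofSupport _ hne hchain, fun v => ?_⟩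
  rw [Walk.support_ofSupport]
  exact List.count_eq_one_of_mem (List.nodup_ofFn.2 hg.1) (List.mem_ofFn.2 (hg.2 v))

theorem exists_ne_not_adj_of_cliqueFree_three_of_fourCycleFree (h3 : G.CliqueFree 3)
    (h4 : G.FourCycleFree) {P Q R S : W} (hPQ : P ≠ Q) (hRS : R ≠ S) (hPR : P ≠ R)
    (hQS : Q ≠ S) (hPSQR : P ≠ S ∨ Q ≠ R) :
    ∃ x y, (x = P ∨ x = Q) ∧ (y = R ∨ y = S) ∧ x ≠ y ∧ ¬ G.Adj x y := by
  classical
  by_contra! hadj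
  by_cases hPS : P = S
  · subst hPS
    have hQR : Q ≠ R := hPSQR.resolve_left (not_not.2 rfl)
    exact h3 {Q, P, R} (is3Clique_triple_iff.2
      ⟨hadj Q P (.inr rfl) (.inr rfl) hPQ.symm, hadj Q R (.inr rfl) (.inl rfl) hQR,
        hadj P R (.inl rfl) (.inl rfl) hPR⟩)
  by_cases hQR : Q = R
  · subst hQR
    exact h3 {P, Q, S} (is3Clique_triple_iff.2
      ⟨hadj P Q (.inl rfl) (.inl rfl) hPQ, hadj P S (.inl rfl) (.inr rfl) hPS,
        hadj Q S (.inr rfl) (.inr rfl) hQS⟩)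
  exact h4 P R Q S hPQ hRS (hadj P R (.inl rfl) (.inl rfl) hPR)
    (hadj Q R (.inr rfl) (.inl rfl) hQR).symm (hadj Q S (.inr rfl) (.inr rfl) hQS)
    (hadj P S (.inl rfl) (.inr rfl) hPS).symm

end SimpleGraph

theorem ZMod.natCast_inj_of_lt {n i j : ℕ} (hi : i < n) (hj : j < n)
    (h : (i : ZMod n) = j) : i = j := by
  rwa [ZMod.natCast_eq_natCast_iff', Nat.mod_eq_of_lt hi, Nat.mod_eq_of_lt hj] at h

section HamiltonCycle

variable {V : Type*} [DecidableEq V] {n : ℕ}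

def cycleEdge (c : ZMod n ≃ V) (s : ZMod n) : Finset V := {c s, c (s + 1)}

theorem cycleEdge_addRight_trans (c : ZMod n ≃ V) (a s : ZMod n) :
    cycleEdge ((Equiv.addRight a).trans c) s = cycleEdge c (s + a) := by
  simp [cycleEdge, add_right_comm]

variable {p : V → Prop}

def HasNonadjEdgePair (c : ZMod n ≃ V) (H : SimpleGraph (Subtype p)) (α β : V) : Prop :=
  ∃ u w : Subtype p, u ≠ w ∧ ¬ H.Adj u w ∧
    ∃ s t : ZMod n, cycleEdge c s ∪ cycleEdge c t = {α, β, u.1, w.1}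

variable {c : ZMod n ≃ V} {H : SimpleGraph (Subtype p)} {α β : V}

theorem HasNonadjEdgePair.symm (h : HasNonadjEdgePair c H α β) : HasNonadjEdgePair c H β α := by
  obtain ⟨u, w, huw, hnadj, s, t, hst⟩ := h
  exact ⟨u, w, huw, hnadj, s, t, hst.trans (Finset.insert_comm _ _ _)⟩

theorem HasNonadjEdgePair.of_addRight_trans (a : ZMod n)
    (h : HasNonadjEdgePair ((Equiv.addRight a).trans c) H α β) : HasNonadjEdgePair c H α β := by
  obtain ⟨u, w, huw, hnadj, s, t, hst⟩ := h
  refine ⟨u, w, huw, hnadj, s + a, t + a, ?_⟩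
  rwa [cycleEdge_addRight_trans, cycleEdge_addRight_trans] at hst

theorem hasNonadjEdgePair_of_consecutive (hp : ∀ v, p v ↔ v ≠ α ∧ v ≠ β) (hn : 3 ≤ n)
    (hα : c 0 = α) (hβ : c 1 = β) (hH : ¬ ∃ (u v : Subtype p) (q : H.Walk u v), q.IsHamiltonian) :
    HasNonadjEdgePair c H α β := by
  have : NeZero n := ⟨by omega⟩
  have hoff : ∀ k : ℕ, k < n - 2 → p (c ((k + 2 : ℕ) : ZMod n)) := fun k hk =>
    (hp _).2 ⟨hα ▸ c.injective.ne fun h => by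
        have := ZMod.natCast_inj_of_lt (j := 0) (by omega) (by omega) (h.trans Nat.cast_zero.symm)
        omega,
      hβ ▸ c.injective.ne fun h => by
        have := ZMod.natCast_inj_of_lt (j := 1) (by omega) (by omega) (h.trans Nat.cast_one.symm)
        omega⟩
  let g : Fin (n - 2) → Subtype p := fun k => ⟨c ((k + 2 : ℕ) : ZMod n), hoff k k.2⟩
  have hg : g.Bijective := by
    refine ⟨fun i j hij => Fin.ext ?_, fun w => ?_⟩
    · have := ZMod.natCast_inj_of_lt (by omega) (by omega) (c.injective (congrArg Subtype.val hij))
      omega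
    · set s := c.symm w.1
      have hs := (hp w.1).1 w.2
      have hs0 : s.val ≠ 0 := fun h => hs.1 (by
        rw [← hα, ← (ZMod.val_eq_zero s).1 h]; simp [s])
      have hs1 : s.val ≠ 1 := fun h => hs.2 (by
        rw [← hβ, ← show s = 1 by rw [← ZMod.natCast_zmod_val s, h, Nat.cast_one]]; simp [s])
      refine ⟨⟨s.val - 2, by have := s.val_lt; omega⟩, Subtype.ext ?_⟩
      simp only [g, Nat.sub_add_cancel (show 2 ≤ s.val by omega), ZMod.natCast_zmod_val, s,
        Equiv.apply_symm_apply]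
  obtain ⟨k, hk, hnadj⟩ : ∃ k, ∃ hk : k + 1 < n - 2, ¬ H.Adj (g ⟨k, by omega⟩) (g ⟨k + 1, hk⟩) := by
    by_contra! h
    exact hH (SimpleGraph.exists_isHamiltonian_of_bijective (by omega) hg h)
  refine ⟨_, _, hg.1.ne (by simp), hnadj, 0, ((k + 2 : ℕ) : ZMod n), ?_⟩
  have hsucc : ((k + 2 : ℕ) : ZMod n) + 1 = ((k + 1 + 2 : ℕ) : ZMod n) := by push_cast; ring
  simp only [cycleEdge, zero_add, hα, hβ, hsucc, g, Finset.insert_union, Finset.singleton_union]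

theorem hasNonadjEdgePair_of_not_consecutive (hp : ∀ v, p v ↔ v ≠ α ∧ v ≠ β) (hn : 5 ≤ n)
    (h3 : H.CliqueFree 3) (h4 : H.FourCycleFree) {b : ZMod n} (hα : c 0 = α) (hβ : c b = β)
    (hb0 : b ≠ 0) (hb1 : b ≠ 1) (hb1' : b ≠ -1) : HasNonadjEdgePair c H α β := by
  have two : (2 : ZMod n) ≠ 0 := by
    simpa using (ZMod.natCast_inj_of_lt (i := 2) (j := 0) (by omega) (by omega)).mt (by omega)
  have four : (4 : ZMod n) ≠ 0 := by
    simpa using (ZMod.natCast_inj_of_lt (i := 4) (j := 0) (by omega) (by omega)).mt (by omega)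
  have hoff : ∀ s, s ≠ 0 → s ≠ b → p (c s) := fun s hs0 hsb =>
    (hp _).2 ⟨hα ▸ c.injective.ne hs0, hβ ▸ c.injective.ne hsb⟩
  have hne {s t : ZMod n} (hs : p (c s)) (ht : p (c t)) (hst : s ≠ t) :
      (⟨c s, hs⟩ : Subtype p) ≠ ⟨c t, ht⟩ :=
    Subtype.coe_ne_coe.1 (c.injective.ne hst)
  let P : Subtype p := ⟨c 1, hoff 1 (fun h => two (by linear_combination 2 * h)) hb1.symm⟩
  let Q : Subtype p := ⟨c (-1), hoff (-1) (fun h => two (by linear_combination -2 * h)) hb1'.symm⟩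
  let R : Subtype p :=
    ⟨c (b + 1), hoff (b + 1) (fun h => hb1' (by linear_combination h))
      (fun h => two (by linear_combination 2 * h))⟩
  let S : Subtype p :=
    ⟨c (b - 1), hoff (b - 1) (fun h => hb1 (by linear_combination h))
      (fun h => two (by linear_combination -2 * h))⟩
  obtain ⟨x, y, hx, hy, hxy, hnadj⟩ :=
    SimpleGraph.exists_ne_not_adj_of_cliqueFree_three_of_fourCycleFree h3 h4 (P := P) (Q := Q)
      (R := R) (S := S)
      (hne _ _ fun h => two (by linear_combination h))
      (hne _ _ fun h => two (by linear_combination h))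
      (hne _ _ fun h => hb0 (by linear_combination -h))
      (hne _ _ fun h => hb0 (by linear_combination -h))
      (by
        by_contra! ⟨hPS, hQR⟩
        have e1 : (1 : ZMod n) = b - 1 := c.injective (congrArg Subtype.val hPS)
        have e2 : (-1 : ZMod n) = b + 1 := c.injective (congrArg Subtype.val hQR)
        exact four (by linear_combination e1 - e2))
  have hxα : ∃ s, cycleEdge c s = {α, x.1} := by
    rcases hx with rfl | rfl
    · exact ⟨0, by simp [cycleEdge, hα, P]⟩
    · exact ⟨-1, by simp [cycleEdge, hα, Q, Finset.pair_comm]⟩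
  have hyβ : ∃ t, cycleEdge c t = {β, y.1} := by
    rcases hy with rfl | rfl
    · exact ⟨b, by simp [cycleEdge, hβ, R]⟩
    · exact ⟨b - 1, by simp [cycleEdge, hβ, S, Finset.pair_comm]⟩
  obtain ⟨s, hs⟩ := hxα
  obtain ⟨t, ht⟩ := hyβ
  refine ⟨x, y, hxy, hnadj, s, t, ?_⟩
  rw [hs, ht]
  ext
  simp only [Finset.mem_union, Finset.mem_insert, Finset.mem_singleton]
  tauto

variable (c) in
theorem hasNonadjEdgePair (hn : 5 ≤ n) (hαβ : α ≠ β)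
    (hp : ∀ v, p v ↔ v ≠ α ∧ v ≠ β) (h3 : H.CliqueFree 3) (h4 : H.FourCycleFree)
    (hH : ¬ ∃ (u v : Subtype p) (q : H.Walk u v), q.IsHamiltonian) :
    HasNonadjEdgePair c H α β := by
  have : NeZero n := ⟨by omega⟩
  set c' := (Equiv.addRight (c.symm α)).trans c
  refine HasNonadjEdgePair.of_addRight_trans (c.symm α) (c := c) ?_
  have hα : c' 0 = α := by simp [c']
  have hβ : c' (c'.symm β) = β := c'.apply_symm_apply β
  set b := c'.symm β
  have hb0 : b ≠ 0 := fun h => hαβ (by rw [← hα, ← h, hβ])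
  by_cases hb1 : b = 1
  · exact hasNonadjEdgePair_of_consecutive hp (by omega) hα (hb1 ▸ hβ) hH
  by_cases hb1' : b = -1
  · refine (HasNonadjEdgePair.of_addRight_trans (-1) ?_).symm
    exact hasNonadjEdgePair_of_consecutive (fun v => (hp v).trans and_comm) (by omega)
      (show c' (0 + -1) = β by rw [zero_add, ← hb1', hβ])
      (show c' (1 + -1) = α by rw [add_neg_cancel, hα]) hH
  exact hasNonadjEdgePair_of_not_consecutive hp hn h3 h4 hα hβ hb0 hb1 hb1'

theorem insert_mem_family (hαβ : α ≠ β) (hp : ∀ v, p v → v ≠ α ∧ v ≠ β) {u w : Subtype p}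
    (huw : u ≠ w) (hnadj : ¬ H.Adj u w) :
    ({α, β, u.1, w.1} : Finset V) ∈ {X : Finset V | X.card = 4 ∧ α ∈ X ∧ β ∈ X ∧
      ¬ ∃ a b : Subtype p, H.Adj a b ∧ X = {α, β, a.1, b.1}} := by
  have hu := hp u u.2
  have hw := hp w w.2
  have huw' : u.1 ≠ w.1 := Subtype.coe_ne_coe.2 huw
  refine ⟨?_, by simp, by simp, ?_⟩
  · rw [Finset.card_insert_of_notMem (by simp [hαβ, hu.1.symm, hw.1.symm]),
      Finset.card_insert_of_notMem (by simp [hu.2.symm, hw.2.symm]),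
      Finset.card_pair huw']
  · rintro ⟨a, b, hab, hX⟩
    have hmem : ∀ x : Subtype p, x.1 ∈ ({α, β, u.1, w.1} : Finset V) → x = u ∨ x = w := by
      intro x hx
      have := hp x x.2
      simp only [Finset.mem_insert, Finset.mem_singleton] at hx
      rw [← Subtype.coe_inj, ← Subtype.coe_inj]
      tauto
    rcases hmem a (by rw [hX]; simp) with rfl | rfl <;>
      rcases hmem b (by rw [hX]; simp) with rfl | rfl
    exacts [hab.ne rfl, hnadj hab, hnadj hab.symm, hab.ne rfl]

end HamiltonCycle

theorem cycInterval_two {n : ℕ} (c : ZMod n ≃ Fin n) (t : ZMod n) :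
    cycInterval c t 2 = cycleEdge c (t + 1) := by
  simp [cycInterval, cycleEdge, Finset.range_add_one, add_assoc, one_add_one_eq_two,
    Finset.pair_comm]

theorem not_isXAcceptable_two_two {n : ℕ} {F : Set (Finset (Fin n))} {c : ZMod n ≃ Fin n}
    {s t : ZMod n} (h : cycleEdge c s ∪ cycleEdge c t ∈ F) : ¬ IsXAcceptable ![2, 2] F c := by
  refine not_not.2 ⟨![s - 1, t - 1], ?_⟩
  simpa [Fin.univ_succ, cycInterval_two] using h

/-- **Construction behind the upper bound for `x = (2,2)`.**  Let `n ≥ 5` and let `H` be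
a graph on the vertex set `{3, 4, …, n}` (modelled as the elements of `Fin n` of value
`≥ 2`, with vertex `i ∈ [n]` corresponding to the element of value `i − 1`, so that
`1, 2 ∈ [n]` correspond to the values `0, 1`) which contains no 4-cycle, contains no
triangle and contains no Hamilton path.  Then the family
`F = {X ∈ [n]^(4) : 1 ∈ X, 2 ∈ X, X ∖ {1,2} ∉ E(H)}` admits no `(2,2)`-acceptable
Hamilton cycle in `K_n`: every Hamilton cycle of `K_n` contains two disjoint edges
whose union is a member of `F`. -/
theorem blocking_family_from_C4_free_graph (n : ℕ) (hn : 5 ≤ n)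
    (H : SimpleGraph {v : Fin n // 2 ≤ (v : ℕ)})
    (hC4free : ∀ a b c d : {v : Fin n // 2 ≤ (v : ℕ)}, a ≠ c → b ≠ d →
      H.Adj a b → H.Adj b c → H.Adj c d → ¬ H.Adj d a)
    (hTrianglefree : H.CliqueFree 3)
    (hNoHamPath : ¬ ∃ (u v : {v : Fin n // 2 ≤ (v : ℕ)}) (p : H.Walk u v),
      p.IsHamiltonian) :
    ∀ c : ZMod n ≃ Fin n,
      ¬ IsXAcceptable ![2, 2]
        {X : Finset (Fin n) | X.card = 4 ∧
          (⟨0, by omega⟩ : Fin n) ∈ X ∧ (⟨1, by omega⟩ : Fin n) ∈ X ∧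
          ¬ ∃ a b : {v : Fin n // 2 ≤ (v : ℕ)}, H.Adj a b ∧
            X = {⟨0, by omega⟩, ⟨1, by omega⟩, a.1, b.1}} c := by
  intro c
  have hp : ∀ v : Fin n, 2 ≤ (v : ℕ) ↔ v ≠ ⟨0, by omega⟩ ∧ v ≠ ⟨1, by omega⟩ := by
    intro v
    simp only [ne_eq, Fin.ext_iff]
    omega
  have h01 : (⟨0, by omega⟩ : Fin n) ≠ ⟨1, by omega⟩ := by simp [Fin.ext_iff]
  obtain ⟨u, w, huw, hnadj, s, t, hst⟩ :=
    hasNonadjEdgePair c hn h01 hp hTrianglefree hC4free hNoHamPath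
  exact not_isXAcceptable_two_two (hst ▸ insert_mem_family h01 (fun v => (hp v).1) huw hnadj)
end
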